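/- arXiv:2410.06929 — 6 statements merged into one kernel-verified Lean document; each statement's English description precedes it below -/
import Mathlib

section
/- Let k be a field of characteristic not equal to 2, let d ≥ 1, and let ε ∈ {1, −1}. Let Ω_ε = [[0, J],[εJ, 0]], θ_ε(g) = Ω_ε⁻¹ g⁻ᵀ Ω_ε, x = [[0, J],[I_d, 0]], η = x·θ_ε(x)⁻¹, and define ψ(g) = η · θ_ε(g) · η⁻¹ for g ∈ GL(2d,k). Then for every upper-triangular unipotent 2d×2d matrix u (upper-triangular with all diagonal entries equal to 1), the matrix ψ(u) has block form [[L₁, M],[0, L₂]] where L₁ and L₂ are lower-triangular unipotent d×d matrices and M is an arbitrary d×d matrix; conversely, every 2d×2d matrix of the form [[L₁, M],[0, L₂]] with L₁, L₂ lower-triangular unipotent equals ψ(u) for some upper-triangular unipotent u. -/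
open Matrix

/-- The `d × d` antidiagonal identity matrix `J`. -/
def Jmat (k : Type) [Field k] (d : ℕ) : Matrix (Fin d) (Fin d) k :=
  Matrix.of fun i j => if (i : ℕ) + (j : ℕ) + 1 = d then 1 else 0

/-- The linear position (0-based) of an index of a `2d × 2d` matrix whose index
type is `Fin d ⊕ Fin d`. -/
def idxNat {d : ℕ} : Fin d ⊕ Fin d → ℕ :=
  Sum.elim (fun i => (i : ℕ)) (fun i => d + (i : ℕ))

lemma Jcond {d : ℕ} (i j : Fin d) : (i : ℕ) + (j : ℕ) + 1 = d ↔ j = Fin.rev i := by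
  rw [Fin.ext_iff, Fin.val_rev]
  omega

lemma Jmul {k : Type} [Field k] {d : ℕ} : Jmat k d * Jmat k d = 1 := by
  ext i j
  simp only [Matrix.mul_apply, Jmat, Matrix.of_apply]
  have h1 : ∀ x : Fin d, ((i : ℕ) + x + 1 = d) ↔ x = Fin.rev i := fun x => Jcond i x
  simp only [h1]
  rw [Finset.sum_eq_single (Fin.rev i)]
  · rw [if_pos rfl, one_mul, Matrix.one_apply]
    have h2 : ((Fin.rev i : ℕ) + (j : ℕ) + 1 = d) ↔ j = i := by rw [Jcond, Fin.rev_rev]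
    rw [if_congr h2 rfl rfl, if_congr (Iff.intro Eq.symm Eq.symm) rfl rfl]
  · intro b _ hb; simp [hb]
  · simp

lemma Jsymm {k : Type} [Field k] {d : ℕ} : (Jmat k d)ᵀ = Jmat k d := by
  ext i j
  simp only [Jmat, Matrix.transpose_apply, Matrix.of_apply]
  rw [Nat.add_comm (j : ℕ) (i : ℕ)]

lemma JJl {k : Type} [Field k] {d : ℕ} (A : Matrix (Fin d) (Fin d) k) :
    Jmat k d * (Jmat k d * A) = A := by
  rw [← mul_assoc, Jmul, one_mul]

lemma idxNat_eq {d : ℕ} (x : Fin d ⊕ Fin d) : idxNat x = (finSumFinEquiv x : ℕ) := by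
  cases x <;> simp [idxNat, Nat.add_comm]

lemma idxNat_inj {d : ℕ} : Function.Injective (idxNat (d := d)) := by
  intro a b h
  rw [idxNat_eq, idxNat_eq] at h
  exact finSumFinEquiv.injective (Fin.val_injective h)

lemma tri_aux {k : Type} [Field k] {d : ℕ} (v : Matrix (Fin d ⊕ Fin d) (Fin d ⊕ Fin d) k)
    (hdiag : ∀ i, v i i = 1) (hlow : ∀ i j, idxNat i < idxNat j → v i j = 0) :
    IsUnit v.det ∧ (∀ i, v⁻¹ i i = 1) ∧ (∀ i j, idxNat i < idxNat j → v⁻¹ i j = 0) := by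
  have hdet : v.det = 1 := by
    rw [← Matrix.det_submatrix_equiv_self finSumFinEquiv.symm v]
    rw [Matrix.det_of_lowerTriangular _ ?_]
    · rw [Finset.prod_congr rfl fun i _ => ?_, Finset.prod_const_one]
      exact hdiag _
    · intro p q hpq
      refine hlow _ _ ?_
      rw [idxNat_eq, idxNat_eq, Equiv.apply_symm_apply, Equiv.apply_symm_apply]
      exact hpq
  have hu : IsUnit v.det := hdet ▸ isUnit_one
  haveI : Invertible v := v.invertibleOfIsUnitDet hu
  have hbt : v.BlockTriangular (fun i => OrderDual.toDual (idxNat i)) := by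
    intro i j hij
    exact hlow i j hij
  have hbt' := Matrix.blockTriangular_inv_of_blockTriangular hbt
  refine ⟨hu, ?_, fun i j hij => hbt' hij⟩
  intro i
  have h1 : (v⁻¹ * v) i i = 1 := by rw [Matrix.nonsing_inv_mul v hu, Matrix.one_apply_eq]
  rw [Matrix.mul_apply, Finset.sum_eq_single i] at h1
  · rwa [hdiag, mul_one] at h1
  · intro b _ hb
    rcases lt_trichotomy (idxNat i) (idxNat b) with h | h | h
    · rw [hbt' h, zero_mul]
    · exact absurd (idxNat_inj h) (Ne.symm hb)
    · rw [hlow _ _ h, mul_zero]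
  · simp

/-- with `Ω_ε = [[0,J],[εJ,0]]`, `θ_ε(g) = Ω_ε⁻¹ g⁻ᵀ Ω_ε`,
`x = [[0,J],[I,0]]`, `η = x·θ_ε(x)⁻¹` and `ψ(g) = η·θ_ε(g)·η⁻¹`:
for every upper-triangular unipotent `u`, `ψ(u)` has block form `[[L₁,M],[0,L₂]]`
with `L₁, L₂` lower-triangular unipotent `d × d` matrices and `M` arbitrary; and conversely
every matrix of that form is `ψ(u)` for some upper-triangular unipotent `u`. -/
theorem stmt3 (k : Type) [Field k] (hchar : (2 : k) ≠ 0) (d : ℕ) (hd : 1 ≤ d)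
    (ε : k) (hε : ε = 1 ∨ ε = -1)
    (Ω x η : Matrix (Fin d ⊕ Fin d) (Fin d ⊕ Fin d) k)
    (hΩ : Ω = fromBlocks 0 (Jmat k d) (ε • Jmat k d) 0)
    (hx : x = fromBlocks 0 (Jmat k d) (1 : Matrix (Fin d) (Fin d) k) 0)
    (hη : η = x * (Ω⁻¹ * (xᵀ)⁻¹ * Ω)⁻¹) :
    (∀ u : Matrix (Fin d ⊕ Fin d) (Fin d ⊕ Fin d) k,
      ((∀ i, u i i = 1) ∧ ∀ i j, idxNat j < idxNat i → u i j = 0) →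
      ∃ L₁ L₂ M : Matrix (Fin d) (Fin d) k,
        ((∀ i, L₁ i i = 1) ∧ ∀ i j : Fin d, i < j → L₁ i j = 0) ∧
        ((∀ i, L₂ i i = 1) ∧ ∀ i j : Fin d, i < j → L₂ i j = 0) ∧
        η * (Ω⁻¹ * (uᵀ)⁻¹ * Ω) * η⁻¹ = fromBlocks L₁ M 0 L₂) ∧
    (∀ L₁ L₂ M : Matrix (Fin d) (Fin d) k,
      ((∀ i, L₁ i i = 1) ∧ ∀ i j : Fin d, i < j → L₁ i j = 0) →
      ((∀ i, L₂ i i = 1) ∧ ∀ i j : Fin d, i < j → L₂ i j = 0) →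
      ∃ u : Matrix (Fin d ⊕ Fin d) (Fin d ⊕ Fin d) k,
        ((∀ i, u i i = 1) ∧ ∀ i j, idxNat j < idxNat i → u i j = 0) ∧
        η * (Ω⁻¹ * (uᵀ)⁻¹ * Ω) * η⁻¹ = fromBlocks L₁ M 0 L₂) := by
  set J := Jmat k d with hJ
  have hε2 : ε * ε = 1 := by rcases hε with h | h <;> subst h <;> ring
  have hJ2 : J * J = 1 := Jmul
  have hJT : Jᵀ = J := Jsymm
  have hJJl : ∀ A : Matrix (Fin d) (Fin d) k, J * (J * A) = A := JJl
  -- Ω⁻¹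
  have hΩi : Ω⁻¹ = fromBlocks 0 (ε • J) J 0 := by
    apply Matrix.inv_eq_right_inv
    rw [hΩ]
    simp [Matrix.fromBlocks_multiply, Matrix.smul_mul, Matrix.mul_smul, smul_smul, hε2,
      hJ2, ← Matrix.fromBlocks_one]
  -- (xᵀ)⁻¹ = x
  have hxT : (xᵀ)⁻¹ = x := by
    apply Matrix.inv_eq_right_inv
    rw [hx]
    simp [Matrix.fromBlocks_transpose, Matrix.fromBlocks_multiply, hJT, hJ2,
      ← Matrix.fromBlocks_one]
  -- θ(x) and its inverse
  have hθx : Ω⁻¹ * (xᵀ)⁻¹ * Ω = fromBlocks 0 (ε • 1) (ε • J) 0 := by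
    rw [hxT, hΩi, hΩ, hx]
    simp [Matrix.fromBlocks_multiply, Matrix.smul_mul, Matrix.mul_smul, smul_smul, hε2,
      mul_assoc, hJ2, hJJl]
  have hθxi : (Ω⁻¹ * (xᵀ)⁻¹ * Ω)⁻¹ = fromBlocks 0 (ε • J) (ε • 1) 0 := by
    rw [hθx]
    apply Matrix.inv_eq_right_inv
    simp [Matrix.fromBlocks_multiply, Matrix.smul_mul, Matrix.mul_smul, smul_smul, hε2,
      hJ2, ← Matrix.fromBlocks_one]
  -- η
  have hηv : η = fromBlocks (ε • J) 0 0 (ε • J) := by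
    rw [hη, hθxi, hx]
    simp [Matrix.fromBlocks_multiply, Matrix.smul_mul, Matrix.mul_smul]
  have hηi : η⁻¹ = η := by
    apply Matrix.inv_eq_right_inv
    rw [hηv]
    simp [Matrix.fromBlocks_multiply, Matrix.smul_mul, Matrix.mul_smul, smul_smul, hε2,
      hJ2, ← Matrix.fromBlocks_one]
  -- the key computation
  have ψcalc : ∀ A C D : Matrix (Fin d) (Fin d) k,
      η * (Ω⁻¹ * fromBlocks A 0 C D * Ω) * η⁻¹ = fromBlocks D (ε • C) 0 A := by
    intro A C D
    rw [hηi, hηv, hΩi, hΩ]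
    simp [Matrix.fromBlocks_multiply, Matrix.smul_mul, Matrix.mul_smul, smul_smul, hε2,
      mul_assoc, hJ2, hJJl]
  constructor
  · -- forward direction
    rintro u ⟨hud, huu⟩
    have haux := tri_aux uᵀ (fun i => hud i) (fun i j hij => huu j i hij)
    obtain ⟨hu, hvd, hvl⟩ := haux
    set v := (uᵀ)⁻¹ with hvdef
    have hv12 : v.toBlocks₁₂ = 0 := by
      ext i j
      refine hvl (Sum.inl i) (Sum.inr j) ?_
      simp [idxNat]
      omega
    have hvb : v = fromBlocks v.toBlocks₁₁ 0 v.toBlocks₂₁ v.toBlocks₂₂ := by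
      rw [← hv12, Matrix.fromBlocks_toBlocks]
    refine ⟨v.toBlocks₂₂, v.toBlocks₁₁, ε • v.toBlocks₂₁, ⟨?_, ?_⟩, ⟨?_, ?_⟩, ?_⟩
    · intro i; exact hvd (Sum.inr i)
    · intro i j hij
      refine hvl (Sum.inr i) (Sum.inr j) ?_
      simpa [idxNat] using hij
    · intro i; exact hvd (Sum.inl i)
    · intro i j hij
      refine hvl (Sum.inl i) (Sum.inl j) ?_
      simpa [idxNat] using hij
    · conv_lhs => rw [hvb]
      rw [ψcalc]
  · -- converse direction
    rintro L₁ L₂ M ⟨h1d, h1l⟩ ⟨h2d, h2l⟩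
    set v : Matrix (Fin d ⊕ Fin d) (Fin d ⊕ Fin d) k := fromBlocks L₂ 0 (ε • M) L₁ with hvdef
    have hvd : ∀ i, v i i = 1 := by
      rintro (i | i)
      · exact h2d i
      · exact h1d i
    have hvl : ∀ i j, idxNat i < idxNat j → v i j = 0 := by
      rintro (i | i) (j | j) hij <;> simp only [idxNat, Sum.elim_inl, Sum.elim_inr] at hij
      · exact h2l i j (by exact_mod_cast hij)
      · simp [hvdef, Matrix.fromBlocks_apply₁₂]
      · omega
      · exact h1l i j (by simpa using hij)
    obtain ⟨hu, hivd, hivl⟩ := tri_aux v hvd hvl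
    refine ⟨(v⁻¹)ᵀ, ⟨fun i => hivd i, fun i j hij => hivl j i hij⟩, ?_⟩
    have h1 : (((v⁻¹)ᵀ)ᵀ)⁻¹ = v := by
      rw [Matrix.transpose_transpose, Matrix.nonsing_inv_nonsing_inv v hu]
    rw [h1, hvdef, ψcalc, smul_smul, hε2, one_smul]
end

section
/- Let k be an algebraically closed field of characteristic not equal to 2 and let d ≥ 1. Let x and y be invertible skew-symmetric 2d×2d matrices over k. Then there exists an invertible lower-triangular 2d×2d matrix b with y = b·x·bᵀ if and only if r_{i,j}(x) = r_{i,j}(y) for all 1 ≤ i, j ≤ 2d. -/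
open Matrix

/-- `nwRank M i j hi hj` is the rank of the northwest-justified submatrix of `M`
consisting of the first `i` rows and the first `j` columns. -/
noncomputable def nwRank {k : Type} [Field k] {n : ℕ} (M : Matrix (Fin n) (Fin n) k)
    (i j : ℕ) (hi : i ≤ n) (hj : j ≤ n) : ℕ :=
  (M.submatrix (Fin.castLE hi) (Fin.castLE hj)).rank

namespace Stmt7Aux

open Finset

variable {k : Type} [Field k] {n : ℕ}

/-- lower triangular -/
def LTm (b : Matrix (Fin n) (Fin n) k) : Prop := ∀ i j : Fin n, i < j → b i j = 0

/-- congruence by invertible lower triangular matrices -/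
def Cong (x y : Matrix (Fin n) (Fin n) k) : Prop :=
  ∃ b, IsUnit b.det ∧ LTm b ∧ y = b * x * bᵀ

lemma LTm.blockTriangular {b : Matrix (Fin n) (Fin n) k} (hb : LTm b) :
    b.BlockTriangular (OrderDual.toDual : Fin n → (Fin n)ᵒᵈ) := fun i j h => hb i j h

lemma LTm.det_eq {b : Matrix (Fin n) (Fin n) k} (hb : LTm b) : b.det = ∏ i, b i i :=
  Matrix.det_of_lowerTriangular b hb.blockTriangular

lemma LTm.one : LTm (1 : Matrix (Fin n) (Fin n) k) := fun i j h => by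
  simp [Matrix.one_apply, (show i ≠ j from h.ne)]

lemma LTm.mul {a b : Matrix (Fin n) (Fin n) k} (ha : LTm a) (hb : LTm b) : LTm (a * b) := by
  intro i j h
  rw [Matrix.mul_apply]
  apply Finset.sum_eq_zero
  intro r _
  rcases lt_or_ge i r with hr | hr
  · rw [ha i r hr, zero_mul]
  · rw [hb r j (lt_of_le_of_lt hr h), mul_zero]

lemma LTm.inv {b : Matrix (Fin n) (Fin n) k} (hb : LTm b) (hu : IsUnit b.det) : LTm b⁻¹ := by
  have := b.invertibleOfIsUnitDet hu
  exact fun i j h => Matrix.blockTriangular_inv_of_blockTriangular hb.blockTriangular h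

lemma Cong.refl (x : Matrix (Fin n) (Fin n) k) : Cong x x :=
  ⟨1, by simp, LTm.one, by simp⟩

lemma Cong.trans {x y z : Matrix (Fin n) (Fin n) k} (h1 : Cong x y) (h2 : Cong y z) :
    Cong x z := by
  obtain ⟨b, hb, hbl, rfl⟩ := h1
  obtain ⟨c, hc, hcl, rfl⟩ := h2
  refine ⟨c * b, ?_, hcl.mul hbl, by rw [Matrix.transpose_mul]; noncomm_ring⟩
  rw [Matrix.det_mul]
  exact hc.mul hb

lemma Cong.symm {x y : Matrix (Fin n) (Fin n) k} (h : Cong x y) : Cong y x := by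
  obtain ⟨b, hb, hbl, rfl⟩ := h
  have h2 := hb.invertible
  refine ⟨b⁻¹, ?_, hbl.inv hb, ?_⟩
  · rw [Matrix.det_nonsing_inv]
    exact isUnit_ringInverse.mpr hb
  · rw [Matrix.transpose_nonsing_inv]
    have : b⁻¹ * (b * x * bᵀ) * (bᵀ)⁻¹ = (b⁻¹ * b) * x * (bᵀ * (bᵀ)⁻¹) := by noncomm_ring
    rw [this, Matrix.nonsing_inv_mul _ hb,
      Matrix.mul_nonsing_inv _ (by rwa [Matrix.det_transpose]), Matrix.one_mul, Matrix.mul_one]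

lemma Cong.skew {x y : Matrix (Fin n) (Fin n) k} (h : Cong x y) (hx : xᵀ = -x) : yᵀ = -y := by
  obtain ⟨b, hb, hbl, rfl⟩ := h
  rw [Matrix.transpose_mul, Matrix.transpose_mul, Matrix.transpose_transpose, hx]
  noncomm_ring

lemma Cong.isUnit_det {x y : Matrix (Fin n) (Fin n) k} (h : Cong x y) (hx : IsUnit x.det) :
    IsUnit y.det := by
  obtain ⟨b, hb, hbl, rfl⟩ := h
  rw [Matrix.det_mul, Matrix.det_mul, Matrix.det_transpose]
  exact (hb.mul hx).mul hb


lemma sum_eq_sum_comp {a c : ℕ} {M : Type} [AddCommMonoid M] (g : Fin a → Fin c)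
    (hg : Function.Injective g) (f : Fin c → M) (h : ∀ i, (∀ p, g p ≠ i) → f i = 0) :
    ∑ i, f i = ∑ p, f (g p) := by
  rw [← Finset.sum_image (f := f) (g := g) (fun x _ y _ hxy => hg hxy)]
  refine (Finset.sum_subset (Finset.subset_univ _) ?_).symm
  intro i _ hi
  refine h i fun p hp => hi ?_
  rw [← hp]
  exact Finset.mem_image_of_mem g (mem_univ p)

lemma castLE_surj {i : ℕ} (hi : i ≤ n) (r : Fin n) (hr : (r : ℕ) < i) :
    ∃ p : Fin i, Fin.castLE hi p = r := ⟨⟨r, hr⟩, rfl⟩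

lemma corner_det_isUnit {b : Matrix (Fin n) (Fin n) k} (hbl : LTm b) (hb : IsUnit b.det)
    {i : ℕ} (hi : i ≤ n) : IsUnit (b.submatrix (Fin.castLE hi) (Fin.castLE hi)).det := by
  have h1 : LTm (b.submatrix (Fin.castLE hi) (Fin.castLE hi)) := by
    intro p q h
    exact hbl _ _ (by simpa only [Fin.lt_def, Fin.coe_castLE] using h)
  rw [h1.det_eq]
  rw [hbl.det_eq] at hb
  rw [isUnit_iff_ne_zero, Finset.prod_ne_zero_iff] at hb ⊢
  intro p _
  exact hb (Fin.castLE hi p) (mem_univ _)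

lemma nwRank_eq_of_cong {x y : Matrix (Fin n) (Fin n) k} (h : Cong x y) (i j : ℕ)
    (hi : i ≤ n) (hj : j ≤ n) : nwRank x i j hi hj = nwRank y i j hi hj := by
  obtain ⟨b, hb, hbl, rfl⟩ := h
  have key : (b * x * bᵀ).submatrix (Fin.castLE hi) (Fin.castLE hj)
      = (b.submatrix (Fin.castLE hi) (Fin.castLE hi))
        * (x.submatrix (Fin.castLE hi) (Fin.castLE hj))
        * (b.submatrix (Fin.castLE hj) (Fin.castLE hj))ᵀ := by
    ext p q
    simp only [Matrix.submatrix_apply, Matrix.mul_apply, Matrix.transpose_apply,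
      Finset.sum_mul]
    rw [sum_eq_sum_comp (Fin.castLE hj) (Fin.castLE_injective hj)]
    · refine Finset.sum_congr rfl fun s _ => ?_
      rw [sum_eq_sum_comp (Fin.castLE hi) (Fin.castLE_injective hi)]
      intro r hr
      have : ¬ ((r : ℕ) < i) := fun hc => (hr ⟨r, hc⟩) rfl
      have hpr : Fin.castLE hi p < r := by
        rw [Fin.lt_def]; simp only [Fin.coe_castLE]; omega
      rw [hbl _ _ hpr]
      simp [Finset.sum_mul]
    · intro s hs
      have : ¬ ((s : ℕ) < j) := fun hc => (hs ⟨s, hc⟩) rfl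
      have hqs : Fin.castLE hj q < s := by
        rw [Fin.lt_def]; simp only [Fin.coe_castLE]; omega
      rw [hbl _ _ hqs]
      simp
  unfold nwRank
  rw [key, Matrix.rank_mul_eq_left_of_isUnit_det _ _ (by
      rw [Matrix.det_transpose]; exact corner_det_isUnit hbl hb hj),
    Matrix.rank_mul_eq_right_of_isUnit_det _ _ (corner_det_isUnit hbl hb hi)]


def canon (σ : Equiv.Perm (Fin n)) : Matrix (Fin n) (Fin n) k :=
  Matrix.of fun i j => if σ i = j then (if i < j then 1 else -1) else 0

lemma canon_apply (σ : Equiv.Perm (Fin n)) (i j : Fin n) :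
    (canon σ : Matrix (Fin n) (Fin n) k) i j
      = if σ i = j then (if i < j then 1 else -1) else 0 := rfl

lemma nwRank_canon (σ : Equiv.Perm (Fin n)) {i j : ℕ} (hi : i ≤ n) (hj : j ≤ n) :
    nwRank (canon σ : Matrix (Fin n) (Fin n) k) i j hi hj
      = (univ.filter (fun p : Fin n => (p : ℕ) < i ∧ ((σ p : ℕ) < j))).card := by
  classical
  set A := (canon σ : Matrix (Fin n) (Fin n) k).submatrix (Fin.castLE hi) (Fin.castLE hj) with hA
  set T : Finset (Fin i) := univ.filter (fun p => ((σ (Fin.castLE hi p) : ℕ) < j)) with hT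
  -- single columns
  have hcol : ∀ (p : Fin i) (q : Fin j), σ (Fin.castLE hi p) = Fin.castLE hj q →
      Aᵀ q = (A p q) • (Pi.single p 1 : Fin i → k) ∧ A p q ≠ 0 := by
    intro p q hpq
    constructor
    · funext p'
      simp only [Matrix.transpose_apply, Pi.smul_apply, Pi.single_apply, smul_eq_mul]
      by_cases hp' : p' = p
      · subst hp'; simp
      · have : σ (Fin.castLE hi p') ≠ Fin.castLE hj q := by
          rw [← hpq]
          intro hc
          exact hp' (Fin.castLE_injective hi (σ.injective hc))
        simp [hA, Matrix.submatrix_apply, canon_apply, this, hp']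
    · simp only [hA, Matrix.submatrix_apply, canon_apply, hpq, if_true]
      split <;> simp
  have hrank : A.rank = T.card := by
    rw [Matrix.rank_eq_finrank_span_cols]
    have hspan : Submodule.span k (Set.range Aᵀ)
        = Submodule.span k (Set.range (fun p : T => (Pi.single (p : Fin i) 1 : Fin i → k))) := by
      apply le_antisymm <;> rw [Submodule.span_le] <;> rintro c ⟨w, rfl⟩
      · -- a column is in the span of the singles
        set t := σ.symm (Fin.castLE hj w) with hw
        by_cases ht : (t : ℕ) < i
        · set p0 : Fin i := ⟨t, ht⟩ with hp0
          have hc : σ (Fin.castLE hi p0) = Fin.castLE hj w := by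
            have : Fin.castLE hi p0 = t := by ext; simp [hp0]
            rw [this, hw, Equiv.apply_symm_apply]
          obtain ⟨heq, _⟩ := hcol p0 w hc
          have hmem : p0 ∈ T := by
            simp only [hT, mem_filter, mem_univ, true_and, hc, Fin.coe_castLE]
            exact w.isLt
          rw [heq]
          exact Submodule.smul_mem _ _ (Submodule.subset_span ⟨⟨p0, hmem⟩, rfl⟩)
        · have : Aᵀ w = 0 := by
            funext p'
            simp only [Matrix.transpose_apply, hA, Matrix.submatrix_apply, canon_apply,
              Pi.zero_apply]
            have : σ (Fin.castLE hi p') ≠ Fin.castLE hj w := by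
              intro hc
              apply ht
              rw [hw, ← hc, Equiv.symm_apply_apply]
              exact p'.isLt
            simp [this]
          rw [this]
          exact Submodule.zero_mem _
      · -- each single is in the span of the columns
        obtain ⟨p, hp⟩ := w
        have hp' : (σ (Fin.castLE hi p) : ℕ) < j := by simpa [hT] using hp
        set q : Fin j := ⟨σ (Fin.castLE hi p), hp'⟩ with hq
        have hc : σ (Fin.castLE hi p) = Fin.castLE hj q := by ext; simp [hq]
        obtain ⟨heq, hne⟩ := hcol p q hc
        have : (Pi.single (p : Fin i) 1 : Fin i → k) = (A p q)⁻¹ • Aᵀ q := by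
          rw [heq, smul_smul, inv_mul_cancel₀ hne, one_smul]
        show (Pi.single (p : Fin i) 1 : Fin i → k) ∈ _
        rw [this]
        exact Submodule.smul_mem _ _ (Submodule.subset_span ⟨q, rfl⟩)
    rw [show A.col = Aᵀ from rfl, hspan]
    have hli : LinearIndependent k (fun p : T => (Pi.single (p : Fin i) 1 : Fin i → k)) := by
      have := (Pi.basisFun k (Fin i)).linearIndependent
      have h2 := this.comp (fun p : T => (p : Fin i)) Subtype.val_injective
      simpa only [Function.comp_def, Pi.basisFun_apply] using h2
    rw [finrank_span_eq_card hli, Fintype.card_coe]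
  rw [nwRank, ← hA, hrank]
  apply Finset.card_bij (fun p _ => Fin.castLE hi p)
  · intro p hp
    simp only [mem_filter, mem_univ, true_and, Fin.coe_castLE]
    exact ⟨p.isLt, by simpa [hT] using hp⟩
  · intro p _ p' _ h
    exact Fin.castLE_injective hi h
  · intro r hr
    simp only [mem_filter, mem_univ, true_and] at hr
    exact ⟨⟨r, hr.1⟩, by simp only [hT, mem_filter, mem_univ, true_and]; exact hr.2, by ext; simp⟩


lemma perm_eq_of_counts {σ τ : Equiv.Perm (Fin n)}
    (h : ∀ i j : ℕ, i ≤ n → j ≤ n →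
      (univ.filter fun p : Fin n => (p : ℕ) < i ∧ (σ p : ℕ) < j).card
        = (univ.filter fun p : Fin n => (p : ℕ) < i ∧ (τ p : ℕ) < j).card) :
    σ = τ := by
  classical
  have step : ∀ (ρ : Equiv.Perm (Fin n)) (p : Fin n) (j : ℕ),
      (univ.filter fun q : Fin n => (q : ℕ) < (p : ℕ) + 1 ∧ (ρ q : ℕ) < j).card
        = (univ.filter fun q : Fin n => (q : ℕ) < (p : ℕ) ∧ (ρ q : ℕ) < j).card
          + (if (ρ p : ℕ) < j then 1 else 0) := by
    intro ρ p j
    have hsplit : (univ.filter fun q : Fin n => (q : ℕ) < (p : ℕ) + 1 ∧ (ρ q : ℕ) < j)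
        = (univ.filter fun q : Fin n => (q : ℕ) < (p : ℕ) ∧ (ρ q : ℕ) < j)
          ∪ (univ.filter fun q : Fin n => q = p ∧ (ρ q : ℕ) < j) := by
      ext q
      simp only [mem_filter, mem_univ, true_and, mem_union]
      constructor
      · rintro ⟨hq, hρ⟩
        rcases Nat.lt_or_ge (q : ℕ) (p : ℕ) with h' | h'
        · exact Or.inl ⟨h', hρ⟩
        · exact Or.inr ⟨Fin.ext (by omega), hρ⟩
      · rintro (⟨hq, hρ⟩ | ⟨rfl, hρ⟩)
        · exact ⟨by omega, hρ⟩
        · exact ⟨by omega, hρ⟩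
    rw [hsplit, Finset.card_union_of_disjoint]
    · congr 1
      by_cases hρ : (ρ p : ℕ) < j
      · rw [if_pos hρ]
        have : (univ.filter fun q : Fin n => q = p ∧ (ρ q : ℕ) < j) = {p} := by
          ext q
          simp only [mem_filter, mem_univ, true_and, mem_singleton]
          constructor
          · exact fun hq => hq.1
          · rintro rfl; exact ⟨rfl, hρ⟩
        rw [this, Finset.card_singleton]
      · rw [if_neg hρ]
        have : (univ.filter fun q : Fin n => q = p ∧ (ρ q : ℕ) < j) = ∅ := by
          ext q
          simp only [mem_filter, mem_univ, true_and, Finset.notMem_empty, iff_false, not_and]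
          rintro rfl; exact hρ
        rw [this, Finset.card_empty]
    · rw [Finset.disjoint_left]
      intro q h1 h2
      simp only [mem_filter, mem_univ, true_and] at h1 h2
      have := h1.1
      rw [h2.1] at this
      omega
  have key : ∀ (p : Fin n) (j : ℕ), j ≤ n → ((σ p : ℕ) < j ↔ (τ p : ℕ) < j) := by
    intro p j hj
    have e1 := h ((p : ℕ) + 1) j p.isLt hj
    have e2 := h (p : ℕ) j (le_of_lt p.isLt) hj
    rw [step σ p j, step τ p j, e2] at e1
    by_cases h1 : (σ p : ℕ) < j <;> by_cases h2 : (τ p : ℕ) < j <;>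
      simp [h1, h2] at e1 ⊢
  apply Equiv.ext
  intro p
  have a := key p ((σ p : ℕ) + 1) (σ p).isLt
  have b := key p ((τ p : ℕ) + 1) (τ p).isLt
  exact Fin.ext (by omega)


lemma diag_zero (h2 : (2:k) ≠ 0) {x : Matrix (Fin n) (Fin n) k} (hx : xᵀ = -x) (p : Fin n) :
    x p p = 0 := by
  have h := congrFun (congrFun hx p) p
  simp only [Matrix.transpose_apply, Matrix.neg_apply] at h
  have h4 : (2:k) * x p p = 0 := by linear_combination h
  rcases mul_eq_zero.mp h4 with h' | h'
  · exact absurd h' h2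
  · exact h'

lemma skew_apply {x : Matrix (Fin n) (Fin n) k} (hx : xᵀ = -x) (p q : Fin n) :
    x q p = - x p q := by
  have h := congrFun (congrFun hx p) q
  simpa using h

lemma cong_elem (x : Matrix (Fin n) (Fin n) k) (u : Fin n → k) (t : Fin n)
    (hu : ∀ p, u p ≠ 0 → t < p) :
    Cong x (Matrix.of fun p q => x p q + u p * x t q + u q * x p t + u p * u q * x t t) := by
  classical
  have hut : u t = 0 := by
    by_contra h
    exact lt_irrefl t (hu t h)
  set E : Matrix (Fin n) (Fin n) k :=
    Matrix.of (fun p r => (if p = r then (1:k) else 0) + u p * (if r = t then 1 else 0)) with hE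
  have hEl : LTm E := by
    intro i j hij
    simp only [hE, Matrix.of_apply]
    rw [if_neg hij.ne]
    rcases eq_or_ne j t with rfl | hjt
    · have : u i = 0 := by
        by_contra h
        exact absurd (hu i h) (not_lt.mpr hij.le)
      simp [this]
    · simp [hjt]
  have hEd : IsUnit E.det := by
    rw [hEl.det_eq]
    have hdiag : ∀ p : Fin n, E p p = 1 := by
      intro p
      simp only [hE, Matrix.of_apply, if_pos rfl]
      rcases eq_or_ne p t with rfl | hpt
      · simp [hut]
      · simp [hpt]
    simp [hdiag]
  refine ⟨E, hEd, hEl, ?_⟩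
  have hsum1 : ∀ p s, (E * x) p s = x p s + u p * x t s := by
    intro p s
    rw [Matrix.mul_apply]
    have hfun : (fun r => E p r * x r s)
        = fun r => (if p = r then x r s else 0) + (if r = t then u p * x t s else 0) := by
      funext r
      simp only [hE, Matrix.of_apply]
      split_ifs with h1 h2 <;> subst_vars <;> ring
    rw [hfun, Finset.sum_add_distrib, Finset.sum_ite_eq, Finset.sum_ite_eq']
    simp
  ext p q
  rw [Matrix.mul_apply]
  have hfun : (fun s => (E * x) p s * Eᵀ s q)
      = fun s => (if q = s then (E * x) p s else 0) + (if s = t then u q * (E * x) p t else 0) := by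
    funext s
    simp only [Matrix.transpose_apply, hE, Matrix.of_apply]
    split_ifs with h1 h2 <;> subst_vars <;> ring
  rw [hfun, Finset.sum_add_distrib, Finset.sum_ite_eq, Finset.sum_ite_eq']
  simp only [Finset.mem_univ, if_true]
  rw [hsum1, hsum1]
  simp only [Matrix.of_apply]
  ring

lemma cong_diag (x : Matrix (Fin n) (Fin n) k) (c : Fin n → k) (hc : ∀ p, c p ≠ 0) :
    Cong x (Matrix.of fun p q => c p * c q * x p q) := by
  refine ⟨Matrix.diagonal c, ?_, ?_, ?_⟩
  · rw [Matrix.det_diagonal, isUnit_iff_ne_zero, Finset.prod_ne_zero_iff]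
    exact fun p _ => hc p
  · intro i j hij
    exact Matrix.diagonal_apply_ne c hij.ne
  · ext p q
    rw [Matrix.diagonal_transpose, Matrix.mul_diagonal, Matrix.diagonal_mul]
    simp only [Matrix.of_apply]
    ring

lemma clear_step (h2 : (2:k) ≠ 0) [NeZero n] (x : Matrix (Fin n) (Fin n) k)
    (hxs : xᵀ = -x) (m : Fin n) (hm : x m 0 ≠ 0) (hmin : ∀ p, p < m → x p 0 = 0) :
    ∃ y : Matrix (Fin n) (Fin n) k, Cong x y ∧ yᵀ = -y ∧
      (∀ q, y 0 q = if q = m then 1 else 0) ∧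
      (∀ p, y p 0 = if p = m then -1 else 0) ∧
      (∀ q, y m q = if q = 0 then -1 else 0) ∧
      (∀ p, y p m = if p = 0 then 1 else 0) := by
  classical
  have hval0 : ((0 : Fin n) : ℕ) = 0 := Fin.val_zero n
  have posne : ∀ p : Fin n, p ≠ 0 → 0 < p := by
    intro p hp
    rw [Fin.lt_def, hval0]
    have : (p : ℕ) ≠ 0 := fun h => hp (Fin.ext (by rw [h, hval0]))
    omega
  have hm0 : (0 : Fin n) < m := by
    apply posne
    intro h
    exact hm (h ▸ diag_zero h2 hxs 0)
  have hnot0 : ∀ p : Fin n, ¬ p < 0 := by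
    intro p
    rw [Fin.lt_def]
    simp
  -- step 1 : clear column 0 below row m
  set u1 : Fin n → k := fun p => if m < p then -x p 0 / x m 0 else 0 with hu1
  set x1 : Matrix (Fin n) (Fin n) k :=
    Matrix.of (fun p q => x p q + u1 p * x m q + u1 q * x p m + u1 p * u1 q * x m m) with hx1
  have hc1 : Cong x x1 := cong_elem x u1 m (by
    intro p hp
    by_contra h
    simp [hu1, h] at hp)
  have hx1s : x1ᵀ = -x1 := hc1.skew hxs
  have hu10 : u1 0 = 0 := by
    simp only [hu1]
    rw [if_neg (hnot0 m)]
  have hu1m : u1 m = 0 := by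
    simp only [hu1]
    rw [if_neg (lt_irrefl m)]
  have hcol1 : ∀ p, x1 p 0 = if p = m then x m 0 else 0 := by
    intro p
    simp only [hx1, Matrix.of_apply, hu10, zero_mul, mul_zero, add_zero]
    rcases eq_or_ne p m with rfl | hpm
    · rw [if_pos rfl, hu1m]
      ring
    · rw [if_neg hpm]
      rcases lt_or_gt_of_ne hpm with h | h
      · have hup : u1 p = 0 := by
          simp only [hu1]
          rw [if_neg (not_lt.mpr h.le)]
        rw [hmin p h, hup]
        ring
      · simp only [hu1]
        rw [if_pos h]
        field_simp
        ring
  -- step 2 : clear row m to the right of column 0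
  set u2 : Fin n → k := fun q => if q = 0 ∨ q = m then 0 else -x1 m q / x m 0 with hu2
  set x2 : Matrix (Fin n) (Fin n) k :=
    Matrix.of (fun p q => x1 p q + u2 p * x1 0 q + u2 q * x1 p 0 + u2 p * u2 q * x1 0 0) with hx2
  have hc2 : Cong x1 x2 := cong_elem x1 u2 0 (by
    intro p hp
    apply posne
    intro h
    simp [hu2, h] at hp)
  have hx2s : x2ᵀ = -x2 := hc2.skew hx1s
  have hu20 : u2 0 = 0 := by simp [hu2]
  have hu2m : u2 m = 0 := by simp [hu2]
  have h100 : x1 0 0 = 0 := diag_zero h2 hx1s 0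
  have h1m0 : x1 m 0 = x m 0 := by rw [hcol1 m, if_pos rfl]
  have hcol2 : ∀ p, x2 p 0 = if p = m then x m 0 else 0 := by
    intro p
    simp only [hx2, Matrix.of_apply, hu20, h100, zero_mul, mul_zero, add_zero]
    exact hcol1 p
  have hrowm2 : ∀ q, x2 m q = if q = 0 then x m 0 else 0 := by
    intro q
    rcases eq_or_ne q 0 with rfl | hq0
    · rw [if_pos rfl]
      exact (hcol2 m).trans (if_pos rfl)
    · rw [if_neg hq0]
      rcases eq_or_ne q m with rfl | hqm
      · exact diag_zero h2 hx2s q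
      · simp only [hx2, Matrix.of_apply, hu2m, h100, zero_mul, mul_zero, add_zero, zero_add,
          mul_zero]
        have hq : u2 q = -x1 m q / x m 0 := by
          simp only [hu2]
          rw [if_neg (by tauto)]
        rw [hq, h1m0]
        field_simp
        ring
  have hrow02 : ∀ q, x2 0 q = if q = m then -(x m 0) else 0 := by
    intro q
    rw [skew_apply hx2s q 0, hcol2 q]
    split_ifs <;> simp
  have hcolm2 : ∀ p, x2 p m = if p = 0 then -(x m 0) else 0 := by
    intro p
    rw [skew_apply hx2s m p, hrowm2 p]
    split_ifs <;> simp
  -- step 3 : rescale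
  set cd : Fin n → k := fun p => if p = 0 then -(x m 0)⁻¹ else 1 with hcd
  have hcdne : ∀ p, cd p ≠ 0 := by
    intro p
    simp only [hcd]
    split_ifs
    · exact neg_ne_zero.mpr (inv_ne_zero hm)
    · exact one_ne_zero
  set y : Matrix (Fin n) (Fin n) k := Matrix.of (fun p q => cd p * cd q * x2 p q) with hy
  have hc3 : Cong x2 y := cong_diag x2 cd hcdne
  have hcd0 : cd 0 = -(x m 0)⁻¹ := by simp [hcd]
  have hcdm : cd m = 1 := by
    simp only [hcd]
    rw [if_neg hm0.ne']
  refine ⟨y, hc1.trans (hc2.trans hc3), hc3.skew hx2s, ?_, ?_, ?_, ?_⟩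
  · intro q
    simp only [hy, Matrix.of_apply, hcd0]
    rw [hrow02 q]
    rcases eq_or_ne q m with rfl | hqm
    · rw [if_pos rfl, if_pos rfl, hcdm]
      field_simp
    · rw [if_neg hqm, if_neg hqm]
      ring
  · intro p
    simp only [hy, Matrix.of_apply, hcd0]
    rw [hcol2 p]
    rcases eq_or_ne p m with rfl | hpm
    · rw [if_pos rfl, if_pos rfl, hcdm]
      field_simp
    · rw [if_neg hpm, if_neg hpm]
      ring
  · intro q
    simp only [hy, Matrix.of_apply, hcdm]
    rw [hrowm2 q]
    rcases eq_or_ne q 0 with rfl | hq0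
    · rw [if_pos rfl, if_pos rfl, hcd0]
      field_simp
    · rw [if_neg hq0, if_neg hq0]
      ring
  · intro p
    simp only [hy, Matrix.of_apply, hcdm]
    rw [hcolm2 p]
    rcases eq_or_ne p 0 with rfl | hp0
    · rw [if_pos rfl, if_pos rfl, hcd0]
      field_simp
    · rw [if_neg hp0, if_neg hp0]
      ring


lemma sum_ite_mul {ι : Type} [Fintype ι] [DecidableEq ι] (f : ι → k) (c : ι) :
    (∑ r, (if r = c then (1:k) else 0) * f r) = f c := by
  have : (fun r => (if r = c then (1:k) else 0) * f r) = fun r => if r = c then f r else 0 := by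
    funext r
    split_ifs <;> simp
  rw [this, Finset.sum_ite_eq']
  simp

lemma mul_ite_sum {ι : Type} [Fintype ι] [DecidableEq ι] (f : ι → k) (c : ι) :
    (∑ r, f r * (if r = c then (1:k) else 0)) = f c := by
  have : (fun r => f r * (if r = c then (1:k) else 0)) = fun r => if r = c then f r else 0 := by
    funext r
    split_ifs <;> simp
  rw [this, Finset.sum_ite_eq']
  simp

lemma sum_ite_mul' {ι : Type} [Fintype ι] [DecidableEq ι] (f : ι → k) (c : ι) :
    (∑ r, (if c = r then (1:k) else 0) * f r) = f c := by
  have : (fun r => (if c = r then (1:k) else 0) * f r) = fun r => if c = r then f r else 0 := by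
    funext r
    split_ifs <;> simp
  rw [this, Finset.sum_ite_eq]
  simp

lemma mul_ite_sum' {ι : Type} [Fintype ι] [DecidableEq ι] (f : ι → k) (c : ι) :
    (∑ r, f r * (if c = r then (1:k) else 0)) = f c := by
  have : (fun r => f r * (if c = r then (1:k) else 0)) = fun r => if c = r then f r else 0 := by
    funext r
    split_ifs <;> simp
  rw [this, Finset.sum_ite_eq]
  simp

lemma isUnit_det_of_mulVec {a : ℕ} (A : Matrix (Fin a) (Fin a) k)
    (h : ∀ w, A.mulVec w = 0 → w = 0) : IsUnit A.det := by
  apply (Matrix.isUnit_iff_isUnit_det A).mp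
  apply Matrix.mulVec_injective_iff_isUnit.mp
  intro v w hvw
  have := h (v - w) (by rw [Matrix.mulVec_sub, hvw, sub_self])
  exact sub_eq_zero.mp this

lemma mulVec_eq_zero_of {a : ℕ} (A : Matrix (Fin a) (Fin a) k) (hu : IsUnit A.det) :
    ∀ w, A.mulVec w = 0 → w = 0 := by
  intro w h
  have hinj := Matrix.mulVec_injective_iff_isUnit.mpr ((Matrix.isUnit_iff_isUnit_det A).mpr hu)
  exact hinj (h.trans (Matrix.mulVec_zero A).symm)

lemma exists_canon (h2 : (2:k) ≠ 0) :
    ∀ N : ℕ, ∀ x : Matrix (Fin N) (Fin N) k, IsUnit x.det → xᵀ = -x →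
      ∃ σ : Equiv.Perm (Fin N), Cong x (canon σ) := by
  intro N
  induction N using Nat.strong_induction_on with
  | _ N IH =>
  intro x hx hxs
  rcases Nat.eq_zero_or_pos N with rfl | hN
  · exact ⟨1, 1, by simp, fun i j _ => i.elim0, by ext i j; exact i.elim0⟩
  haveI : NeZero N := ⟨hN.ne'⟩
  have hval0 : ((0 : Fin N) : ℕ) = 0 := Fin.val_zero N
  have posne : ∀ p : Fin N, p ≠ 0 → 0 < p := by
    intro p hp
    rw [Fin.lt_def, hval0]
    have : (p : ℕ) ≠ 0 := fun h => hp (Fin.ext (by rw [h, hval0]))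
    omega
  -- find the pivot
  have hcol : ∃ p : Fin N, x p 0 ≠ 0 := by
    by_contra hall
    push_neg at hall
    have h0 : x.mulVec (Pi.single 0 1) = 0 := by
      funext p
      rw [Matrix.mulVec_single]
      simp [hall p]
    have h1 := mulVec_eq_zero_of x hx _ h0
    have h3 := congrFun h1 0
    simp [Pi.single_apply] at h3
  obtain ⟨m, hm, hmin⟩ : ∃ m : Fin N, x m 0 ≠ 0 ∧ ∀ p, p < m → x p 0 = 0 := by
    classical
    set S : Finset (Fin N) := univ.filter (fun p => x p 0 ≠ 0) with hS
    have hSne : S.Nonempty := by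
      obtain ⟨p, hp⟩ := hcol
      exact ⟨p, by simp [hS, hp]⟩
    refine ⟨S.min' hSne, ?_, ?_⟩
    · have := S.min'_mem hSne
      simp only [hS, mem_filter, mem_univ, true_and] at this
      exact this
    · intro p hp
      by_contra hne
      exact absurd (S.min'_le p (by simp [hS, hne])) (not_le.mpr hp)
  obtain ⟨y, hcxy, hys, hy0, hyc0, hym, hycm⟩ := clear_step h2 x hxs m hm hmin
  have hyu : IsUnit y.det := hcxy.isUnit_det hx
  have hm0 : (0 : Fin N) < m := by
    apply posne
    intro h
    exact hm (h ▸ diag_zero h2 hxs 0)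
  have hmval : 0 < (m : ℕ) := by
    have := Fin.lt_def.mp hm0
    rw [hval0] at this
    exact this
  have hmlt : (m : ℕ) < N := m.isLt
  have hN2 : 2 ≤ N := by omega
  set N' := N - 2 with hN'
  have hN'lt : N' < N := by omega
  -- the order embedding of Fin N' onto the complement of {0, m}
  set g : Fin N' → Fin N := fun p =>
    if (p : ℕ) + 1 < (m : ℕ) then ⟨(p : ℕ) + 1, by have := p.isLt; omega⟩
    else ⟨(p : ℕ) + 2, by have := p.isLt; omega⟩ with hgdef
  have hgval : ∀ p : Fin N',
      (g p : ℕ) = if (p : ℕ) + 1 < (m : ℕ) then (p : ℕ) + 1 else (p : ℕ) + 2 := by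
    intro p
    simp only [hgdef]
    split_ifs <;> rfl
  have hgne0 : ∀ p, g p ≠ 0 := by
    intro p h
    have := congrArg Fin.val h
    rw [hgval p, hval0] at this
    split_ifs at this <;> omega
  have hgnem : ∀ p, g p ≠ m := by
    intro p h
    have := congrArg Fin.val h
    rw [hgval p] at this
    split_ifs at this <;> omega
  have hginj : Function.Injective g := by
    intro p q h
    have := congrArg Fin.val h
    rw [hgval p, hgval q] at this
    apply Fin.ext
    split_ifs at this <;> omega
  have hglt : ∀ p q, g p < g q ↔ p < q := by
    intro p q
    rw [Fin.lt_def, Fin.lt_def, hgval p, hgval q]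
    split_ifs <;> omega
  have hgsurj : ∀ i : Fin N, i ≠ 0 → i ≠ m → ∃ p : Fin N', g p = i := by
    intro i hi0 him
    have hi0' : (i : ℕ) ≠ 0 := fun h => hi0 (Fin.ext (by rw [h, hval0]))
    have him' : (i : ℕ) ≠ (m : ℕ) := fun h => him (Fin.ext h)
    have hilt := i.isLt
    refine ⟨⟨if (i : ℕ) < (m : ℕ) then (i : ℕ) - 1 else (i : ℕ) - 2, by split_ifs <;> omega⟩, ?_⟩
    apply Fin.ext
    rw [hgval]
    simp only [Fin.val_mk]
    split_ifs <;> omega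
  have htri : ∀ i : Fin N, i = 0 ∨ i = m ∨ ∃ p, g p = i := by
    intro i
    by_cases h0 : i = 0
    · exact Or.inl h0
    by_cases hmm : i = m
    · exact Or.inr (Or.inl hmm)
    exact Or.inr (Or.inr (hgsurj i h0 hmm))
  -- the inclusion matrix
  set P : Matrix (Fin N) (Fin N') k := Matrix.of (fun i p => if i = g p then 1 else 0) with hP
  -- entry lemmas
  have hgeq : ∀ p q : Fin N', (g p = g q) = (p = q) := by
    intro p q
    exact propext ⟨fun h => hginj h, fun h => h ▸ rfl⟩
  have hPtyP : ∀ (M : Matrix (Fin N) (Fin N) k) (p q : Fin N'),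
      (Pᵀ * M * P) p q = M (g p) (g q) := by
    intro M p q
    rw [Matrix.mul_apply]
    simp only [hP, Matrix.of_apply]
    rw [mul_ite_sum (fun s => (Pᵀ * M) p s) (g q)]
    rw [Matrix.mul_apply]
    simp only [Matrix.transpose_apply, hP, Matrix.of_apply]
    rw [sum_ite_mul (fun r => M r (g q)) (g p)]
  have hC : ∀ (Nm : Matrix (Fin N') (Fin N') k) (p q : Fin N'),
      (P * Nm * Pᵀ) (g p) (g q) = Nm p q := by
    intro Nm p q
    rw [Matrix.mul_apply]
    simp only [Matrix.transpose_apply, hP, Matrix.of_apply, hgeq]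
    rw [mul_ite_sum' (fun s => (P * Nm) (g p) s) q]
    rw [Matrix.mul_apply]
    simp only [hP, Matrix.of_apply, hgeq]
    rw [sum_ite_mul' (fun r => Nm r q) p]
  have hC0r : ∀ (Nm : Matrix (Fin N') (Fin N') k) (i j : Fin N), (∀ p, g p ≠ i) →
      (P * Nm * Pᵀ) i j = 0 := by
    intro Nm i j hi
    rw [Matrix.mul_apply]
    apply Finset.sum_eq_zero
    intro s _
    have h0 : (P * Nm) i s = 0 := by
      rw [Matrix.mul_apply]
      apply Finset.sum_eq_zero
      intro r _
      simp only [hP, Matrix.of_apply]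
      rw [if_neg (fun h => hi r h.symm), zero_mul]
    rw [h0, zero_mul]
  have hC0c : ∀ (Nm : Matrix (Fin N') (Fin N') k) (i j : Fin N), (∀ q, g q ≠ j) →
      (P * Nm * Pᵀ) i j = 0 := by
    intro Nm i j hj
    rw [Matrix.mul_apply]
    apply Finset.sum_eq_zero
    intro s _
    simp only [Matrix.transpose_apply, hP, Matrix.of_apply]
    rw [if_neg (fun h => hj s h.symm), mul_zero]
  -- the compressed matrix
  set z : Matrix (Fin N') (Fin N') k := y.submatrix g g with hz
  have h3 : Pᵀ * y * P = z := by
    ext p q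
    rw [hPtyP]
    rfl
  have hzskew : zᵀ = -z := by
    ext p q
    simp only [hz, Matrix.transpose_apply, Matrix.neg_apply, Matrix.submatrix_apply]
    exact skew_apply hys (g p) (g q)
  have hzu : IsUnit z.det := by
    apply isUnit_det_of_mulVec
    intro w hw
    set wt : Fin N → k := fun i => ∑ p, (if i = g p then w p else 0) with hwt
    have hwtg : ∀ p, wt (g p) = w p := by
      intro p
      simp only [hwt, hgeq]
      rw [Finset.sum_ite_eq]
      simp
    have hymul : y.mulVec wt = 0 := by
      funext i
      simp only [Matrix.mulVec, dotProduct, hwt, Pi.zero_apply, Finset.mul_sum,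
        mul_ite, mul_zero]
      rw [Finset.sum_comm]
      have hin : ∀ p, (∑ j, if j = g p then y i j * w p else 0) = y i (g p) * w p := by
        intro p
        rw [Finset.sum_ite_eq']
        simp
      rw [Finset.sum_congr rfl (fun p _ => hin p)]
      rcases htri i with rfl | rfl | ⟨q, rfl⟩
      · apply Finset.sum_eq_zero
        intro p _
        rw [hy0 (g p), if_neg (hgnem p), zero_mul]
      · apply Finset.sum_eq_zero
        intro p _
        rw [hym (g p), if_neg (hgne0 p), zero_mul]
      · have := congrFun hw q
        simpa [Matrix.mulVec, dotProduct, hz, Matrix.submatrix_apply] using this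
    have hwt0 := mulVec_eq_zero_of y hyu wt hymul
    funext p
    rw [← hwtg p, hwt0]
    rfl
  -- induction
  obtain ⟨σ', hσ'c⟩ := IH N' hN'lt z hzu hzskew
  obtain ⟨b', hb'u, hb'l, hb'e⟩ := hσ'c
  -- the diagonal part
  set d : Fin N → k := fun i => if i = 0 ∨ i = m then 1 else 0 with hd
  set A : Matrix (Fin N) (Fin N) k := Matrix.diagonal d with hA
  have hd0 : d 0 = 1 := by simp [hd]
  have hdm : d m = 1 := by simp [hd]
  have hdg : ∀ p, d (g p) = 0 := by
    intro p
    simp only [hd]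
    rw [if_neg]
    push_neg
    exact ⟨hgne0 p, hgnem p⟩
  set B : Matrix (Fin N) (Fin N) k := A + P * b' * Pᵀ with hB
  have hBt : Bᵀ = A + P * b'ᵀ * Pᵀ := by
    rw [hB, Matrix.transpose_add, hA, Matrix.diagonal_transpose, Matrix.transpose_mul,
      Matrix.transpose_mul, Matrix.transpose_transpose]
    simp only [Matrix.mul_assoc]
  -- vanishing lemmas
  have h1 : A * y * P = 0 := by
    ext i q
    rw [Matrix.mul_apply]
    simp only [hP, Matrix.of_apply]
    rw [mul_ite_sum (fun s => (A * y) i s) (g q)]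
    rw [hA, Matrix.diagonal_mul]
    rcases htri i with rfl | rfl | ⟨p, rfl⟩
    · rw [hy0 (g q), if_neg (hgnem q)]
      simp
    · rw [hym (g q), if_neg (hgne0 q)]
      simp
    · rw [hdg p, zero_mul]
      simp
  have h2' : Pᵀ * y * A = 0 := by
    ext p j
    rw [hA, Matrix.mul_diagonal]
    rw [Matrix.mul_apply]
    simp only [Matrix.transpose_apply, hP, Matrix.of_apply]
    rw [sum_ite_mul (fun r => y r j) (g p)]
    rcases htri j with rfl | rfl | ⟨q, rfl⟩
    · rw [hyc0 (g p), if_neg (hgnem p)]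
      simp
    · rw [hycm (g p), if_neg (hgne0 p)]
      simp
    · rw [hdg q, mul_zero]
      simp
  have hkey : B * y * Bᵀ = A * y * A + P * (b' * z * b'ᵀ) * Pᵀ := by
    rw [hBt]
    conv_lhs => rw [hB]
    rw [Matrix.add_mul, Matrix.add_mul, Matrix.mul_add, Matrix.mul_add]
    have e2 : A * y * (P * b'ᵀ * Pᵀ) = (A * y * P) * (b'ᵀ * Pᵀ) := by
      simp only [Matrix.mul_assoc]
    have e3 : (P * b' * Pᵀ) * y * A = (P * b') * (Pᵀ * y * A) := by
      simp only [Matrix.mul_assoc]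
    have e4 : (P * b' * Pᵀ) * y * (P * b'ᵀ * Pᵀ) = (P * b') * ((Pᵀ * y * P) * (b'ᵀ * Pᵀ)) := by
      simp only [Matrix.mul_assoc]
    rw [e2, e3, e4, h1, h2', h3, Matrix.zero_mul, Matrix.mul_zero]
    have e5 : (P * b') * (z * (b'ᵀ * Pᵀ)) = P * (b' * z * b'ᵀ) * Pᵀ := by
      simp only [Matrix.mul_assoc]
    rw [← e5]
    simp only [Matrix.mul_assoc]
    abel
  -- B is lower triangular
  have hBl : LTm B := by
    intro i j hij
    have hd' : A i j = 0 := by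
      rw [hA]
      exact Matrix.diagonal_apply_ne d hij.ne
    rw [hB, Matrix.add_apply, hd', zero_add]
    rcases htri i with rfl | rfl | ⟨p, rfl⟩
    · exact hC0r b' _ _ hgne0
    · exact hC0r b' _ _ hgnem
    rcases htri j with rfl | rfl | ⟨q, rfl⟩
    · exfalso
      rw [Fin.lt_def, hval0] at hij
      omega
    · exact hC0c b' _ _ hgnem
    · rw [hC b' p q]
      exact hb'l p q ((hglt p q).mp hij)
  -- B is invertible
  -- entry lemmas for B
  have hB0row : ∀ j, B 0 j = if (0 : Fin N) = j then 1 else 0 := by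
    intro j
    rw [hB, Matrix.add_apply, hC0r b' _ _ hgne0, add_zero, hA, Matrix.diagonal_apply]
    rcases eq_or_ne (0 : Fin N) j with rfl | h
    · rw [if_pos rfl, if_pos rfl, hd0]
    · rw [if_neg h, if_neg h]
  have hBmrow : ∀ j, B m j = if m = j then 1 else 0 := by
    intro j
    rw [hB, Matrix.add_apply, hC0r b' _ _ hgnem, add_zero, hA, Matrix.diagonal_apply]
    rcases eq_or_ne m j with rfl | h
    · rw [if_pos rfl, if_pos rfl, hdm]
    · rw [if_neg h, if_neg h]
  have hBgrow : ∀ p j, B (g p) j = (P * b' * Pᵀ) (g p) j := by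
    intro p j
    rw [hB, Matrix.add_apply, hA, Matrix.diagonal_apply]
    rcases eq_or_ne (g p) j with rfl | h
    · rw [if_pos rfl, hdg p, zero_add]
    · rw [if_neg h, zero_add]
  -- B is invertible
  have hBu : IsUnit B.det := by
    apply isUnit_det_of_mulVec
    intro w hw
    have hrow : ∀ i, (B.mulVec w) i = 0 := fun i => congrFun hw i
    have h0w : w 0 = 0 := by
      have e : (B.mulVec w) 0 = w 0 := by
        simp only [Matrix.mulVec, dotProduct]
        rw [Finset.sum_congr rfl fun j _ => by rw [hB0row j]]
        exact sum_ite_mul' w 0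
      have h := hrow 0
      rw [e] at h
      exact h
    have hmw : w m = 0 := by
      have e : (B.mulVec w) m = w m := by
        simp only [Matrix.mulVec, dotProduct]
        rw [Finset.sum_congr rfl fun j _ => by rw [hBmrow j]]
        exact sum_ite_mul' w m
      have h := hrow m
      rw [e] at h
      exact h
    have hwg : b'.mulVec (fun q => w (g q)) = 0 := by
      funext p
      have hvan : ∀ i, (∀ p', g p' ≠ i) → (P * b' * Pᵀ) (g p) i * w i = 0 := by
        intro i hi
        rw [hC0c b' _ _ hi, zero_mul]
      have e : (B.mulVec w) (g p) = ∑ q, b' p q * w (g q) := by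
        simp only [Matrix.mulVec, dotProduct]
        rw [Finset.sum_congr rfl fun j _ => by rw [hBgrow p j]]
        rw [sum_eq_sum_comp g hginj _ hvan]
        refine Finset.sum_congr rfl fun q _ => ?_
        show (P * b' * Pᵀ) (g p) (g q) * w (g q) = b' p q * w (g q)
        rw [hC b' p q]
      have h := hrow (g p)
      rw [e] at h
      simpa [Matrix.mulVec, dotProduct] using h
    have hwg0 := mulVec_eq_zero_of b' hb'u _ hwg
    funext i
    rcases htri i with rfl | rfl | ⟨p, rfl⟩
    · exact h0w
    · exact hmw
    · exact congrFun hwg0 p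
  -- the permutation
  set gemb : Fin N' ↪ Fin N := ⟨g, hginj⟩ with hgemb
  have hrm : m ∉ Set.range ⇑gemb := by
    rintro ⟨p, hp⟩
    exact hgnem p hp
  have hr0 : (0 : Fin N) ∉ Set.range ⇑gemb := by
    rintro ⟨p, hp⟩
    exact hgne0 p hp
  set σ : Equiv.Perm (Fin N) := (Equiv.swap (0 : Fin N) m).trans (σ'.viaEmbedding gemb)
    with hσdef
  have hσ0 : σ 0 = m := by
    simp only [hσdef, Equiv.trans_apply, Equiv.swap_apply_left]
    exact σ'.viaEmbedding_apply_of_notMem gemb m hrm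
  have hσm : σ m = 0 := by
    simp only [hσdef, Equiv.trans_apply, Equiv.swap_apply_right]
    exact σ'.viaEmbedding_apply_of_notMem gemb 0 hr0
  have hσg : ∀ p, σ (g p) = g (σ' p) := by
    intro p
    simp only [hσdef, Equiv.trans_apply]
    rw [Equiv.swap_apply_of_ne_of_ne (hgne0 p) (hgnem p)]
    exact σ'.viaEmbedding_apply gemb p
  have hnotlt0 : ∀ p : Fin N, ¬ p < 0 := by
    intro p
    rw [Fin.lt_def, hval0]
    omega
  have hAyA : ∀ i j, (A * y * A) i j = d i * y i j * d j := by
    intro i j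
    rw [hA, Matrix.mul_diagonal, Matrix.diagonal_mul]
  have hfin : B * y * Bᵀ = canon σ := by
    rw [hkey, ← hb'e]
    ext i j
    rw [Matrix.add_apply, canon_apply, hAyA]
    rcases htri i with rfl | hi | ⟨p, rfl⟩
    · rcases htri j with rfl | hj | ⟨q, rfl⟩
      · rw [hC0r (canon σ') _ _ hgne0, add_zero, hd0, hy0 0, if_neg hm0.ne, hσ0,
          if_neg hm0.ne']
        norm_num
      · rw [hj, hC0r (canon σ') _ _ hgne0, add_zero, hd0, hdm, hy0 m, if_pos rfl, hσ0,
          if_pos rfl, if_pos hm0]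
        norm_num
      · rw [hC0r (canon σ') _ _ hgne0, add_zero, hdg q, hσ0,
          if_neg (fun h => hgnem q h.symm)]
        norm_num
    · rw [hi]
      rcases htri j with rfl | hj | ⟨q, rfl⟩
      · rw [hC0r (canon σ') _ _ hgnem, add_zero, hdm, hd0, hym 0, if_pos rfl, hσm,
          if_pos rfl, if_neg (hnotlt0 m)]
        norm_num
      · rw [hj, hC0r (canon σ') _ _ hgnem, add_zero, hdm, hym m, if_neg hm0.ne', hσm,
          if_neg hm0.ne]
        norm_num
      · rw [hC0r (canon σ') _ _ hgnem, add_zero, hdg q, hσm,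
          if_neg (fun h => hgne0 q h.symm)]
        norm_num
    · rcases htri j with rfl | hj | ⟨q, rfl⟩
      · rw [hC0c (canon σ') _ _ hgne0, add_zero, hdg p, hσg p, if_neg (hgne0 (σ' p))]
        norm_num
      · rw [hj, hC0c (canon σ') _ _ hgnem, add_zero, hdg p, hσg p, if_neg (hgnem (σ' p))]
        norm_num
      · rw [hC (canon σ') p q, canon_apply, hdg p, hσg p, zero_mul, zero_mul, zero_add]
        simp only [hgeq, hglt]
  exact ⟨σ, hcxy.trans ⟨B, hBu, hBl, hfin.symm⟩⟩


end Stmt7Aux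

/-- over an algebraically closed field of characteristic `≠ 2`, two
invertible skew-symmetric `2d × 2d` matrices `x, y` satisfy `y = b·x·bᵀ` for some invertible
lower-triangular `b` if and only if all their northwest ranks `r_{i,j}` agree. -/
theorem stmt7 (k : Type) [Field k] [IsAlgClosed k] (hchar : (2 : k) ≠ 0)
    (d : ℕ) (hd : 1 ≤ d)
    (x y : Matrix (Fin (2 * d)) (Fin (2 * d)) k)
    (hx : IsUnit x.det) (hxs : xᵀ = -x) (hy : IsUnit y.det) (hys : yᵀ = -y) :
    (∃ b : Matrix (Fin (2 * d)) (Fin (2 * d)) k,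
        IsUnit b.det ∧ (∀ i j : Fin (2 * d), i < j → b i j = 0) ∧ y = b * x * bᵀ) ↔
    (∀ (i j : ℕ) (hi : i ≤ 2 * d) (hj : j ≤ 2 * d), 1 ≤ i → 1 ≤ j →
        nwRank x i j hi hj = nwRank y i j hi hj) := by
  constructor
  · rintro ⟨b, hb, hbl, rfl⟩ i j hi hj _ _
    exact Stmt7Aux.nwRank_eq_of_cong ⟨b, hb, hbl, rfl⟩ i j hi hj
  · intro hr
    obtain ⟨σ, hσ⟩ := Stmt7Aux.exists_canon hchar (2 * d) x hx hxs
    obtain ⟨τ, hτ⟩ := Stmt7Aux.exists_canon hchar (2 * d) y hy hys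
    have hst : σ = τ := by
      apply Stmt7Aux.perm_eq_of_counts
      intro i j hi hj
      rcases Nat.eq_zero_or_pos i with rfl | hi1
      · simp
      rcases Nat.eq_zero_or_pos j with rfl | hj1
      · simp
      rw [← Stmt7Aux.nwRank_canon (k := k) σ hi hj, ← Stmt7Aux.nwRank_canon (k := k) τ hi hj,
        ← Stmt7Aux.nwRank_eq_of_cong hσ i j hi hj, ← Stmt7Aux.nwRank_eq_of_cong hτ i j hi hj]
      exact hr i j hi hj hi1 hj1
    have hτ' : Stmt7Aux.Cong y (Stmt7Aux.canon σ) := by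
      rw [hst]
      exact hτ
    exact hσ.trans hτ'.symm
end

section
/- Let k be an algebraically closed field of characteristic not equal to 2 and let d ≥ 1. For every invertible symmetric 2d×2d matrix M over k there exists a unique involution w ∈ S_{2d} (i.e. w² = identity) such that M = b · P_w · bᵀ for some invertible lower-triangular 2d×2d matrix b, where P_w is the permutation matrix of w. (Note P_w is symmetric precisely because w is an involution.) -/
open Matrix Finset

variable {k : Type} [Field k]


lemma perm_apply {ι : Type} [DecidableEq ι] (w : Equiv.Perm ι) (i j : ι) :
    (w.permMatrix k) i j = if w i = j then 1 else 0 := by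
  simp [Equiv.Perm.permMatrix, PEquiv.toMatrix_apply, Equiv.toPEquiv_apply, eq_comm]

lemma mul_perm_mul_transpose_apply {ι : Type} [Fintype ι] [DecidableEq ι]
    (b : Matrix ι ι k) (w : Equiv.Perm ι) (p q : ι) :
    (b * w.permMatrix k * bᵀ) p q = ∑ r, b p r * b q (w r) := by
  rw [Matrix.mul_assoc, mul_apply]
  refine Finset.sum_congr rfl fun r _ => ?_
  rw [mul_apply]
  simp only [perm_apply, transpose_apply, ite_mul, one_mul, zero_mul]
  rw [Finset.sum_ite_eq]
  simp

def elimM {ι : Type} [DecidableEq ι] (u : ι → k) (e : ι) : Matrix ι ι k :=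
  Matrix.of fun p q => (if p = q then 1 else 0) + u p * (if q = e then 1 else 0)

lemma elimM_mul_apply {ι : Type} [Fintype ι] [DecidableEq ι] (u : ι → k) (e : ι)
    (A : Matrix ι ι k) (p q : ι) : (elimM u e * A) p q = A p q + u p * A e q := by
  rw [mul_apply]
  simp only [elimM, Matrix.of_apply, add_mul, ite_mul, one_mul, zero_mul, mul_assoc]
  rw [Finset.sum_add_distrib, Finset.sum_ite_eq, ← Finset.mul_sum]
  congr 1
  · simp
  · congr 1
    rw [Finset.sum_ite_eq']
    simp

lemma mul_elimM_transpose_apply {ι : Type} [Fintype ι] [DecidableEq ι] (u : ι → k) (e : ι)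
    (A : Matrix ι ι k) (p q : ι) : (A * (elimM u e)ᵀ) p q = A p q + u q * A p e := by
  rw [mul_apply]
  simp only [elimM, transpose_apply, Matrix.of_apply, mul_add, mul_ite, mul_one, mul_zero]
  rw [Finset.sum_add_distrib, Finset.sum_ite_eq']
  simp only [mem_univ, if_true]
  rw [Finset.sum_ite_eq]
  simp [mul_comm]

lemma elimM_congr_apply {ι : Type} [Fintype ι] [DecidableEq ι] (u : ι → k) (e : ι)
    (A : Matrix ι ι k) (p q : ι) :
    (elimM u e * A * (elimM u e)ᵀ) p q
      = A p q + u p * A e q + u q * A p e + u p * u q * A e e := by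
  rw [mul_elimM_transpose_apply, elimM_mul_apply, elimM_mul_apply]; ring


lemma elimM_mul_elimM {ι : Type} [Fintype ι] [DecidableEq ι] (u : ι → k) (e : ι)
    (h : u e = 0) : elimM (-u) e * elimM u e = 1 := by
  ext p q
  rw [elimM_mul_apply]
  simp only [elimM, Matrix.of_apply, Pi.neg_apply, h, mul_zero, add_zero, one_apply]
  by_cases hq : q = e
  · subst hq
    by_cases hpq : p = q <;> simp [hpq] <;> ring
  · by_cases hpq : p = q <;>
      [skip; skip] <;>
      · simp [hpq, hq]
        intro he
        exact absurd he.symm hq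

lemma elimM_lt {ι : Type} [LinearOrder ι] (u : ι → k) (e : ι) (h : ∀ p, p ≤ e → u p = 0) :
    ∀ i j : ι, i < j → elimM u e i j = 0 := by
  intro i j hij
  simp only [elimM, Matrix.of_apply, if_neg (ne_of_lt hij)]
  by_cases hj : j = e
  · rw [h i (le_of_lt (hij.trans_le (le_of_eq hj)))]; simp
  · simp [hj]

lemma elimM_diag {ι : Type} [DecidableEq ι] (u : ι → k) (e : ι) (h : u e = 0) (i : ι) :
    elimM u e i i = 1 := by
  simp only [elimM, Matrix.of_apply, if_pos rfl]
  by_cases hi : i = e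
  · subst hi; simp [h]
  · simp [hi]

lemma lt_mul {ι : Type} [Fintype ι] [LinearOrder ι] {A B : Matrix ι ι k}
    (hA : ∀ i j : ι, i < j → A i j = 0) (hB : ∀ i j : ι, i < j → B i j = 0) :
    ∀ i j : ι, i < j → (A * B) i j = 0 := by
  intro i j hij
  rw [mul_apply]
  apply Finset.sum_eq_zero
  intro r _
  rcases le_or_gt r i with h | h
  · rw [hB r j (h.trans_lt hij), mul_zero]
  · rw [hA i r h, zero_mul]

lemma diag_mul {ι : Type} [Fintype ι] [LinearOrder ι] {A B : Matrix ι ι k}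
    (hA : ∀ i j : ι, i < j → A i j = 0) (hB : ∀ i j : ι, i < j → B i j = 0) (i : ι) :
    (A * B) i i = A i i * B i i := by
  rw [mul_apply]
  apply Finset.sum_eq_single
  · intro r _ hr
    rcases lt_or_gt_of_ne hr with h | h
    · rw [hB r i h, mul_zero]
    · rw [hA i r h, zero_mul]
  · simp

lemma inj_of_ker {ι : Type} [Fintype ι] {A : Matrix ι ι k}
    (h : ∀ v, A.mulVec v = 0 → v = 0) : Function.Injective A.mulVec := by
  intro x y hxy
  have h2 : x - y = 0 := h _ (by rw [mulVec_sub, hxy, sub_self])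
  exact sub_eq_zero.mp h2

lemma mulVec_congr_inj {ι : Type} [Fintype ι] [DecidableEq ι] {L A : Matrix ι ι k} {K : Matrix ι ι k}
    (hKL : K * L = 1) (hLK : L * K = 1) (hA : Function.Injective A.mulVec) :
    Function.Injective (L * A * Lᵀ).mulVec := by
  have hL : Function.Injective L.mulVec := by
    intro x y hxy
    have : (K * L).mulVec x = (K * L).mulVec y := by
      rw [← Matrix.mulVec_mulVec, ← Matrix.mulVec_mulVec, hxy]
    simpa [hKL, Matrix.one_mulVec] using this
  have hLT : Function.Injective (Lᵀ).mulVec := by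
    intro x y hxy
    have : (Kᵀ * Lᵀ).mulVec x = (Kᵀ * Lᵀ).mulVec y := by
      rw [← Matrix.mulVec_mulVec, ← Matrix.mulVec_mulVec, hxy]
    rw [← Matrix.transpose_mul, hLK] at this
    simpa [Matrix.transpose_one, Matrix.one_mulVec] using this
  intro x y hxy
  apply hLT; apply hA; apply hL
  have : (L * A * Lᵀ).mulVec x = (L * A * Lᵀ).mulVec y := hxy
  rw [Matrix.mul_assoc] at this
  simpa [← Matrix.mulVec_mulVec] using this

lemma congr_inv {ι : Type} [Fintype ι] [DecidableEq ι] (K L A : Matrix ι ι k)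
    (h : K * L = 1) : K * (L * A * Lᵀ) * Kᵀ = A := by
  have : K * (L * A * Lᵀ) * Kᵀ = (K * L) * A * (K * L)ᵀ := by
    rw [Matrix.transpose_mul]; simp only [Matrix.mul_assoc]
  rw [this, h]; simp

lemma sum_split_one {k : Type} [AddCommMonoid k] {ι : Type} [Fintype ι] [DecidableEq ι]
    (a : ι) (f : ι → k) :
    ∑ x, f x = f a + ∑ x : {y : ι // y ≠ a}, f ↑x := by
  rw [← Finset.add_sum_erase univ f (mem_univ a)]
  congr 1
  exact Finset.sum_subtype _ (fun x => by simp) f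

lemma sum_split_two {k : Type} [AddCommMonoid k] {ι : Type} [Fintype ι] [DecidableEq ι]
    {a j : ι} (hne : a ≠ j) (f : ι → k) :
    ∑ x, f x = f a + f j + ∑ x : {y : ι // y ≠ a ∧ y ≠ j}, f ↑x := by
  rw [← Finset.add_sum_erase univ f (mem_univ a), add_assoc,
    ← Finset.add_sum_erase (univ.erase a) f (a := j) (Finset.mem_erase.mpr ⟨Ne.symm hne, mem_univ j⟩)]
  congr 2
  exact Finset.sum_subtype _ (fun x => by simp [and_comm, and_assoc]) f

theorem main_exists (hchar : (2:k) ≠ 0) (hsq : ∀ x : k, ∃ z : k, z * z = x) :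
    ∀ (n : ℕ) (ι : Type) (_ : Fintype ι) (_ : LinearOrder ι), Fintype.card ι ≤ n →
    ∀ M : Matrix ι ι k, Mᵀ = M → Function.Injective M.mulVec →
    ∃ w : Equiv.Perm ι, w * w = 1 ∧ ∃ b : Matrix ι ι k,
      (∀ i j : ι, i < j → b i j = 0) ∧ (∀ i : ι, b i i ≠ 0) ∧
      M = b * w.permMatrix k * bᵀ := by
  intro n
  induction n with
  | zero =>
    intro ι _ _ hcard M hsym hinj
    have hem : IsEmpty ι := by
      rw [Nat.le_zero] at hcard
      exact Fintype.card_eq_zero_iff.mp hcard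
    refine ⟨1, by simp, 1, fun i j _ => (hem.false i).elim, fun i => (hem.false i).elim, ?_⟩
    ext i j; exact (hem.false i).elim
  | succ n ih =>
    intro ι _ _ hcard M hsym hinj
    classical
    by_cases hem : IsEmpty ι
    · refine ⟨1, by simp, 1, fun i j _ => (hem.false i).elim, fun i => (hem.false i).elim, ?_⟩
      ext i j; exact (hem.false i).elim
    rw [not_isEmpty_iff] at hem
    obtain ⟨a, ha⟩ : ∃ a : ι, ∀ x, a ≤ x :=
      ⟨(univ : Finset ι).min' univ_nonempty, fun x => Finset.min'_le _ x (mem_univ x)⟩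
    have hsymm : ∀ p q : ι, M p q = M q p := fun p q => by
      conv_lhs => rw [← hsym, Matrix.transpose_apply]
    by_cases hMaa : M a a ≠ 0
    · -- CASE 1
      set u : ι → k := fun p => if p = a then 0 else -(M p a) / (M a a) with hu
      have hua : u a = 0 := by simp [hu]
      set L : Matrix ι ι k := elimM u a with hL
      set M₁ : Matrix ι ι k := L * M * Lᵀ with hM₁def
      have hM₁ : ∀ p q, M₁ p q = M p q + u p * M a q + u q * M p a + u p * u q * M a a :=
        fun p q => elimM_congr_apply u a M p q
      have hrow : ∀ q, q ≠ a → M₁ a q = 0 := by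
        intro q hq
        rw [hM₁, hua]
        simp only [hu, if_neg hq, zero_mul, add_zero, mul_zero, zero_add]
        rw [div_mul_cancel₀ _ hMaa, hsymm q a]
        ring
      have hcol : ∀ p, p ≠ a → M₁ p a = 0 := by
        intro p hp
        rw [hM₁, hua]
        simp only [hu, if_neg hp, mul_zero, add_zero]
        rw [div_mul_cancel₀ _ hMaa]
        ring
      have hM₁aa : M₁ a a = M a a := by rw [hM₁, hua]; ring
      have hM₁sym : M₁ᵀ = M₁ := by
        rw [hM₁def, Matrix.transpose_mul, Matrix.transpose_mul, Matrix.transpose_transpose,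
          hsym, Matrix.mul_assoc]
      have hKL : elimM (-u) a * L = 1 := elimM_mul_elimM u a hua
      have hLK : L * elimM (-u) a = 1 := by
        have := elimM_mul_elimM (-u) a (by simp [hua])
        rwa [neg_neg] at this
      have hM₁inj : Function.Injective M₁.mulVec := mulVec_congr_inj hKL hLK hinj
      have hcard' : Fintype.card {y : ι // y ≠ a} ≤ n := by
        have h1 : Fintype.card {y : ι // y ≠ a} < Fintype.card ι :=
          Fintype.card_subtype_lt (x := a) (by simp)
        omega
      set N : Matrix {y : ι // y ≠ a} {y : ι // y ≠ a} k :=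
        Matrix.of (fun p q => M₁ p.1 q.1) with hN
      have hM₁symm : ∀ p q : ι, M₁ p q = M₁ q p := fun p q => by
        conv_lhs => rw [← hM₁sym, Matrix.transpose_apply]
      have hNsym : Nᵀ = N := by
        ext p q; exact hM₁symm q.1 p.1
      have hNinj : Function.Injective N.mulVec := by
        apply inj_of_ker
        intro y hy
        set y' : ι → k := fun x => if h : x ≠ a then y ⟨x, h⟩ else 0 with hy'
        have h0 : M₁.mulVec y' = 0 := by
          funext p
          show ∑ x, M₁ p x * y' x = 0
          rw [sum_split_one a]
          have hya : y' a = 0 := by simp [hy']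
          by_cases hp : p = a
          · subst hp
            rw [hya, mul_zero, zero_add]
            apply Finset.sum_eq_zero
            intro x _
            rw [hrow x.1 x.2, zero_mul]
          · rw [hya, mul_zero, zero_add]
            have : ∀ x : {y : ι // y ≠ a}, M₁ p x.1 * y' x.1 = N ⟨p, hp⟩ x * y x := by
              intro x
              simp only [hy', dif_pos x.2, hN, Matrix.of_apply]
            rw [Finset.sum_congr rfl (fun x _ => this x)]
            exact congrFun hy ⟨p, hp⟩
        have hy0 : y' = 0 := hM₁inj (by rw [h0, Matrix.mulVec_zero])
        funext x
        have h2 : (if h : (x : ι) ≠ a then y ⟨x, h⟩ else 0) = 0 := congrFun hy0 x.1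
        rw [dif_pos x.2] at h2
        exact h2
      obtain ⟨w', hw', b', hblt', hbdiag', hbeq'⟩ :=
        ih {y : ι // y ≠ a} _ _ hcard' N hNsym hNinj
      obtain ⟨s, hs⟩ := hsq (M a a)
      have hs0 : s ≠ 0 := fun h => hMaa (by rw [← hs, h, mul_zero])
      have hwinv : ∀ z, w' (w' z) = z := by
        intro z
        calc w' (w' z) = (w' * w') z := rfl
        _ = z := by rw [hw']; rfl
      set f : ι → ι := fun x => if h : x ≠ a then (w' ⟨x, h⟩ : ι) else x with hf
      have hfa : f a = a := by simp [hf]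
      have hfne : ∀ (x : ι) (h : x ≠ a), f x = (w' ⟨x, h⟩ : ι) := fun x h => dif_pos h
      have hfinv : Function.Involutive f := by
        intro x
        by_cases hx : x = a
        · subst hx; rw [hfa, hfa]
        · rw [hfne x hx]
          have h1 : (w' ⟨x, hx⟩ : ι) ≠ a := (w' ⟨x, hx⟩).2
          rw [hfne _ h1, Subtype.coe_eta, hwinv]
      set w : Equiv.Perm ι := hfinv.toPerm with hw
      have hwapp : ∀ x, w x = f x := fun x => rfl
      have hww : w * w = 1 := Equiv.ext fun x => hfinv x
      set b : Matrix ι ι k := Matrix.of (fun p q =>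
        if hp : p ≠ a then (if hq : q ≠ a then b' ⟨p, hp⟩ ⟨q, hq⟩ else 0)
        else (if q = a then s else 0)) with hb
      have hbpa : ∀ p, b p a = if p = a then s else 0 := by
        intro p
        simp only [hb, Matrix.of_apply]
        by_cases hp : p = a
        · rw [dif_neg (not_not_intro hp)]; simp [hp]
        · rw [dif_pos hp, dif_neg (not_not_intro rfl), if_neg hp]
      have hbaa : b a a = s := by rw [hbpa, if_pos rfl]
      have hbaq : ∀ q, q ≠ a → b a q = 0 := by
        intro q hq
        simp only [hb, Matrix.of_apply]
        rw [dif_neg (not_not_intro rfl), if_neg hq]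
      have hbsub : ∀ (p q : {y : ι // y ≠ a}), b p.1 q.1 = b' p q := by
        intro p q
        simp only [hb, Matrix.of_apply]
        rw [dif_pos p.2, dif_pos q.2]
      have hM₁eq : M₁ = b * w.permMatrix k * bᵀ := by
        ext p q
        rw [mul_perm_mul_transpose_apply, sum_split_one a]
        have hwa : w a = a := hfa
        have hwsub : ∀ r : {y : ι // y ≠ a}, w r.1 = (w' r : ι) := by
          intro r; rw [hwapp, hfne r.1 r.2, Subtype.coe_eta]
        by_cases hp : p = a
        · rw [hp, hwa, hbpa, if_pos rfl, hbpa]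
          have hz : ∀ r : {y : ι // y ≠ a}, b a r.1 * b q (w r.1) = 0 := by
            intro r; rw [hbaq r.1 r.2, zero_mul]
          rw [Finset.sum_congr rfl (fun r _ => hz r), Finset.sum_const_zero, add_zero]
          by_cases hq : q = a
          · rw [hq, if_pos rfl, hM₁aa, hs]
          · rw [if_neg hq, mul_zero, hrow q hq]
        · by_cases hq : q = a
          · rw [hq, hwa, hbpa, if_neg hp, zero_mul, zero_add, hcol p hp]
            have hz : ∀ r : {y : ι // y ≠ a}, b p r.1 * b a (w r.1) = 0 := by
              intro r
              rw [hwsub r, hbaq _ (w' r).2, mul_zero]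
            rw [Finset.sum_congr rfl (fun r _ => hz r), Finset.sum_const_zero]
          · rw [hwa, hbpa, if_neg hp, zero_mul, zero_add]
            have hterm : ∀ r : {y : ι // y ≠ a},
                b p r.1 * b q (w r.1) = b' ⟨p, hp⟩ r * b' ⟨q, hq⟩ (w' r) := by
              intro r
              rw [hwsub r]
              have e1 : b p r.1 = b' ⟨p, hp⟩ r := hbsub ⟨p, hp⟩ r
              have e2 : b q ((w' r : ι)) = b' ⟨q, hq⟩ (w' r) := hbsub ⟨q, hq⟩ (w' r)
              rw [e1, e2]
            rw [Finset.sum_congr rfl (fun r _ => hterm r),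
              ← mul_perm_mul_transpose_apply b' w' ⟨p, hp⟩ ⟨q, hq⟩]
            exact congrFun (congrFun hbeq' ⟨p, hp⟩) ⟨q, hq⟩
      refine ⟨w, hww, elimM (-u) a * b, ?_, ?_, ?_⟩
      · apply lt_mul _ _
        · exact elimM_lt (-u) a (fun p hp => by
            have : p = a := le_antisymm hp (ha p)
            simp [this, hua])
        · intro i j hij
          by_cases hi : i = a
          · have hj2 : j ≠ a := fun h => by
              rw [hi, h] at hij; exact lt_irrefl a hij
            rw [hi]; exact hbaq j hj2
          · have hj : j ≠ a := fun h => by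
              subst h
              exact absurd (ha i) (not_le_of_gt hij)
            rw [show b i j = b' ⟨i, hi⟩ ⟨j, hj⟩ from hbsub ⟨i, hi⟩ ⟨j, hj⟩]
            exact hblt' ⟨i, hi⟩ ⟨j, hj⟩ (Subtype.mk_lt_mk.mpr hij)
      · intro i
        rw [diag_mul (elimM_lt (-u) a (fun p hp => by
            have : p = a := le_antisymm hp (ha p)
            simp [this, hua])) ?_ i]
        · rw [elimM_diag (-u) a (by simp [hua]), one_mul]
          by_cases hi : i = a
          · rw [hi, hbaa]; exact hs0
          · rw [show b i i = b' ⟨i, hi⟩ ⟨i, hi⟩ from hbsub ⟨i, hi⟩ ⟨i, hi⟩]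
            exact hbdiag' ⟨i, hi⟩
        · intro i j hij
          by_cases hi : i = a
          · have hj2 : j ≠ a := fun h => by
              rw [hi, h] at hij; exact lt_irrefl a hij
            rw [hi]; exact hbaq j hj2
          · have hj : j ≠ a := fun h => by
              subst h
              exact absurd (ha i) (not_le_of_gt hij)
            rw [show b i j = b' ⟨i, hi⟩ ⟨j, hj⟩ from hbsub ⟨i, hi⟩ ⟨j, hj⟩]
            exact hblt' ⟨i, hi⟩ ⟨j, hj⟩ (Subtype.mk_lt_mk.mpr hij)
      · have hMrec : M = elimM (-u) a * M₁ * (elimM (-u) a)ᵀ := by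
          rw [hM₁def]
          exact (congr_inv (elimM (-u) a) L M hKL).symm
        rw [hMrec, hM₁eq, Matrix.transpose_mul]
        simp only [Matrix.mul_assoc]
    · -- CASE 2
      have haa : M a a = 0 := not_not.mp hMaa
      have hrow_ne : ∃ x, M a x ≠ 0 := by
        by_contra hall
        push_neg at hall
        set v0 : ι → k := Pi.single a 1 with hv0
        have h1 : M.mulVec v0 = 0 := by
          funext p
          show ∑ x, M p x * v0 x = 0
          rw [Finset.sum_eq_single a]
          · rw [hv0, Pi.single_eq_same, mul_one, hsymm p a, hall p]
          · intro x _ hx; rw [hv0, Pi.single_eq_of_ne hx, mul_zero]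
          · intro h; exact absurd (mem_univ a) h
        have h2 := hinj (h1.trans (Matrix.mulVec_zero M).symm)
        have h3 := congrFun h2 a
        rw [hv0, Pi.single_eq_same] at h3
        exact one_ne_zero h3
      have hSne : (univ.filter (fun x => M a x ≠ 0)).Nonempty := by
        obtain ⟨x, hx⟩ := hrow_ne
        exact ⟨x, mem_filter.mpr ⟨mem_univ x, hx⟩⟩
      set j := (univ.filter (fun x => M a x ≠ 0)).min' hSne with hjdef
      have ht0 : M a j ≠ 0 :=
        (mem_filter.mp ((univ.filter (fun x => M a x ≠ 0)).min'_mem hSne)).2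
      have hjmin : ∀ x, M a x ≠ 0 → j ≤ x := fun x hx =>
        Finset.min'_le _ x (mem_filter.mpr ⟨mem_univ x, hx⟩)
      have hja : j ≠ a := fun h => ht0 (h ▸ haa)
      have han : a ≠ j := fun h => hja h.symm
      have haj : a < j := (ha j).lt_of_ne han
      have hminz : ∀ x, x < j → M a x = 0 := fun x hx => by
        by_contra h; exact absurd (hjmin x h) (not_le_of_gt hx)
      have hMja : M j a = M a j := hsymm j a
      set v : ι → k := fun p => if j < p then -(M p a) / (M a j) else 0 with hv
      have hvle : ∀ p, p ≤ j → v p = 0 := fun p hp => by simp [hv, not_lt.mpr hp]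
      have hvj : v j = 0 := hvle j le_rfl
      set L₁ : Matrix ι ι k := elimM v j with hL₁
      set M₁ : Matrix ι ι k := L₁ * M * L₁ᵀ with hM₁def
      have hM₁ : ∀ p q, M₁ p q = M p q + v p * M j q + v q * M p j + v p * v q * M j j :=
        fun p q => elimM_congr_apply v j M p q
      have hM₁sym : M₁ᵀ = M₁ := by
        rw [hM₁def, Matrix.transpose_mul, Matrix.transpose_mul, Matrix.transpose_transpose,
          hsym, Matrix.mul_assoc]
      have hM₁symm : ∀ p q : ι, M₁ p q = M₁ q p := fun p q => by
        conv_lhs => rw [← hM₁sym, Matrix.transpose_apply]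
      have hK₁L₁ : elimM (-v) j * L₁ = 1 := elimM_mul_elimM v j hvj
      have hL₁K₁ : L₁ * elimM (-v) j = 1 := by
        have := elimM_mul_elimM (-v) j (by simp [hvj])
        rwa [neg_neg] at this
      have hM₁inj : Function.Injective M₁.mulVec := mulVec_congr_inj hK₁L₁ hL₁K₁ hinj
      have hM₁row : ∀ q, M₁ a q = if q = j then M a j else 0 := by
        intro q
        rw [hM₁, hvle a (le_of_lt haj)]
        simp only [zero_mul, add_zero, zero_add]
        by_cases hq : q = j
        · rw [hq, if_pos rfl, hvj, zero_mul, add_zero]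
        · rw [if_neg hq]
          rcases lt_or_gt_of_ne hq with hlt | hgt
          · rw [hminz q hlt, hvle q (le_of_lt hlt), zero_mul, add_zero]
          · have : v q = -(M q a) / (M a j) := by simp [hv, hgt]
            rw [this, div_mul_cancel₀ _ ht0, hsymm q a]
            ring
      have hM₁col : ∀ p, M₁ p a = if p = j then M a j else 0 := fun p => by
        rw [hM₁symm p a, hM₁row p]
      have hM₁aa : M₁ a a = 0 := by rw [hM₁row a, if_neg han]
      set c : ι → k := fun p => if p = a then 0 else if p = j then -(M₁ j j) / (2 * M a j)
        else -(M₁ j p) / (M a j) with hc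
      have hca : c a = 0 := by simp [hc]
      have hcle : ∀ p, p ≤ a → c p = 0 := fun p hp => by
        rw [le_antisymm hp (ha p)]; exact hca
      set L₂ : Matrix ι ι k := elimM c a with hL₂
      set M₂ : Matrix ι ι k := L₂ * M₁ * L₂ᵀ with hM₂def
      have hM₂ : ∀ p q, M₂ p q = M₁ p q + c p * M₁ a q + c q * M₁ p a + c p * c q * M₁ a a :=
        fun p q => elimM_congr_apply c a M₁ p q
      have hM₂' : ∀ p q, M₂ p q = M₁ p q + c p * (if q = j then M a j else 0)
          + c q * (if p = j then M a j else 0) := by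
        intro p q
        rw [hM₂, hM₁row, hM₁col, hM₁aa]
        ring
      have hM₂sym : M₂ᵀ = M₂ := by
        rw [hM₂def, Matrix.transpose_mul, Matrix.transpose_mul, Matrix.transpose_transpose,
          hM₁sym, hM₁def]
        simp only [Matrix.mul_assoc]
      have hM₂symm : ∀ p q : ι, M₂ p q = M₂ q p := fun p q => by
        conv_lhs => rw [← hM₂sym, Matrix.transpose_apply]
      have hK₂L₂ : elimM (-c) a * L₂ = 1 := elimM_mul_elimM c a hca
      have hL₂K₂ : L₂ * elimM (-c) a = 1 := by
        have := elimM_mul_elimM (-c) a (by simp [hca])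
        rwa [neg_neg] at this
      have hM₂inj : Function.Injective M₂.mulVec := mulVec_congr_inj hK₂L₂ hL₂K₂ hM₁inj
      have hM₂row_a : ∀ q, M₂ a q = if q = j then M a j else 0 := by
        intro q
        rw [hM₂', hca, zero_mul, add_zero, if_neg han, mul_zero, add_zero]
        exact hM₁row q
      have hM₂col_a : ∀ p, M₂ p a = if p = j then M a j else 0 := fun p => by
        rw [hM₂symm p a, hM₂row_a p]
      have hcj : c j = -(M₁ j j) / (2 * M a j) := by
        rw [hc]; simp [hja]
      have h2t : (2:k) * M a j ≠ 0 := mul_ne_zero hchar ht0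
      have hM₂jj : M₂ j j = 0 := by
        rw [hM₂', if_pos rfl, hcj]
        field_simp
        ring
      have hM₂jq : ∀ q, q ≠ a → q ≠ j → M₂ j q = 0 := by
        intro q hqa hqj
        rw [hM₂', if_neg hqj, mul_zero, add_zero, if_pos rfl]
        have hcq : c q = -(M₁ j q) / (M a j) := by
          rw [hc]; simp only [if_neg hqa, if_neg hqj]
        rw [hcq, div_mul_cancel₀ _ ht0]
        ring
      have hM₂qj : ∀ q, q ≠ a → q ≠ j → M₂ q j = 0 := fun q h1 h2 => by
        rw [hM₂symm q j]; exact hM₂jq q h1 h2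
      have hcard'' : Fintype.card {y : ι // y ≠ a ∧ y ≠ j} ≤ n := by
        have h1 : Fintype.card {y : ι // y ≠ a ∧ y ≠ j} < Fintype.card ι :=
          Fintype.card_subtype_lt (x := a) (by simp)
        omega
      set N : Matrix {y : ι // y ≠ a ∧ y ≠ j} {y : ι // y ≠ a ∧ y ≠ j} k :=
        Matrix.of (fun p q => M₂ p.1 q.1) with hN
      have hNsym : Nᵀ = N := by
        ext p q; exact hM₂symm q.1 p.1
      have hNinj : Function.Injective N.mulVec := by
        apply inj_of_ker
        intro y hy
        set y' : ι → k := fun x => if h : x ≠ a ∧ x ≠ j then y ⟨x, h⟩ else 0 with hy'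
        have hya : y' a = 0 := by simp [hy']
        have hyj : y' j = 0 := by simp [hy']
        have h0 : M₂.mulVec y' = 0 := by
          funext p
          show ∑ x, M₂ p x * y' x = 0
          rw [sum_split_two han, hya, hyj, mul_zero, mul_zero, add_zero, zero_add]
          by_cases hpa : p = a
          · apply Finset.sum_eq_zero
            intro x _
            rw [hpa, hM₂row_a x.1, if_neg x.2.2, zero_mul]
          · by_cases hpj : p = j
            · apply Finset.sum_eq_zero
              intro x _
              rw [hpj, hM₂jq x.1 x.2.1 x.2.2, zero_mul]
            · have : ∀ x : {y : ι // y ≠ a ∧ y ≠ j},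
                  M₂ p x.1 * y' x.1 = N ⟨p, ⟨hpa, hpj⟩⟩ x * y x := by
                intro x
                simp only [hy', dif_pos x.2, hN, Matrix.of_apply]
              rw [Finset.sum_congr rfl (fun x _ => this x)]
              exact congrFun hy ⟨p, ⟨hpa, hpj⟩⟩
        have hy0 : y' = 0 := hM₂inj (by rw [h0, Matrix.mulVec_zero])
        funext x
        have h2 : (if h : (x : ι) ≠ a ∧ (x : ι) ≠ j then y ⟨x, h⟩ else 0) = 0 := congrFun hy0 x.1
        rw [dif_pos x.2] at h2
        exact h2
      obtain ⟨w', hw', b', hblt', hbdiag', hbeq'⟩ :=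
        ih {y : ι // y ≠ a ∧ y ≠ j} _ _ hcard'' N hNsym hNinj
      have hwinv : ∀ z, w' (w' z) = z := by
        intro z
        calc w' (w' z) = (w' * w') z := rfl
        _ = z := by rw [hw']; rfl
      set f : ι → ι := fun x => if hxa : x = a then j else if hxj : x = j then a
        else (w' ⟨x, ⟨hxa, hxj⟩⟩ : ι) with hf
      have hfa : f a = j := dif_pos rfl
      have hfj : f j = a := by
        show (if hxa : j = a then j else if hxj : j = j then a
          else (w' ⟨j, ⟨hxa, hxj⟩⟩ : ι)) = a
        rw [dif_neg hja, dif_pos rfl]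
      have hfo : ∀ (x : ι) (h : x ≠ a ∧ x ≠ j), f x = (w' ⟨x, h⟩ : ι) := by
        intro x h
        show (if hxa : x = a then j else if hxj : x = j then a
          else (w' ⟨x, ⟨hxa, hxj⟩⟩ : ι)) = _
        rw [dif_neg h.1, dif_neg h.2]
      have hfinv : Function.Involutive f := by
        intro x
        by_cases hxa : x = a
        · rw [hxa, hfa, hfj]
        · by_cases hxj : x = j
          · rw [hxj, hfj, hfa]
          · rw [hfo x ⟨hxa, hxj⟩, hfo _ (w' ⟨x, ⟨hxa, hxj⟩⟩).2, Subtype.coe_eta, hwinv]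
      set w : Equiv.Perm ι := hfinv.toPerm with hwdef
      have hwapp : ∀ x, w x = f x := fun x => rfl
      have hww : w * w = 1 := Equiv.ext fun x => hfinv x
      set b : Matrix ι ι k := Matrix.of (fun p q =>
        if hpa : p = a then (if q = a then 1 else 0)
        else if hpj : p = j then (if q = j then M a j else 0)
        else if hq : q ≠ a ∧ q ≠ j then b' ⟨p, ⟨hpa, hpj⟩⟩ ⟨q, hq⟩ else 0) with hb
      have hbpa : ∀ p, b p a = if p = a then 1 else 0 := by
        intro p
        simp only [hb, Matrix.of_apply]
        by_cases hpa : p = a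
        · rw [dif_pos hpa]; simp [hpa]
        · rw [dif_neg hpa, if_neg hpa]
          by_cases hpj : p = j
          · rw [dif_pos hpj, if_neg han]
          · rw [dif_neg hpj, dif_neg (fun h : a ≠ a ∧ a ≠ j => h.1 rfl)]
      have hbpj : ∀ p, b p j = if p = j then M a j else 0 := by
        intro p
        simp only [hb, Matrix.of_apply]
        by_cases hpa : p = a
        · rw [dif_pos hpa, if_neg hja, if_neg (by rw [hpa]; exact han)]
        · rw [dif_neg hpa]
          by_cases hpj : p = j
          · rw [dif_pos hpj]; simp [hpj]
          · rw [dif_neg hpj, if_neg hpj, dif_neg (fun h : j ≠ a ∧ j ≠ j => h.2 rfl)]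
      have hbaa : b a a = 1 := by rw [hbpa, if_pos rfl]
      have hbjj : b j j = M a j := by rw [hbpj, if_pos rfl]
      have hbaq : ∀ q, q ≠ a → b a q = 0 := by
        intro q hq
        simp [hb, hq]
      have hbjq : ∀ q, q ≠ j → b j q = 0 := by
        intro q hq
        simp [hb, hq, hja]
      have hbsub : ∀ (p q : {y : ι // y ≠ a ∧ y ≠ j}), b p.1 q.1 = b' p q := by
        intro p q
        simp only [hb, Matrix.of_apply]
        rw [dif_neg p.2.1, dif_neg p.2.2, dif_pos q.2]
      have hblt : ∀ i q : ι, i < q → b i q = 0 := by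
        intro i q hiq
        by_cases hia : i = a
        · exact hia ▸ hbaq q (by rw [← hia]; exact fun h => absurd (h ▸ hiq) (lt_irrefl i))
        · by_cases hij : i = j
          · exact hij ▸ hbjq q (by rw [← hij]; exact fun h => absurd (h ▸ hiq) (lt_irrefl i))
          · by_cases hq : q ≠ a ∧ q ≠ j
            · rw [show b i q = b' ⟨i, ⟨hia, hij⟩⟩ ⟨q, hq⟩ from hbsub ⟨i, ⟨hia, hij⟩⟩ ⟨q, hq⟩]
              exact hblt' _ _ (Subtype.mk_lt_mk.mpr hiq)
            · rw [not_and_or, not_not, not_not] at hq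
              rcases hq with hqa | hqj
              · exact absurd (hqa ▸ hiq) (not_lt_of_ge (ha i))
              · rw [hqj, hbpj, if_neg hij]
      have hbdiag : ∀ i : ι, b i i ≠ 0 := by
        intro i
        by_cases hia : i = a
        · rw [hia, hbaa]; exact one_ne_zero
        · by_cases hij : i = j
          · rw [hij, hbjj]; exact ht0
          · rw [show b i i = b' ⟨i, ⟨hia, hij⟩⟩ ⟨i, ⟨hia, hij⟩⟩ from
              hbsub ⟨i, ⟨hia, hij⟩⟩ ⟨i, ⟨hia, hij⟩⟩]
            exact hbdiag' _
      have hM₂eq : M₂ = b * w.permMatrix k * bᵀ := by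
        ext p q
        rw [mul_perm_mul_transpose_apply, sum_split_two han]
        have hwa : w a = j := hfa
        have hwj : w j = a := hfj
        have hwsub : ∀ r : {y : ι // y ≠ a ∧ y ≠ j}, w r.1 = (w' r : ι) := by
          intro r; rw [hwapp, hfo r.1 r.2, Subtype.coe_eta]
        rw [hwa, hwj]
        by_cases hpa : p = a
        · have hz : ∀ r : {y : ι // y ≠ a ∧ y ≠ j}, b a r.1 * b q (w r.1) = 0 := by
            intro r; rw [hbaq r.1 r.2.1, zero_mul]
          rw [hpa, hbaa, one_mul, hbaq j hja, zero_mul, add_zero,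
            Finset.sum_congr rfl (fun r _ => hz r), Finset.sum_const_zero, add_zero,
            hbpj q, hM₂row_a q]
        · by_cases hpj : p = j
          · have hz : ∀ r : {y : ι // y ≠ a ∧ y ≠ j}, b j r.1 * b q (w r.1) = 0 := by
              intro r; rw [hbjq r.1 r.2.2, zero_mul]
            rw [hpj, hbjq a han, zero_mul, zero_add, hbjj,
              Finset.sum_congr rfl (fun r _ => hz r), Finset.sum_const_zero, add_zero, hbpa q]
            by_cases hqa : q = a
            · rw [hqa, if_pos rfl, mul_one, hM₂col_a j, if_pos rfl]
            · rw [if_neg hqa, mul_zero]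
              by_cases hqj : q = j
              · rw [hqj, hM₂jj]
              · rw [hM₂jq q hqa hqj]
          · rw [hbpa p, if_neg hpa, zero_mul, zero_add, hbpj p, if_neg hpj, zero_mul, zero_add]
            by_cases hq : q ≠ a ∧ q ≠ j
            · have hz : ∀ r : {y : ι // y ≠ a ∧ y ≠ j}, b p r.1 * b q (w r.1)
                  = b' ⟨p, ⟨hpa, hpj⟩⟩ r * b' ⟨q, hq⟩ (w' r) := by
                intro r; rw [hwsub r, hbsub ⟨p, ⟨hpa, hpj⟩⟩ r, hbsub ⟨q, hq⟩ (w' r)]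
              rw [Finset.sum_congr rfl (fun r _ => hz r),
                ← mul_perm_mul_transpose_apply b' w' ⟨p, ⟨hpa, hpj⟩⟩ ⟨q, hq⟩]
              exact congrFun (congrFun hbeq' ⟨p, ⟨hpa, hpj⟩⟩) ⟨q, hq⟩
            · rw [not_and_or, not_not, not_not] at hq
              have hz : ∀ r : {y : ι // y ≠ a ∧ y ≠ j}, b p r.1 * b q (w r.1) = 0 := by
                intro r
                rw [hwsub r]
                rcases hq with hqa | hqj
                · rw [hqa, hbaq (w' r).1 (w' r).2.1, mul_zero]
                · rw [hqj, hbjq (w' r).1 (w' r).2.2, mul_zero]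
              rw [Finset.sum_congr rfl (fun r _ => hz r), Finset.sum_const_zero]
              rcases hq with hqa | hqj
              · rw [hqa, hM₂col_a p, if_neg hpj]
              · rw [hqj, hM₂qj p hpa hpj]
      have l1 := elimM_lt (-v) j (fun p hp => by rw [Pi.neg_apply, hvle p hp, neg_zero])
      have l2 := elimM_lt (-c) a (fun p hp => by rw [Pi.neg_apply, hcle p hp, neg_zero])
      refine ⟨w, hww, elimM (-v) j * (elimM (-c) a * b), ?_, ?_, ?_⟩
      · exact lt_mul l1 (lt_mul l2 hblt)
      · intro i
        rw [diag_mul l1 (lt_mul l2 hblt) i, diag_mul l2 hblt i,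
          elimM_diag (-v) j (by simp [hvj]), elimM_diag (-c) a (by simp [hca]), one_mul, one_mul]
        exact hbdiag i
      · have hMrec1 : M = elimM (-v) j * M₁ * (elimM (-v) j)ᵀ := by
          rw [hM₁def]
          exact (congr_inv _ _ M hK₁L₁).symm
        have hMrec2 : M₁ = elimM (-c) a * M₂ * (elimM (-c) a)ᵀ := by
          rw [hM₂def]
          exact (congr_inv _ _ M₁ hK₂L₂).symm
        rw [hMrec1, hMrec2, hM₂eq, Matrix.transpose_mul, Matrix.transpose_mul]
        simp only [Matrix.mul_assoc]


variable {n : ℕ}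



lemma perm_apply' {ι : Type} [DecidableEq ι] (w : Equiv.Perm ι) (i j : ι) :
    (w.permMatrix k) i j = if w i = j then 1 else 0 := by
  simp [Equiv.Perm.permMatrix, PEquiv.toMatrix_apply, Equiv.toPEquiv_apply, eq_comm]

lemma sum_fin_restrict {i : ℕ} (hi : i ≤ n) (f : Fin n → k)
    (hf : ∀ x : Fin n, i ≤ (x : ℕ) → f x = 0) :
    ∑ x : Fin n, f x = ∑ y : Fin i, f (Fin.castLE hi y) := by
  rw [← Finset.sum_subset
    (Finset.subset_univ ((univ : Finset (Fin i)).map (Fin.castLEEmb hi))) ?_,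
    Finset.sum_map]
  · rfl
  · intro x _ hx
    apply hf
    by_contra hlt
    push_neg at hlt
    exact hx (Finset.mem_map.mpr ⟨⟨(x : ℕ), hlt⟩, mem_univ _, Fin.ext rfl⟩)

lemma sub_mul_left {i j : ℕ} (b A : Matrix (Fin n) (Fin n) k)
    (hb : ∀ p q : Fin n, p < q → b p q = 0) (hi : i ≤ n) (hj : j ≤ n) :
    (b * A).submatrix (Fin.castLE hi) (Fin.castLE hj)
      = (b.submatrix (Fin.castLE hi) (Fin.castLE hi))
        * (A.submatrix (Fin.castLE hi) (Fin.castLE hj)) := by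
  ext p q
  rw [submatrix_apply, mul_apply, mul_apply]
  rw [sum_fin_restrict hi (fun r => b (Fin.castLE hi p) r * A r (Fin.castLE hj q)) ?_]
  · rfl
  · intro x hx
    rw [hb (Fin.castLE hi p) x (by
      rw [Fin.lt_def]
      exact lt_of_lt_of_le p.2 hx), zero_mul]

lemma sub_mul_right {i j : ℕ} (A b : Matrix (Fin n) (Fin n) k)
    (hb : ∀ p q : Fin n, p < q → b p q = 0) (hi : i ≤ n) (hj : j ≤ n) :
    (A * bᵀ).submatrix (Fin.castLE hi) (Fin.castLE hj)
      = (A.submatrix (Fin.castLE hi) (Fin.castLE hj))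
        * (b.submatrix (Fin.castLE hj) (Fin.castLE hj))ᵀ := by
  ext p q
  rw [submatrix_apply, mul_apply, mul_apply]
  rw [sum_fin_restrict hj (fun r => A (Fin.castLE hi p) r * bᵀ r (Fin.castLE hj q)) ?_]
  · rfl
  · intro x hx
    rw [Matrix.transpose_apply, hb (Fin.castLE hj q) x (by
      rw [Fin.lt_def]
      exact lt_of_lt_of_le q.2 hx), mul_zero]

lemma sub_isUnit_det {i : ℕ} (b : Matrix (Fin n) (Fin n) k)
    (hb : ∀ p q : Fin n, p < q → b p q = 0) (hbd : ∀ p : Fin n, b p p ≠ 0) (hi : i ≤ n) :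
    IsUnit (b.submatrix (Fin.castLE hi) (Fin.castLE hi)).det := by
  rw [Matrix.det_of_lowerTriangular _ (by
    intro p q hpq
    exact hb _ _ (by rw [Fin.lt_def]; exact hpq))]
  rw [isUnit_iff_ne_zero, Finset.prod_ne_zero_iff]
  intro p _
  exact hbd _

lemma rank_sub_congr {i j : ℕ} (b A : Matrix (Fin n) (Fin n) k)
    (hb : ∀ p q : Fin n, p < q → b p q = 0) (hbd : ∀ p : Fin n, b p p ≠ 0)
    (hi : i ≤ n) (hj : j ≤ n) :
    ((b * A * bᵀ).submatrix (Fin.castLE hi) (Fin.castLE hj)).rank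
      = (A.submatrix (Fin.castLE hi) (Fin.castLE hj)).rank := by
  rw [Matrix.mul_assoc, sub_mul_left b (A * bᵀ) hb hi hj, sub_mul_right A b hb hi hj,
    ← Matrix.mul_assoc]
  rw [Matrix.rank_mul_eq_left_of_isUnit_det _ _ (by
    rw [Matrix.det_transpose]; exact sub_isUnit_det b hb hbd hj)]
  rw [Matrix.rank_mul_eq_right_of_isUnit_det _ _ (sub_isUnit_det b hb hbd hi)]

lemma rank_perm_sub {i j : ℕ} (w : Equiv.Perm (Fin n)) (hi : i ≤ n) (hj : j ≤ n) :
    (((w.permMatrix k).submatrix (Fin.castLE hi) (Fin.castLE hj)) : Matrix (Fin i) (Fin j) k).rank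
      = (univ.filter (fun p : Fin i => ((w (Fin.castLE hi p)) : ℕ) < j)).card := by
  classical
  set A : Matrix (Fin i) (Fin j) k :=
    (w.permMatrix k).submatrix (Fin.castLE hi) (Fin.castLE hj) with hA
  have hAapp : ∀ (p : Fin i) (q : Fin j),
      A p q = if w (Fin.castLE hi p) = Fin.castLE hj q then 1 else 0 := fun p q =>
    perm_apply' w _ _
  set d : Fin i → k := fun p => if ((w (Fin.castLE hi p)) : ℕ) < j then 1 else 0 with hd
  have h1 : A * Aᵀ = Matrix.diagonal d := by
    ext p p'
    rw [mul_apply, Matrix.diagonal_apply]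
    by_cases hwp : ((w (Fin.castLE hi p)) : ℕ) < j
    · rw [Finset.sum_eq_single (⟨((w (Fin.castLE hi p)) : ℕ), hwp⟩ : Fin j)]
      · rw [Matrix.transpose_apply, hAapp, hAapp]
        have hcast : w (Fin.castLE hi p) = Fin.castLE hj ⟨((w (Fin.castLE hi p)) : ℕ), hwp⟩ :=
          Fin.ext rfl
        rw [if_pos hcast]
        by_cases hpp : p = p'
        · rw [← hpp, if_pos hcast, one_mul, if_pos rfl, hd]
          simp [hwp]
        · rw [if_neg (fun hcon : w (Fin.castLE hi p') = _ => hpp (by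
            have := hcon.trans hcast.symm
            have h2 := w.injective this
            exact (Fin.castLE_inj.mp h2).symm)), mul_zero, if_neg hpp]
      · intro q _ hq
        rw [Matrix.transpose_apply, hAapp,
          if_neg (show ¬ (w (Fin.castLE hi p) = Fin.castLE hj q) from
            fun hcon => hq (Fin.ext (congrArg Fin.val hcon).symm)), zero_mul]
      · intro h; exact absurd (mem_univ _) h
    · rw [Finset.sum_eq_zero (fun q _ => by
        rw [Matrix.transpose_apply, hAapp, if_neg (fun hcon => hwp (by
          rw [hcon]; exact q.2)), zero_mul])]
      rw [eq_comm]
      by_cases hpp : p = p'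
      · rw [if_pos hpp, hd]; simp [hwp]
      · rw [if_neg hpp]
  have h2 : Matrix.diagonal d * A = A := by
    ext p q
    rw [Matrix.diagonal_mul]
    by_cases hwp : ((w (Fin.castLE hi p)) : ℕ) < j
    · rw [hd]; simp [hwp]
    · have hz : A p q = 0 := by
        rw [hAapp, if_neg (fun hcon => hwp (by rw [hcon]; exact q.2))]
      rw [hz, mul_zero]
  have hrk : A.rank = (Matrix.diagonal d).rank := by
    apply le_antisymm
    · conv_lhs => rw [← h2]
      exact Matrix.rank_mul_le_left _ _
    · rw [← h1]
      exact Matrix.rank_mul_le_left _ _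
  rw [hrk, Matrix.rank_diagonal, Fintype.card_subtype]
  congr 1
  apply Finset.filter_congr
  intro p _
  by_cases h : ((w (Fin.castLE hi p)) : ℕ) < j <;> simp [hd, h]

lemma cnt_succ (w : Equiv.Perm (Fin n)) {a : ℕ} (ha : a < n) (j : ℕ) :
    (univ.filter (fun p : Fin (a+1) =>
        ((w (Fin.castLE ha p)) : ℕ) < j)).card
      = (univ.filter (fun p : Fin a =>
          ((w (Fin.castLE (le_of_lt ha) p)) : ℕ) < j)).card
        + (if ((w ⟨a, ha⟩) : ℕ) < j then 1 else 0) := by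
  classical
  rw [Finset.card_filter, Finset.card_filter, Fin.sum_univ_castSucc]
  rfl

theorem perm_unique (w v : Equiv.Perm (Fin n))
    (h : ∀ (i j : ℕ), (hi : i ≤ n) → j ≤ n →
      (univ.filter (fun p : Fin i => ((w (Fin.castLE hi p)) : ℕ) < j)).card
        = (univ.filter (fun p : Fin i => ((v (Fin.castLE hi p)) : ℕ) < j)).card) :
    w = v := by
  have key : ∀ (x : Fin n) (j : ℕ), j ≤ n → (((w x) : ℕ) < j ↔ ((v x) : ℕ) < j) := by
    intro x j hj
    have e1 := h ((x : ℕ) + 1) j x.2 hj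
    have e2 := h (x : ℕ) j (le_of_lt x.2) hj
    rw [cnt_succ w x.2 j, cnt_succ v x.2 j, e2] at e1
    have e3 : (if ((w ⟨(x : ℕ), x.2⟩) : ℕ) < j then 1 else 0)
        = (if ((v ⟨(x : ℕ), x.2⟩) : ℕ) < j then 1 else 0) := Nat.add_left_cancel e1
    have hx : (⟨(x : ℕ), x.2⟩ : Fin n) = x := Fin.ext rfl
    rw [hx] at e3
    by_cases h1 : ((w x) : ℕ) < j <;> by_cases h2 : ((v x) : ℕ) < j <;>
      simp [h1, h2] at e3 ⊢
  apply Equiv.ext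
  intro x
  have h1 := key x ((w x : ℕ) + 1) (w x).2
  have h2 := key x ((v x : ℕ) + 1) (v x).2
  apply Fin.ext
  omega

lemma permMatrix_instance_congr {k : Type} [Field k] {ι : Type} (h1 h2 : DecidableEq ι)
    (w : Equiv.Perm ι) :
    @Equiv.Perm.permMatrix ι k h1 w _ _ = @Equiv.Perm.permMatrix ι k h2 w _ _ := by
  cases Subsingleton.elim h1 h2
  rfl

/-- over an algebraically closed field of characteristic `≠ 2`, every
invertible symmetric `2d × 2d` matrix `M` can be written as `M = b · P_w · bᵀ` with `b`
invertible lower-triangular and `P_w` the permutation matrix of an involution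
`w ∈ S_{2d}`, and the involution `w` is unique. -/
theorem stmt8 (k : Type) [Field k] [IsAlgClosed k] (hchar : (2 : k) ≠ 0)
    (d : ℕ) (hd : 1 ≤ d)
    (M : Matrix (Fin (2 * d)) (Fin (2 * d)) k)
    (hM : IsUnit M.det) (hMs : Mᵀ = M) :
    ∃! w : Equiv.Perm (Fin (2 * d)), w * w = 1 ∧
      ∃ b : Matrix (Fin (2 * d)) (Fin (2 * d)) k,
        IsUnit b.det ∧ (∀ i j : Fin (2 * d), i < j → b i j = 0) ∧
        M = b * (w.permMatrix k) * bᵀ := by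
  have hsq : ∀ x : k, ∃ z : k, z * z = x := fun x => by
    obtain ⟨z, hz⟩ := IsAlgClosed.exists_pow_nat_eq x (n := 2) (by norm_num)
    exact ⟨z, by rw [← hz]; ring⟩
  have hinj : Function.Injective M.mulVec :=
    Matrix.mulVec_injective_iff_isUnit.mpr ((Matrix.isUnit_iff_isUnit_det M).mpr hM)
  obtain ⟨w, hww, b, hblt, hbdiag, heq0⟩ :=
    main_exists hchar hsq (Fintype.card (Fin (2*d))) (Fin (2*d)) inferInstance inferInstance
      le_rfl M hMs hinj
  have heq : M = b * (w.permMatrix k) * bᵀ := by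
    rw [heq0, permMatrix_instance_congr _ (instDecidableEqFin (2*d)) w]
  have hdetb : IsUnit b.det := by
    rw [Matrix.det_of_lowerTriangular b (by
      intro i j hij
      exact hblt i j (by simpa using hij))]
    rw [isUnit_iff_ne_zero]
    exact Finset.prod_ne_zero_iff.mpr (fun i _ => hbdiag i)
  refine ⟨w, ⟨hww, b, hdetb, hblt, heq⟩, ?_⟩
  rintro v ⟨hvv, c, hcdet, hclt, hceq⟩
  have hcdiag : ∀ i, c i i ≠ 0 := by
    have h2 := hcdet
    rw [Matrix.det_of_lowerTriangular c (by
      intro i j hij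
      exact hclt i j (by simpa using hij)), isUnit_iff_ne_zero,
      Finset.prod_ne_zero_iff] at h2
    exact fun i => h2 i (mem_univ i)
  apply perm_unique
  intro i j hi hj
  have e1 := rank_sub_congr (n := 2*d) c (v.permMatrix k) hclt hcdiag hi hj
  have e2 := rank_sub_congr (n := 2*d) b (w.permMatrix k) hblt hbdiag hi hj
  rw [← hceq] at e1
  rw [← heq] at e2
  rw [← rank_perm_sub (k := k) v hi hj, ← rank_perm_sub (k := k) w hi hj, ← e1, ← e2]
end

section
/- Let k be an algebraically closed field of characteristic not equal to 2 and let d ≥ 1. For every invertible skew-symmetric 2d×2d matrix M over k there exists a unique fixed-point-free involution w ∈ S_{2d} (i.e. w² = identity and w(i) ≠ i for all i) such that M = b · [P_w]₋ · bᵀ for some invertible lower-triangular 2d×2d matrix b. Here [P_w]₋ denotes the matrix obtained from the permutation matrix P_w by multiplying every entry strictly below the main diagonal by −1; note [P_w]₋ is skew-symmetric precisely because w is a fixed-point-free involution. -/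
open Matrix

/-- `[P]₋` : the matrix obtained from `P` by multiplying every entry strictly below the
main diagonal by `−1`. -/
def lowerNeg {k : Type} [Field k] {n : ℕ} (P : Matrix (Fin n) (Fin n) k) :
    Matrix (Fin n) (Fin n) k :=
  Matrix.of fun i j => if j < i then -(P i j) else P i j

namespace Stmt9
open Matrix Finset

set_option maxHeartbeats 1000000
variable {k : Type} [Field k] {n : ℕ}

def Lower (B : Matrix (Fin n) (Fin n) k) : Prop := ∀ i j : Fin n, i < j → B i j = 0

def Z (i j : ℕ) (A : Matrix (Fin n) (Fin n) k) : Matrix (Fin n) (Fin n) k :=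
  Matrix.of fun p q => if p.val < i ∧ q.val < j then A p q else 0

def Lmask (i : ℕ) (B : Matrix (Fin n) (Fin n) k) : Matrix (Fin n) (Fin n) k :=
  Matrix.of fun p q => if p.val < i ∧ q.val < i then B p q else (if p = q then 1 else 0)


lemma Lower.blockTriangular {B : Matrix (Fin n) (Fin n) k} (h : Lower B) :
    B.BlockTriangular OrderDual.toDual := fun i j hij => h i j hij

lemma Lower.det {B : Matrix (Fin n) (Fin n) k} (h : Lower B) : B.det = ∏ i, B i i :=
  Matrix.det_of_lowerTriangular B h.blockTriangular

lemma Lower.one : Lower (1 : Matrix (Fin n) (Fin n) k) := fun i j hij => by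
  simp [Matrix.one_apply, (ne_of_lt hij)]

lemma Lower.mul {A B : Matrix (Fin n) (Fin n) k} (hA : Lower A) (hB : Lower B) :
    Lower (A * B) := fun i j hij => by
  rw [Matrix.mul_apply]
  refine Finset.sum_eq_zero fun r _ => ?_
  rcases lt_or_ge i r with h | h
  · rw [hA i r h, zero_mul]
  · rw [hB r j (lt_of_le_of_lt h hij), mul_zero]

lemma Lower.diag_isUnit {B : Matrix (Fin n) (Fin n) k} (h : Lower B) (hd : IsUnit B.det)
    (i : Fin n) : B i i ≠ 0 := by
  rw [h.det] at hd
  intro h0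
  rw [isUnit_iff_ne_zero] at hd
  exact hd (Finset.prod_eq_zero (Finset.mem_univ i) h0)

lemma Lmask_lower {B : Matrix (Fin n) (Fin n) k} (hB : Lower B) (i : ℕ) :
    Lower (Lmask i B) := by
  intro p q hpq
  simp only [Lmask, Matrix.of_apply]
  rw [if_neg (ne_of_lt hpq)]
  split
  · exact hB p q hpq
  · rfl

lemma Lmask_det_isUnit {B : Matrix (Fin n) (Fin n) k} (hB : Lower B) (hd : IsUnit B.det)
    (i : ℕ) : IsUnit (Lmask i B).det := by
  rw [(Lmask_lower hB i).det]
  rw [isUnit_iff_ne_zero]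
  refine Finset.prod_ne_zero_iff.2 fun p _ => ?_
  simp only [Lmask, Matrix.of_apply, if_pos rfl, and_self]
  split
  · exact hB.diag_isUnit hd p
  · exact one_ne_zero

lemma Z_transpose (i j : ℕ) (A : Matrix (Fin n) (Fin n) k) : (Z i j A)ᵀ = Z j i Aᵀ := by
  ext p q
  simp only [Z, Matrix.transpose_apply, Matrix.of_apply, and_comm]

lemma Z_mul_left {B : Matrix (Fin n) (Fin n) k} (hB : Lower B) (i j : ℕ)
    (A : Matrix (Fin n) (Fin n) k) : Z i j (B * A) = Lmask i B * Z i j A := by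
  ext p q
  simp only [Z, Lmask, Matrix.of_apply, Matrix.mul_apply]
  by_cases hq : q.val < j
  · by_cases hp : p.val < i
    · rw [if_pos ⟨hp, hq⟩]
      refine Finset.sum_congr rfl fun r _ => ?_
      rcases lt_or_ge r.val i with hr | hr
      · simp [hp, hr, hq]
      · have hBpr : B p r = 0 := hB p r (by simp only [Fin.lt_def]; omega)
        have : ¬ (r.val < i) := by omega
        simp [hBpr, this]
    · rw [if_neg (by tauto)]
      refine (Finset.sum_eq_zero fun r _ => ?_).symm
      rcases lt_or_ge r.val i with hr | hr
      · have : ¬ (p = r) := by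
          intro h; subst h; omega
        simp [hp, this]
      · simp [hr]
  · rw [if_neg (by tauto)]
    refine (Finset.sum_eq_zero fun r _ => ?_).symm
    simp [hq]

lemma Z_mul_right {B : Matrix (Fin n) (Fin n) k} (hB : Lower B) (i j : ℕ)
    (A : Matrix (Fin n) (Fin n) k) : Z i j (A * Bᵀ) = Z i j A * (Lmask j B)ᵀ := by
  calc Z i j (A * Bᵀ) = ((Z i j (A * Bᵀ))ᵀ)ᵀ := (Matrix.transpose_transpose _).symm
    _ = (Z j i (B * Aᵀ))ᵀ := by rw [Z_transpose, Matrix.transpose_mul, Matrix.transpose_transpose]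
    _ = (Lmask j B * Z j i Aᵀ)ᵀ := by rw [Z_mul_left hB]
    _ = (Z j i Aᵀ)ᵀ * (Lmask j B)ᵀ := by rw [Matrix.transpose_mul]
    _ = Z i j A * (Lmask j B)ᵀ := by rw [Z_transpose, Matrix.transpose_transpose]

lemma Z_conj {A B : Matrix (Fin n) (Fin n) k} (hB : Lower B) (i j : ℕ) :
    Z i j (B * A * Bᵀ) = (Lmask i B) * Z i j (A * Bᵀ) := by
  rw [Matrix.mul_assoc, Z_mul_left hB]


lemma rank_Z_conj {A b : Matrix (Fin n) (Fin n) k} (hb : Lower b) (hbd : IsUnit b.det)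
    (i j : ℕ) : (Z i j (b * A * bᵀ)).rank = (Z i j A).rank := by
  rw [Z_conj hb, Z_mul_right hb]
  rw [← Matrix.mul_assoc]
  rw [Matrix.rank_mul_eq_left_of_isUnit_det _ _ (by
    rw [Matrix.det_transpose]; exact Lmask_det_isUnit hb hbd j)]
  rw [Matrix.rank_mul_eq_right_of_isUnit_det _ _ (Lmask_det_isUnit hb hbd i)]

def cnt (w : Equiv.Perm (Fin n)) (i j : ℕ) : ℕ :=
  (Finset.univ.filter (fun a : Fin n => a.val < i ∧ (w a).val < j)).card

lemma isUnit_det_permMatrix (w : Equiv.Perm (Fin n)) : IsUnit ((w.permMatrix k).det) := by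
  rw [Matrix.det_permutation]
  rcases Int.units_eq_one_or (Equiv.Perm.sign w) with h | h <;> rw [h] <;> simp

lemma rank_Z_lowerNeg (w : Equiv.Perm (Fin n)) (i j : ℕ) :
    (Z i j (lowerNeg (w.permMatrix k))).rank = cnt w i j := by
  classical
  set d : Fin n → k := fun a =>
    if a.val < i ∧ (w a).val < j then (if w a < a then -1 else 1) else 0 with hd
  have hZ : Z i j (lowerNeg (w.permMatrix k)) = Matrix.diagonal d * w.permMatrix k := by
    ext p q
    rw [Matrix.diagonal_mul]
    simp only [Z, lowerNeg, Matrix.of_apply, Equiv.Perm.permMatrix, PEquiv.toMatrix_apply,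
      Equiv.toPEquiv_apply, Option.mem_def, Option.some.injEq, hd]
    by_cases hwpq : w p = q
    · subst hwpq
      by_cases hc : p.val < i ∧ (w p).val < j <;> simp [hc]
    · rw [if_neg hwpq]
      simp only [mul_zero]
      split <;> simp [hwpq]
  rw [hZ, Matrix.rank_mul_eq_left_of_isUnit_det _ _ (isUnit_det_permMatrix w),
    Matrix.rank_diagonal]
  rw [cnt, Fintype.card_subtype]
  congr 1
  refine Finset.filter_congr fun a _ => ?_
  by_cases hc : a.val < i ∧ (w a).val < j
  · simp only [hd, if_pos hc, iff_true_intro hc, iff_true]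
    split <;> simp
  · simp [hd, hc]

lemma cnt_succ (w : Equiv.Perm (Fin n)) (a : Fin n) (j : ℕ) :
    cnt w (a.val + 1) j = cnt w a.val j + (if (w a).val < j then 1 else 0) := by
  classical
  rw [cnt, cnt, Finset.card_filter, Finset.card_filter]
  have : ∀ x : Fin n, (if x.val < a.val + 1 ∧ (w x).val < j then 1 else 0)
      = (if x.val < a.val ∧ (w x).val < j then 1 else 0)
        + (if x = a then (if (w a).val < j then 1 else 0) else 0) := by
    intro x
    by_cases hxa : x = a
    · subst hxa
      simp [Nat.lt_irrefl]
    · have : x.val ≠ a.val := fun h => hxa (Fin.ext h)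
      have h2 : (x.val < a.val + 1 ∧ (w x).val < j) ↔ (x.val < a.val ∧ (w x).val < j) := by
        constructor <;> rintro ⟨h, h'⟩ <;> exact ⟨by omega, h'⟩
      rw [if_neg hxa, add_zero, if_congr h2 rfl rfl]
  rw [Finset.sum_congr rfl (fun x _ => this x), Finset.sum_add_distrib,
    Finset.sum_ite_eq' Finset.univ a, if_pos (Finset.mem_univ a)]

lemma cnt_inj {w1 w2 : Equiv.Perm (Fin n)} (h : ∀ i j, cnt w1 i j = cnt w2 i j) :
    w1 = w2 := by
  apply Equiv.ext
  intro a
  have key : ∀ j, ((w1 a).val < j ↔ (w2 a).val < j) := by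
    intro j
    have h1 := cnt_succ w1 a j
    have h2 := cnt_succ w2 a j
    rw [h _ j, h _ j] at h1
    rw [h1] at h2
    have h3 := Nat.add_left_cancel h2
    constructor <;> intro hlt
    · by_contra hn
      rw [if_pos hlt, if_neg hn] at h3; omega
    · by_contra hn
      rw [if_neg hn, if_pos hlt] at h3; omega
  have h1 := key ((w1 a).val + 1)
  have h2 := key ((w2 a).val + 1)
  exact Fin.ext (by omega)

/-! ### Existence: elementary operations -/

def elemE (j0 : Fin n) (c : Fin n → k) : Matrix (Fin n) (Fin n) k :=
  Matrix.of fun p q => if q = j0 then c p else 0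

lemma elemE_mul_apply (j0 : Fin n) (c : Fin n → k) (M : Matrix (Fin n) (Fin n) k) (p q : Fin n) :
    (elemE j0 c * M) p q = c p * M j0 q := by
  rw [Matrix.mul_apply]
  simp [elemE, ite_mul]

lemma mul_elemET_apply (j0 : Fin n) (c : Fin n → k) (M : Matrix (Fin n) (Fin n) k) (p q : Fin n) :
    (M * (elemE j0 c)ᵀ) p q = M p j0 * c q := by
  rw [Matrix.mul_apply]
  simp [elemE, mul_ite, mul_comm]

lemma conj_elem_apply (j0 : Fin n) (c : Fin n → k) (M : Matrix (Fin n) (Fin n) k) :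
    (1 + elemE j0 c) * M * (1 + elemE j0 c)ᵀ
      = Matrix.of fun p q => M p q + c p * M j0 q + M p j0 * c q + c p * M j0 j0 * c q := by
  have h : (1 + elemE j0 c) * M * (1 + elemE j0 c)ᵀ
      = M + elemE j0 c * M + (M * (elemE j0 c)ᵀ + elemE j0 c * M * (elemE j0 c)ᵀ) := by
    rw [Matrix.transpose_add, Matrix.transpose_one]
    rw [add_mul, one_mul, add_mul, mul_add, mul_one, mul_add, mul_one, Matrix.mul_assoc]
    abel
  rw [h]
  ext p q
  simp only [Matrix.add_apply, elemE_mul_apply, mul_elemET_apply, Matrix.of_apply]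
  ring

lemma one_sub_elemE (j0 : Fin n) (c : Fin n → k) :
    (1 : Matrix (Fin n) (Fin n) k) - elemE j0 c = 1 + elemE j0 (fun p => -(c p)) := by
  ext p q
  by_cases h : q = j0 <;> simp [elemE, h, sub_eq_add_neg]

lemma elemE_lower (j0 : Fin n) (c : Fin n → k) (h : ∀ p, p ≤ j0 → c p = 0) :
    Lower (1 + elemE j0 c) := by
  intro p q hpq
  simp only [Matrix.add_apply, Matrix.one_apply, elemE, Matrix.of_apply]
  rw [if_neg (ne_of_lt hpq)]
  split
  · next hq => rw [h p (le_of_lt (hq ▸ hpq))]; ring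
  · ring

lemma elemE_inv (j0 : Fin n) (c : Fin n → k) (hc : c j0 = 0) :
    ((1 : Matrix (Fin n) (Fin n) k) - elemE j0 c) * (1 + elemE j0 c) = 1 := by
  have hE2 : elemE j0 c * elemE j0 c = 0 := by
    ext p q
    rw [elemE_mul_apply]
    simp only [elemE, Matrix.of_apply, Matrix.zero_apply]
    split
    · rw [hc]; ring
    · ring
  rw [sub_mul, one_mul, mul_add, mul_one, hE2, add_zero]
  abel

lemma skew_apply {M : Matrix (Fin n) (Fin n) k} (hMs : Mᵀ = -M) (p q : Fin n) :
    M p q = -(M q p) := by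
  have := congrArg (fun A : Matrix (Fin n) (Fin n) k => A q p) hMs
  simpa using this

lemma skew_diag (hchar : (2 : k) ≠ 0) {M : Matrix (Fin n) (Fin n) k} (hMs : Mᵀ = -M)
    (i : Fin n) : M i i = 0 := by
  have h := skew_apply hMs i i
  have h2 : 2 * M i i = 0 := by rw [two_mul]; linear_combination h
  rcases mul_eq_zero.1 h2 with h | h
  · exact absurd h hchar
  · exact h

lemma skew_conj {M : Matrix (Fin n) (Fin n) k} (hMs : Mᵀ = -M) (L : Matrix (Fin n) (Fin n) k) :
    (L * M * Lᵀ)ᵀ = -(L * M * Lᵀ) := by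
  rw [Matrix.transpose_mul, Matrix.transpose_mul, Matrix.transpose_transpose, hMs]
  simp [Matrix.mul_assoc, Matrix.neg_mul, Matrix.mul_neg]
lemma reduce (hchar : (2 : k) ≠ 0) {n : ℕ} (M : Matrix (Fin (n+1)) (Fin (n+1)) k)
    (hMs : Mᵀ = -M) (hdet : IsUnit M.det) :
    ∃ (j0 : Fin (n+1)) (N Li : Matrix (Fin (n+1)) (Fin (n+1)) k),
      j0 ≠ 0 ∧ Lower Li ∧ IsUnit Li.det ∧ M = Li * N * Liᵀ ∧ Nᵀ = -N ∧ IsUnit N.det ∧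
      (∀ p, N p 0 = if p = j0 then -1 else 0) ∧ (∀ p, N p j0 = if p = 0 then 1 else 0) := by
  classical
  -- the pivot
  have hrow : ∃ q, M 0 q ≠ 0 := by
    by_contra h
    push_neg at h
    rw [isUnit_iff_ne_zero] at hdet
    exact hdet (Matrix.det_eq_zero_of_row_eq_zero 0 h)
  set S : Finset (Fin (n+1)) := Finset.univ.filter (fun q => M 0 q ≠ 0) with hS
  have hSne : S.Nonempty := by
    obtain ⟨q, hq⟩ := hrow
    exact ⟨q, by simp [hS, hq]⟩
  set j0 : Fin (n+1) := S.min' hSne with hj0def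
  have hj0 : M 0 j0 ≠ 0 := (Finset.mem_filter.1 (S.min'_mem hSne)).2
  have hmin : ∀ q, M 0 q ≠ 0 → j0 ≤ q := fun q hq =>
    S.min'_le q (Finset.mem_filter.2 ⟨Finset.mem_univ q, hq⟩)
  have hlt : ∀ q, q < j0 → M 0 q = 0 := by
    intro q hq
    by_contra h
    exact absurd (hmin q h) (not_le.2 hq)
  have hj0ne : j0 ≠ 0 := by
    intro h
    exact hj0 (h ▸ skew_diag hchar hMs 0)
  set β : k := M 0 j0 with hβ
  have hβne : β ≠ 0 := hj0
  have hMj00 : M j0 0 = -β := by rw [hβ, ← skew_apply hMs]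
  have hM00 : M 0 0 = 0 := skew_diag hchar hMs 0
  have hMj0j0 : M j0 j0 = 0 := skew_diag hchar hMs j0
  -- stage A
  set cA : Fin (n+1) → k := fun p => if j0 < p then -(M p 0) / (M j0 0) else 0 with hcA
  have hcAj0 : cA j0 = 0 := by simp [hcA]
  have hcA0 : cA 0 = 0 := by simp [hcA, Fin.not_lt_zero]
  set LA : Matrix (Fin (n+1)) (Fin (n+1)) k := 1 + elemE j0 cA with hLA
  set M1 : Matrix (Fin (n+1)) (Fin (n+1)) k := LA * M * LAᵀ with hM1def
  have hM1 : ∀ p q, M1 p q = M p q + cA p * M j0 q + M p j0 * cA q + cA p * M j0 j0 * cA q := by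
    intro p q
    rw [hM1def, hLA, conj_elem_apply]
    rfl
  have hM1s : M1ᵀ = -M1 := skew_conj hMs LA
  have hMj0ne : M j0 0 ≠ 0 := by rw [hMj00]; exact neg_ne_zero.2 hβne
  have keyA : ∀ p, M1 p 0 = M p 0 + cA p * M j0 0 := by
    intro p
    rw [hM1 p 0, hMj0j0, hcA0]
    ring
  have hM1col0 : ∀ p, M1 p 0 = if p = j0 then -β else 0 := by
    intro p
    rw [keyA]
    rcases lt_trichotomy p j0 with h | h | h
    · have hcap : cA p = 0 := by simp only [hcA]; rw [if_neg (not_lt.2 h.le)]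
      rw [if_neg (ne_of_lt h), hcap, skew_apply hMs p 0, hlt p h]
      ring
    · subst h
      rw [if_pos rfl, hcAj0, hMj00]
      ring
    · have hcap : cA p = -(M p 0) / (M j0 0) := by simp only [hcA]; rw [if_pos h]
      rw [if_neg (ne_of_gt h), hcap, div_mul_cancel₀ _ hMj0ne]
      ring
  have hM1j00 : M1 j0 0 = -β := by rw [hM1col0, if_pos rfl]
  have hM10j0 : M1 0 j0 = β := by
    rw [skew_apply hM1s 0 j0, hM1j00]
    ring
  have hM100 : M1 0 0 = 0 := skew_diag hchar hM1s 0
  have hM1j0j0 : M1 j0 j0 = 0 := skew_diag hchar hM1s j0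
  -- stage B
  set cB : Fin (n+1) → k := fun p => if p = 0 ∨ p = j0 then 0 else -(M1 p j0) / β with hcB
  have hcB0 : cB 0 = 0 := by simp [hcB]
  have hcBj0 : cB j0 = 0 := by simp [hcB]
  set LB : Matrix (Fin (n+1)) (Fin (n+1)) k := 1 + elemE 0 cB with hLB
  set M2 : Matrix (Fin (n+1)) (Fin (n+1)) k := LB * M1 * LBᵀ with hM2def
  have hM2 : ∀ p q, M2 p q = M1 p q + cB p * M1 0 q + M1 p 0 * cB q + cB p * M1 0 0 * cB q := by
    intro p q
    rw [hM2def, hLB, conj_elem_apply]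
    rfl
  have hM2s : M2ᵀ = -M2 := skew_conj hM1s LB
  have hM2col0 : ∀ p, M2 p 0 = if p = j0 then -β else 0 := by
    intro p
    rw [hM2 p 0, hM100, hcB0, ← hM1col0 p]
    ring
  have hM2colj0 : ∀ p, M2 p j0 = if p = 0 then β else 0 := by
    intro p
    have key : M2 p j0 = M1 p j0 + cB p * β := by
      rw [hM2 p j0, hM100, hcBj0, hM10j0]
      ring
    rw [key]
    by_cases h0 : p = 0
    · subst h0
      rw [if_pos rfl, hcB0, hM10j0]
      ring
    · rw [if_neg h0]
      by_cases hj : p = j0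
      · subst hj
        rw [hcBj0, hM1j0j0]
        ring
      · have hcbp : cB p = -(M1 p j0) / β := by
          simp only [hcB]
          rw [if_neg (not_or.2 ⟨h0, hj⟩)]
        rw [hcbp, div_mul_cancel₀ _ hβne]
        ring
  have hM200 : M2 0 0 = 0 := skew_diag hchar hM2s 0
  have hM2j0j0 : M2 j0 j0 = 0 := skew_diag hchar hM2s j0
  -- stage C : scaling
  set dv : Fin (n+1) → k := fun p => if p = j0 then β⁻¹ else 1 with hdv
  set dvi : Fin (n+1) → k := fun p => if p = j0 then β else 1 with hdvi
  have hdv0 : dv 0 = 1 := by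
    simp only [hdv]
    rw [if_neg (fun h : (0 : Fin (n+1)) = j0 => hj0ne h.symm)]
  have hdvj0 : dv j0 = β⁻¹ := by simp [hdv]
  set D : Matrix (Fin (n+1)) (Fin (n+1)) k := Matrix.diagonal dv with hD
  set N : Matrix (Fin (n+1)) (Fin (n+1)) k := D * M2 * Dᵀ with hNdef
  have hNapp : ∀ p q, N p q = dv p * M2 p q * dv q := by
    intro p q
    rw [hNdef, hD, Matrix.diagonal_transpose, Matrix.mul_diagonal, Matrix.diagonal_mul]
  have hNs : Nᵀ = -N := skew_conj hM2s D
  have hNcol0 : ∀ p, N p 0 = if p = j0 then -1 else 0 := by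
    intro p
    rw [hNapp, hdv0, hM2col0]
    by_cases h : p = j0
    · subst h
      rw [if_pos rfl, if_pos rfl, hdvj0]
      field_simp
    · rw [if_neg h, if_neg h]
      ring
  have hNcolj0 : ∀ p, N p j0 = if p = 0 then 1 else 0 := by
    intro p
    rw [hNapp, hdvj0, hM2colj0]
    by_cases h : p = 0
    · subst h
      rw [if_pos rfl, if_pos rfl, hdv0]
      field_simp
    · rw [if_neg h, if_neg h]
      ring
  -- the transformation and its inverse
  set L : Matrix (Fin (n+1)) (Fin (n+1)) k := D * LB * LA with hL
  set LAi : Matrix (Fin (n+1)) (Fin (n+1)) k := 1 - elemE j0 cA with hLAi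
  set LBi : Matrix (Fin (n+1)) (Fin (n+1)) k := 1 - elemE 0 cB with hLBi
  set Di : Matrix (Fin (n+1)) (Fin (n+1)) k := Matrix.diagonal dvi with hDi
  set Li : Matrix (Fin (n+1)) (Fin (n+1)) k := LAi * LBi * Di with hLi
  have hDiD : Di * D = 1 := by
    rw [hDi, hD, Matrix.diagonal_mul_diagonal]
    have key : ∀ p, dvi p * dv p = 1 := by
      intro p
      by_cases h : p = j0 <;> simp [hdvi, hdv, h, mul_inv_cancel₀ hβne]
    ext p q
    by_cases h : p = q
    · subst h
      rw [Matrix.diagonal_apply_eq, Matrix.one_apply_eq]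
      exact key p
    · rw [Matrix.diagonal_apply_ne _ h, Matrix.one_apply_ne h]
  have hLAinv : LAi * LA = 1 := elemE_inv j0 cA hcAj0
  have hLBinv : LBi * LB = 1 := elemE_inv 0 cB hcB0
  have hLinvL : Li * L = 1 := by
    have h1 : Li * L = LAi * (LBi * (Di * (D * (LB * LA)))) := by
      rw [hLi, hL]
      simp only [Matrix.mul_assoc]
    rw [h1, ← Matrix.mul_assoc Di D, hDiD, one_mul, ← Matrix.mul_assoc LBi LB, hLBinv,
      one_mul]
    exact hLAinv
  have hLowerLAi : Lower LAi := by
    rw [hLAi, one_sub_elemE]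
    refine elemE_lower j0 _ fun p hp => ?_
    rw [neg_eq_zero]
    simp only [hcA]
    rw [if_neg (not_lt.2 hp)]
  have hLowerLBi : Lower LBi := by
    rw [hLBi, one_sub_elemE]
    refine elemE_lower 0 _ fun p hp => ?_
    rw [neg_eq_zero, Fin.le_zero_iff.1 hp]
    exact hcB0
  have hLowerDi : Lower Di := by
    intro p q h
    rw [hDi]
    exact Matrix.diagonal_apply_ne _ (ne_of_lt h)
  have hLowerLi : Lower Li := (hLowerLAi.mul hLowerLBi).mul hLowerDi
  have hdets : Li.det * L.det = 1 := by
    have := congrArg Matrix.det hLinvL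
    rwa [Matrix.det_mul, Matrix.det_one] at this
  have hLidet : IsUnit Li.det := IsUnit.of_mul_eq_one _ hdets
  have hLdet : IsUnit L.det := IsUnit.of_mul_eq_one _ (mul_comm Li.det L.det ▸ hdets)
  have hNLM : N = L * M * Lᵀ := by
    rw [hNdef, hM2def, hM1def, hL]
    simp only [Matrix.transpose_mul, Matrix.mul_assoc]
  have hMeq : M = Li * N * Liᵀ := by
    rw [hNLM]
    have h1 : Li * (L * M * Lᵀ) * Liᵀ = (Li * L) * M * (Li * L)ᵀ := by
      simp only [Matrix.transpose_mul, Matrix.mul_assoc]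
    rw [h1, hLinvL, Matrix.transpose_one, mul_one, one_mul]
  have hNdet : IsUnit N.det := by
    rw [hNLM, Matrix.det_mul, Matrix.det_mul, Matrix.det_transpose]
    exact (hLdet.mul hdet).mul hLdet
  exact ⟨j0, N, Li, hj0ne, hLowerLi, hLidet, hMeq, hNs, hNdet, hNcol0, hNcolj0⟩

lemma sum_split {N m : ℕ} (s : Finset (Fin N)) (hcard : s.card = m) {a b : Fin N}
    (hab : a ≠ b) (hsc : sᶜ = {a, b}) (f : Fin N → k) :
    ∑ p, f p = (∑ i : Fin m, f (s.orderIsoOfFin hcard i)) + (f a + f b) := by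
  rw [← Finset.sum_add_sum_compl s f, hsc,
    Finset.sum_insert (Finset.notMem_singleton.2 hab), Finset.sum_singleton]
  congr 1
  rw [← Finset.sum_coe_sort s f]
  exact (Fintype.sum_equiv (s.orderIsoOfFin hcard).toEquiv
    (fun i => f (s.orderIsoOfFin hcard i)) (fun x => f x) fun i => rfl).symm

lemma prod_split {N m : ℕ} (s : Finset (Fin N)) (hcard : s.card = m) {a b : Fin N}
    (hab : a ≠ b) (hsc : sᶜ = {a, b}) (f : Fin N → k) :
    ∏ p, f p = (∏ i : Fin m, f (s.orderIsoOfFin hcard i)) * (f a * f b) := by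
  rw [← Finset.prod_mul_prod_compl s f, hsc,
    Finset.prod_insert (Finset.notMem_singleton.2 hab), Finset.prod_singleton]
  congr 1
  rw [← Finset.prod_coe_sort s f]
  exact (Fintype.prod_equiv (s.orderIsoOfFin hcard).toEquiv
    (fun i => f (s.orderIsoOfFin hcard i)) (fun x => f x) fun i => rfl).symm

lemma lowerNeg_perm_apply (w : Equiv.Perm (Fin n)) (p q : Fin n) :
    lowerNeg (w.permMatrix k) p q = if w p = q then (if q < p then (-1 : k) else 1) else 0 := by
  simp only [lowerNeg, Matrix.of_apply, Equiv.Perm.permMatrix, PEquiv.toMatrix_apply,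
    Equiv.toPEquiv_apply, Option.mem_def, Option.some.injEq]
  by_cases h : w p = q
  · simp [h]
  · simp [h]
theorem exists_decomp (hchar : (2 : k) ≠ 0) (n : ℕ) :
    ∀ M : Matrix (Fin n) (Fin n) k, Mᵀ = -M → IsUnit M.det →
    ∃ w : Equiv.Perm (Fin n), (w * w = 1 ∧ ∀ i, w i ≠ i) ∧
      ∃ b : Matrix (Fin n) (Fin n) k,
        IsUnit b.det ∧ Lower b ∧ M = b * lowerNeg (w.permMatrix k) * bᵀ := by
  induction n using Nat.strong_induction_on with
  | _ n IH =>
  cases n with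
  | zero =>
    intro M hMs hdet
    refine ⟨1, ⟨mul_one 1, fun i => i.elim0⟩, 1, by simp, fun i j _ => i.elim0, ?_⟩
    ext i j
    exact i.elim0
  | succ n =>
    intro M hMs hdet
    classical
    obtain ⟨j0, N, Li, hj0ne, hLowerLi, hLidet, hMeq, hNs, hNdet, hNcol0, hNcolj0⟩ :=
      reduce hchar M hMs hdet
    have hNrow0 : ∀ q, N 0 q = if q = j0 then 1 else 0 := by
      intro q
      rw [skew_apply hNs 0 q, hNcol0 q]
      by_cases h : q = j0 <;> simp [h]
    have hNrowj0 : ∀ q, N j0 q = if q = 0 then -1 else 0 := by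
      intro q
      rw [skew_apply hNs j0 q, hNcolj0 q]
      by_cases h : q = 0 <;> simp [h]
    -- the complement of the two pivots
    set s : Finset (Fin (n+1)) := ({0, j0}ᶜ : Finset (Fin (n+1))) with hs
    have hsc : sᶜ = {0, j0} := by rw [hs, compl_compl]
    have h0j0 : (0 : Fin (n+1)) ≠ j0 := Ne.symm hj0ne
    have h0s : (0 : Fin (n+1)) ∉ s := by
      rw [hs, Finset.mem_compl, not_not]
      exact Finset.mem_insert_self 0 {j0}
    have hj0s : j0 ∉ s := by
      rw [hs, Finset.mem_compl, not_not]
      exact Finset.mem_insert_of_mem (Finset.mem_singleton_self j0)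
    have hmems : ∀ p : Fin (n+1), p ≠ 0 → p ≠ j0 → p ∈ s := by
      intro p h1 h2
      rw [hs, Finset.mem_compl, Finset.mem_insert, Finset.mem_singleton]
      tauto
    have hcard : s.card = n - 1 := by
      rw [hs, Finset.card_compl,
        Finset.card_insert_of_notMem (Finset.notMem_singleton.2 h0j0),
        Finset.card_singleton, Fintype.card_fin]
      omega
    set eIso := s.orderIsoOfFin hcard with heIso
    set e : Fin (n-1) → Fin (n+1) := fun i => (eIso i : Fin (n+1)) with he
    have hmem : ∀ i, e i ∈ s := fun i => (eIso i).2
    have hne0 : ∀ i, e i ≠ 0 := by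
      intro i h
      exact h0s (h ▸ hmem i)
    have hnej0 : ∀ i, e i ≠ j0 := by
      intro i h
      exact hj0s (h ▸ hmem i)
    have hesm : StrictMono e := by
      intro i j hij
      exact Subtype.coe_lt_coe.2 ((OrderIso.lt_iff_lt eIso).2 hij)
    have heinj : Function.Injective e := hesm.injective
    have hsurj : ∀ p, p ∈ s → ∃ i, e i = p := by
      intro p hp
      exact ⟨eIso.symm ⟨p, hp⟩, congrArg Subtype.val (eIso.apply_symm_apply ⟨p, hp⟩)⟩
    have hsymm_e : ∀ (i : Fin (n-1)) (h : e i ∈ s), eIso.symm ⟨e i, h⟩ = i := by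
      intro i h
      rw [show (⟨e i, h⟩ : {x // x ∈ s}) = eIso i from Subtype.ext rfl, eIso.symm_apply_apply]
    have hsplit : ∀ f : Fin (n+1) → k,
        ∑ p, f p = (∑ i : Fin (n-1), f (e i)) + (f 0 + f j0) :=
      fun f => sum_split s hcard h0j0 hsc f
    -- the middle minor
    set M' : Matrix (Fin (n-1)) (Fin (n-1)) k := N.submatrix e e with hM'
    have hM's : M'ᵀ = -M' := by
      ext i j
      simp only [hM', Matrix.transpose_apply, Matrix.submatrix_apply, Matrix.neg_apply]
      exact skew_apply hNs (e j) (e i)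
    have hM'det : IsUnit M'.det := by
      rw [isUnit_iff_ne_zero]
      intro h0
      obtain ⟨v, hv0, hvz⟩ := Matrix.exists_mulVec_eq_zero_iff.2 h0
      set x : Fin (n+1) → k := fun p => if hp : p ∈ s then v (eIso.symm ⟨p, hp⟩) else 0 with hx
      have hx0 : x 0 = 0 := dif_neg h0s
      have hxj0 : x j0 = 0 := dif_neg hj0s
      have hxe : ∀ i, x (e i) = v i := by
        intro i
        rw [hx]
        simp only
        rw [dif_pos (hmem i), hsymm_e i (hmem i)]
      have hNx : N.mulVec x = 0 := by
        funext p
        have hexp : N.mulVec x p = ∑ q, N p q * x q := by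
          simp [Matrix.mulVec, dotProduct]
        rw [hexp, hsplit (fun q => N p q * x q), hx0, hxj0, mul_zero, mul_zero, add_zero,
          add_zero]
        by_cases hp0 : p = 0
        · subst hp0
          rw [Pi.zero_apply]
          refine Finset.sum_eq_zero fun i _ => ?_
          rw [hNrow0, if_neg (hnej0 i), zero_mul]
        · by_cases hpj : p = j0
          · subst hpj
            rw [Pi.zero_apply]
            refine Finset.sum_eq_zero fun i _ => ?_
            rw [hNrowj0, if_neg (hne0 i), zero_mul]
          · obtain ⟨i0, rfl⟩ := hsurj p (hmems p hp0 hpj)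
            have : ∀ i, N (e i0) (e i) * x (e i) = M' i0 i * v i := by
              intro i
              rw [hxe, hM', Matrix.submatrix_apply]
            rw [Finset.sum_congr rfl fun i _ => this i]
            have h2 := congrFun hvz i0
            simp only [Matrix.mulVec, dotProduct, Pi.zero_apply] at h2 ⊢
            exact h2
      have hxne : x ≠ 0 := by
        obtain ⟨i, hi⟩ := Function.ne_iff.1 hv0
        intro h
        apply hi
        rw [← hxe i, h]
        rfl
      exact absurd (Matrix.exists_mulVec_eq_zero_iff.1 ⟨x, hxne, hNx⟩)
        (isUnit_iff_ne_zero.1 hNdet)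
    -- induction hypothesis
    obtain ⟨w', ⟨hw'inv, hw'fpf⟩, b', hb'det, hb'lower, hb'eq⟩ :=
      IH (n-1) (by omega) M' hM's hM'det
    -- the permutation
    set wext : Equiv.Perm (Fin (n+1)) := w'.extendDomain eIso.toEquiv with hwext
    set w : Equiv.Perm (Fin (n+1)) := wext * Equiv.swap 0 j0 with hw
    have hwextj0 : wext j0 = j0 := Equiv.Perm.extendDomain_apply_not_subtype _ _ hj0s
    have hwext0 : wext 0 = 0 := Equiv.Perm.extendDomain_apply_not_subtype _ _ h0s
    have hwexte : ∀ i, wext (e i) = e (w' i) := by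
      intro i
      have := Equiv.Perm.extendDomain_apply_image w' eIso.toEquiv i
      rw [hwext]
      exact this
    have hw0 : w 0 = j0 := by
      rw [hw, Equiv.Perm.mul_apply, Equiv.swap_apply_left, hwextj0]
    have hwj0 : w j0 = 0 := by
      rw [hw, Equiv.Perm.mul_apply, Equiv.swap_apply_right, hwext0]
    have hwe : ∀ i, w (e i) = e (w' i) := by
      intro i
      rw [hw, Equiv.Perm.mul_apply, Equiv.swap_apply_of_ne_of_ne (hne0 i) (hnej0 i), hwexte]
    have hw'app : ∀ i, w' (w' i) = i := by
      intro i
      have := congrArg (fun σ : Equiv.Perm (Fin (n-1)) => σ i) hw'inv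
      simpa [Equiv.Perm.mul_apply] using this
    have hwinv : w * w = 1 := by
      apply Equiv.ext
      intro x
      simp only [Equiv.Perm.mul_apply, Equiv.Perm.one_apply]
      by_cases hx0 : x = 0
      · subst hx0; rw [hw0, hwj0]
      · by_cases hxj : x = j0
        · subst hxj; rw [hwj0, hw0]
        · obtain ⟨i, rfl⟩ := hsurj x (hmems x hx0 hxj)
          rw [hwe, hwe, hw'app]
    have hwfpf : ∀ x, w x ≠ x := by
      intro x
      by_cases hx0 : x = 0
      · subst hx0; rw [hw0]; exact hj0ne
      · by_cases hxj : x = j0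
        · subst hxj; rw [hwj0]; exact h0j0
        · obtain ⟨i, rfl⟩ := hsurj x (hmems x hx0 hxj)
          rw [hwe]
          exact fun h => hw'fpf i (heinj h)
    -- the lower-triangular extension of b'
    set B : Matrix (Fin (n+1)) (Fin (n+1)) k := Matrix.of fun p q =>
      if hp : p ∈ s then
        (if hq : q ∈ s then b' (eIso.symm ⟨p, hp⟩) (eIso.symm ⟨q, hq⟩) else 0)
      else (if p = q then 1 else 0) with hB
    have hBee : ∀ i j, B (e i) (e j) = b' i j := by
      intro i j
      rw [hB]
      simp only [Matrix.of_apply]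
      rw [dif_pos (hmem i), dif_pos (hmem j), hsymm_e i (hmem i), hsymm_e j (hmem j)]
    have hBes : ∀ (p : Fin (n+1)) (hp : p ∈ s) (i : Fin (n-1)),
        B p (e i) = b' (eIso.symm ⟨p, hp⟩) i := by
      intro p hp i
      rw [hB]
      simp only [Matrix.of_apply]
      rw [dif_pos hp, dif_pos (hmem i), hsymm_e i (hmem i)]
    have hBnotmem : ∀ (p : Fin (n+1)) (q : Fin (n+1)), p ∈ s → q ∉ s → B p q = 0 := by
      intro p q hp hq
      rw [hB]
      simp only [Matrix.of_apply]
      rw [dif_pos hp, dif_neg hq]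
    have hBid : ∀ (p q : Fin (n+1)), p ∉ s → B p q = if p = q then 1 else 0 := by
      intro p q hp
      rw [hB]
      simp only [Matrix.of_apply]
      rw [dif_neg hp]
    have hLowerB : Lower B := by
      intro p q hpq
      rw [hB]
      simp only [Matrix.of_apply]
      by_cases hp : p ∈ s
      · rw [dif_pos hp]
        by_cases hq : q ∈ s
        · rw [dif_pos hq]
          apply hb'lower
          exact (OrderIso.lt_iff_lt eIso.symm).2 (Subtype.mk_lt_mk.2 hpq)
        · rw [dif_neg hq]
      · rw [dif_neg hp, if_neg (ne_of_lt hpq)]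
    have hB00 : B 0 0 = 1 := by rw [hBid 0 0 h0s, if_pos rfl]
    have hBj0j0 : B j0 j0 = 1 := by rw [hBid j0 j0 hj0s, if_pos rfl]
    have hBdet : IsUnit B.det := by
      rw [hLowerB.det, prod_split s hcard h0j0 hsc (fun p => B p p), hB00, hBj0j0]
      have : ∀ i : Fin (n-1), B (e i) (e i) = b' i i := fun i => hBee i i
      rw [Finset.prod_congr rfl fun i _ => this i]
      rw [← hb'lower.det] at *
      simpa using hb'det
    -- entries of the twisted permutation matrix
    set NN : Matrix (Fin (n+1)) (Fin (n+1)) k := lowerNeg (w.permMatrix k) with hNN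
    set NN' : Matrix (Fin (n-1)) (Fin (n-1)) k := lowerNeg (w'.permMatrix k) with hNN'
    have hNNee : ∀ i j, NN (e i) (e j) = NN' i j := by
      intro i j
      rw [hNN, hNN', lowerNeg_perm_apply, lowerNeg_perm_apply, hwe]
      by_cases h : w' i = j
      · rw [if_pos (by rw [h]), if_pos h, if_congr (hesm.lt_iff_lt (a := j) (b := i)) rfl rfl]
      · rw [if_neg (fun hc => h (heinj hc)), if_neg h]
    have hNNrow0 : ∀ q, NN 0 q = if q = j0 then 1 else 0 := by
      intro q
      rw [hNN, lowerNeg_perm_apply, hw0]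
      by_cases h : q = j0
      · subst h
        rw [if_pos rfl, if_pos rfl, if_neg (Fin.not_lt_zero q)]
      · rw [if_neg (fun hc => h hc.symm), if_neg h]
    have hNNrowj0 : ∀ q, NN j0 q = if q = 0 then -1 else 0 := by
      intro q
      rw [hNN, lowerNeg_perm_apply, hwj0]
      by_cases h : q = 0
      · subst h
        rw [if_pos rfl, if_pos rfl, if_pos (Fin.pos_of_ne_zero hj0ne)]
      · rw [if_neg (fun hc => h hc.symm), if_neg h]
    have hNNes : ∀ (i : Fin (n-1)) (t : Fin (n+1)), t ∉ s → NN (e i) t = 0 := by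
      intro i t ht
      rw [hNN, lowerNeg_perm_apply, hwe]
      rw [if_neg (fun hc : e (w' i) = t => ht (hc ▸ hmem (w' i)))]
    have hnotmem : ∀ p : Fin (n+1), p ∉ s → p = 0 ∨ p = j0 := by
      intro p hp
      by_contra hcon
      push_neg at hcon
      exact hp (hmems p hcon.1 hcon.2)
    -- the key identity : B * NN * Bᵀ = N
    have hG : ∀ (p : Fin (n+1)) t, (B * NN) p t =
        if hp : p ∈ s then (∑ i, b' (eIso.symm ⟨p, hp⟩) i * NN (e i) t) else NN p t := by
      intro p t
      rw [Matrix.mul_apply]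
      by_cases hp : p ∈ s
      · rw [dif_pos hp, hsplit (fun r => B p r * NN r t),
          hBnotmem p 0 hp h0s, hBnotmem p j0 hp hj0s, zero_mul, zero_mul, add_zero, add_zero]
        refine Finset.sum_congr rfl fun i _ => ?_
        rw [hBes p hp i]
      · rw [dif_neg hp]
        rw [Finset.sum_congr rfl fun r _ => by rw [hBid p r hp]]
        simp [ite_mul]
    have hkey : B * NN * Bᵀ = N := by
      ext p q
      rw [Matrix.mul_apply]
      have hterm : ∀ t, (B * NN) p t * Bᵀ t q = (B * NN) p t * B q t := by
        intro t
        rw [Matrix.transpose_apply]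
      rw [Finset.sum_congr rfl fun t _ => hterm t]
      by_cases hq : q ∈ s
      · by_cases hp : p ∈ s
        · -- both inside : reduces to the small identity
          rw [hsplit (fun t => (B * NN) p t * B q t),
            hBnotmem q 0 hq h0s, hBnotmem q j0 hq hj0s, mul_zero, mul_zero, add_zero,
            add_zero]
          have hepp : e (eIso.symm ⟨p, hp⟩) = p := by
            rw [he]
            exact congrArg Subtype.val (eIso.apply_symm_apply ⟨p, hp⟩)
          have heqq : e (eIso.symm ⟨q, hq⟩) = q := by
            rw [he]
            exact congrArg Subtype.val (eIso.apply_symm_apply ⟨q, hq⟩)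
          have hrhs : N p q = ∑ i, (∑ j, b' (eIso.symm ⟨p, hp⟩) j * NN' j i)
              * b' (eIso.symm ⟨q, hq⟩) i := by
            have h1 : N p q = M' (eIso.symm ⟨p, hp⟩) (eIso.symm ⟨q, hq⟩) := by
              rw [hM', Matrix.submatrix_apply, hepp, heqq]
            rw [h1, hb'eq, Matrix.mul_apply]
            refine Finset.sum_congr rfl fun i _ => ?_
            rw [Matrix.transpose_apply, Matrix.mul_apply]
          rw [hrhs]
          refine Finset.sum_congr rfl fun i _ => ?_
          rw [hG, dif_pos hp, hBes q hq i]
          congr 1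
          refine Finset.sum_congr rfl fun j _ => ?_
          rw [hNNee]
        · -- p outside, q inside : both sides vanish
          rw [hsplit (fun t => (B * NN) p t * B q t),
            hBnotmem q 0 hq h0s, hBnotmem q j0 hq hj0s, mul_zero, mul_zero, add_zero,
            add_zero]
          have hz : ∀ i, (B * NN) p (e i) * B q (e i) = 0 := by
            intro i
            rw [hG, dif_neg hp]
            rcases hnotmem p hp with h | h
            · subst h
              rw [hNNrow0, if_neg (hnej0 i), zero_mul]
            · subst h
              rw [hNNrowj0, if_neg (hne0 i), zero_mul]
          rw [Finset.sum_congr rfl fun i _ => hz i, Finset.sum_const_zero]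
          rcases hnotmem p hp with h | h <;> subst h
          · rw [hNrow0, if_neg (fun hc : q = j0 => (hc ▸ hj0s) hq)]
          · rw [hNrowj0, if_neg (fun hc : q = 0 => (hc ▸ h0s) hq)]
      · -- q outside
        have hcollapse : ∑ t, (B * NN) p t * B q t = (B * NN) p q := by
          rw [Finset.sum_congr rfl fun t _ => by rw [hBid q t hq]]
          simp [mul_ite]
        rw [hcollapse, hG]
        by_cases hp : p ∈ s
        · rw [dif_pos hp]
          rw [Finset.sum_congr rfl fun i _ => by rw [hNNes i q hq, mul_zero],
            Finset.sum_const_zero]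
          rcases hnotmem q hq with h | h <;> subst h
          · rw [hNcol0, if_neg (fun hc : p = j0 => (hc ▸ hj0s) hp)]
          · rw [hNcolj0, if_neg (fun hc : p = 0 => (hc ▸ h0s) hp)]
        · rw [dif_neg hp]
          rcases hnotmem p hp with h | h <;> subst h <;>
            rcases hnotmem q hq with h2 | h2 <;> subst h2
          · rw [hNNrow0, hNcol0, if_neg h0j0, if_neg h0j0]
          · rw [hNNrow0, if_pos rfl, hNcolj0, if_pos rfl]
          · rw [hNNrowj0, if_pos rfl, hNcol0, if_pos rfl]
          · rw [hNNrowj0, hNcolj0, if_neg hj0ne, if_neg hj0ne]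
    -- assembly
    refine ⟨w, ⟨hwinv, hwfpf⟩, Li * B, ?_, hLowerLi.mul hLowerB, ?_⟩
    · rw [Matrix.det_mul]
      exact hLidet.mul hBdet
    · rw [hMeq, ← hkey]
      simp only [Matrix.transpose_mul, Matrix.mul_assoc]
      rfl

end Stmt9

/-- over an algebraically closed field of characteristic `≠ 2`, every
invertible skew-symmetric `2d × 2d` matrix `M` can be written as `M = b · [P_w]₋ · bᵀ`
with `b` invertible lower-triangular and `w ∈ S_{2d}` a fixed-point-free involution,
and the fixed-point-free involution `w` is unique. -/
theorem stmt9 (k : Type) [Field k] [IsAlgClosed k] (hchar : (2 : k) ≠ 0)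
    (d : ℕ) (hd : 1 ≤ d)
    (M : Matrix (Fin (2 * d)) (Fin (2 * d)) k)
    (hM : IsUnit M.det) (hMs : Mᵀ = -M) :
    ∃! w : Equiv.Perm (Fin (2 * d)), (w * w = 1 ∧ ∀ i, w i ≠ i) ∧
      ∃ b : Matrix (Fin (2 * d)) (Fin (2 * d)) k,
        IsUnit b.det ∧ (∀ i j : Fin (2 * d), i < j → b i j = 0) ∧
        M = b * lowerNeg (w.permMatrix k) * bᵀ := by
  obtain ⟨w, ⟨hwinv, hwfpf⟩, b, hbdet, hblower, hbeq⟩ :=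
    Stmt9.exists_decomp hchar (2 * d) M hMs hM
  refine ⟨w, ⟨⟨hwinv, hwfpf⟩, b, hbdet, hblower, hbeq⟩, ?_⟩
  rintro w2 ⟨⟨hw2inv, hw2fpf⟩, b2, hb2det, hb2lower, hb2eq⟩
  apply Stmt9.cnt_inj
  intro i j
  have h1 : (Stmt9.Z i j M).rank = Stmt9.cnt w2 i j := by
    rw [hb2eq, Stmt9.rank_Z_conj hb2lower hb2det, Stmt9.rank_Z_lowerNeg]
  have h2 : (Stmt9.Z i j M).rank = Stmt9.cnt w i j := by
    rw [hbeq, Stmt9.rank_Z_conj hblower hbdet, Stmt9.rank_Z_lowerNeg]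
  omega
end

section
/- Let n ≥ 1 and fix integers 0 = c₀ < c₁ < ⋯ < c_r = n; for i ∈ {1,…,n} let blk(i) denote the unique p with c_{p−1} < i ≤ c_p. Let σ ∈ S_n be a permutation satisfying: (a) whenever i < i′ and blk(i) = blk(i′), one has σ(i) < σ(i′); (b) whenever i < i′ and blk(σ(i)) = blk(σ(i′)), one has σ(i) < σ(i′); and (c) for all blocks p, q, the number of indices i with blk(i) = p and blk(σ(i)) = q equals the number of indices i with blk(i) = q and blk(σ(i)) = p. Then σ is an involution, i.e. σ = σ⁻¹ (equivalently, the permutation matrix of σ is symmetric). -/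
/-- For partition points `c : Fin (r+1) → ℕ` with `0 = c 0 < c 1 < ⋯ < c r = n`,
`blk c i` is the (1-based) index of the block containing the (0-based) position
`i ∈ Fin n`, computed as the number of partition points `c t ≤ i`. -/
def blk {n r : ℕ} (c : Fin (r + 1) → ℕ) (i : Fin n) : ℕ :=
  (Finset.univ.filter fun t : Fin (r + 1) => c t ≤ (i : ℕ)).card

open Finset

lemma blk_mono {n r : ℕ} (c : Fin (r + 1) → ℕ) : Monotone (fun i : Fin n => blk c i) := by
  intro i j hij
  apply Finset.card_le_card
  intro t ht
  simp only [Finset.mem_filter, Finset.mem_univ, true_and] at *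
  exact ht.trans hij

/-- A monotone function on `Fin n` into a linear order is determined by its fiber
cardinalities. -/
lemma mono_eq_of_fibers {n : ℕ} {α : Type} [LinearOrder α] [DecidableEq α]
    {f g : Fin n → α} (hf : Monotone f) (hg : Monotone g)
    (h : ∀ a, (Finset.univ.filter fun i => f i = a).card =
      (Finset.univ.filter fun i => g i = a).card) :
    f = g := by
  classical
  have key : ∀ (f : Fin n → α), Monotone f → ∀ (a : α) (i : Fin n),
      (f i ≤ a ↔ (i : ℕ) < (Finset.univ.filter fun i' => f i' ≤ a).card) := by
    intro f hf a i
    constructor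
    · intro hle
      have hsub : Finset.Iic i ⊆ Finset.univ.filter fun i' => f i' ≤ a := by
        intro i' hi'
        simp only [Finset.mem_Iic] at hi'
        simp only [Finset.mem_filter, Finset.mem_univ, true_and]
        exact le_trans (hf hi') hle
      have := Finset.card_le_card hsub
      rw [Fin.card_Iic] at this
      omega
    · intro hlt
      by_contra hgt
      push_neg at hgt
      have hsub : (Finset.univ.filter fun i' => f i' ≤ a) ⊆ Finset.Iio i := by
        intro i' hi'
        simp only [Finset.mem_filter, Finset.mem_univ, true_and] at hi'
        simp only [Finset.mem_Iio]
        by_contra hge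
        push_neg at hge
        exact absurd (le_trans (hf hge) hi') (not_le.mpr hgt)
      have := Finset.card_le_card hsub
      rw [Fin.card_Iio] at this
      omega
  have hcard : ∀ a, (Finset.univ.filter fun i => f i ≤ a).card =
      (Finset.univ.filter fun i => g i ≤ a).card := by
    intro a
    set T : Finset α := (Finset.univ.image f ∪ Finset.univ.image g).filter (· ≤ a) with hT
    have expand : ∀ (f' : Fin n → α),
        (∀ i : Fin n, f' i ∈ Finset.univ.image f ∪ Finset.univ.image g) →
        (Finset.univ.filter fun i => f' i ≤ a) =
          T.biUnion (fun b => Finset.univ.filter fun i => f' i = b) := by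
      intro f hmem
      ext i
      simp only [Finset.mem_filter, Finset.mem_univ, true_and, Finset.mem_biUnion, hT]
      constructor
      · intro hi
        exact ⟨f i, ⟨hmem i, hi⟩, rfl⟩
      · rintro ⟨b, ⟨_, hb⟩, rfl⟩
        exact hb
    have hdisj : ∀ (f' : Fin n → α), ∀ b ∈ T, ∀ b' ∈ T, b ≠ b' →
        Disjoint (Finset.univ.filter fun i => f' i = b)
          (Finset.univ.filter fun i => f' i = b') := by
      intro f b _ b' _ hbb'
      simp only [Finset.disjoint_left, Finset.mem_filter, Finset.mem_univ, true_and]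
      rintro i rfl h2
      exact hbb' h2
    rw [expand f (fun i => Finset.mem_union_left _ (Finset.mem_image_of_mem f (Finset.mem_univ i))),
      expand g (fun i => Finset.mem_union_right _ (Finset.mem_image_of_mem g (Finset.mem_univ i))),
      Finset.card_biUnion (hdisj f), Finset.card_biUnion (hdisj g)]
    exact Finset.sum_congr rfl fun b _ => h b
  funext i
  apply le_antisymm
  · rw [key f hf (g i) i, hcard (g i)]
    exact (key g hg (g i) i).mp le_rfl
  · rw [key g hg (f i) i, ← hcard (f i)]
    exact (key f hf (f i) i).mp le_rfl

/-- if the `1`s of the permutation matrix of `σ` proceed from northwest to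
southeast across each block row (a) and down each block column (b), and the number of
`1`s in block `(p,q)` equals the number of `1`s in block `(q,p)` for all `p, q` (c),
then `σ` is an involution. -/
theorem stmt11 (n r : ℕ) (hn : 1 ≤ n) (c : Fin (r + 1) → ℕ)
    (hc0 : c 0 = 0) (hcr : c (Fin.last r) = n) (hmono : StrictMono c)
    (σ : Equiv.Perm (Fin n))
    (ha : ∀ i i' : Fin n, i < i' → blk c i = blk c i' → σ i < σ i')
    (hb : ∀ i i' : Fin n, i < i' → blk c (σ i) = blk c (σ i') → σ i < σ i')
    (hc : ∀ p q : ℕ,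
      (Finset.univ.filter fun i : Fin n => blk c i = p ∧ blk c (σ i) = q).card =
      (Finset.univ.filter fun i : Fin n => blk c i = q ∧ blk c (σ i) = p).card) :
    σ * σ = 1 := by
  classical
  set τ : Equiv.Perm (Fin n) := σ⁻¹ with hτ
  have hστ : ∀ i, σ (τ i) = i := fun i => Equiv.apply_symm_apply σ i
  have hτσ : ∀ i, τ (σ i) = i := fun i => Equiv.symm_apply_apply σ i
  -- (a) for τ follows from (b) for σ
  have ha' : ∀ i i' : Fin n, i < i' → blk c i = blk c i' → τ i < τ i' := by
    intro i i' h hblk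
    rcases lt_trichotomy (τ i) (τ i') with h1 | h1 | h1
    · exact h1
    · exact absurd (by rw [← hστ i, h1, hστ]) h.ne
    · have := hb (τ i') (τ i) h1 (by rw [hστ, hστ]; exact hblk.symm)
      rw [hστ, hστ] at this
      exact absurd this (asymm h)
  -- fibers counts of (blk, blk ∘ σ) and (blk, blk ∘ τ) agree
  have hcount : ∀ p q : ℕ,
      (Finset.univ.filter fun i : Fin n => blk c i = p ∧ blk c (σ i) = q).card =
      (Finset.univ.filter fun i : Fin n => blk c i = p ∧ blk c (τ i) = q).card := by
    intro p q
    rw [← hc q p]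
    apply Finset.card_bij' (fun i _ => σ i) (fun j _ => τ j)
    · intro i hi
      simp only [Finset.mem_filter, Finset.mem_univ, true_and] at *
      exact ⟨hi.2, by rw [hτσ]; exact hi.1⟩
    · intro j hj
      simp only [Finset.mem_filter, Finset.mem_univ, true_and] at *
      exact ⟨hj.2, by rw [hστ]; exact hj.1⟩
    · intro i _; exact hτσ i
    · intro j _; exact hστ j
  -- Step A : blk (σ i) = blk (τ i) for all i
  have hA : ∀ i, blk c (σ i) = blk c (τ i) := by
    have key : (fun i => toLex (blk c i, blk c (σ i))) =
        (fun i => toLex (blk c i, blk c (τ i))) := by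
      have hm : ∀ (π : Equiv.Perm (Fin n)),
          (∀ i i' : Fin n, i < i' → blk c i = blk c i' → π i < π i') →
          Monotone (fun i => toLex (blk c i, blk c (π i))) := by
        intro π hπ i i' hii'
        rcases eq_or_lt_of_le hii' with rfl | hlt
        · exact le_rfl
        rw [Prod.Lex.le_iff]
        rcases eq_or_lt_of_le (blk_mono c hii') with heq | hlt2
        · exact Or.inr ⟨heq, blk_mono c (hπ i i' hlt heq).le⟩
        · exact Or.inl hlt2
      apply mono_eq_of_fibers (hm σ ha) (hm τ ha')
      intro a
      have hpred : ∀ (π : Equiv.Perm (Fin n)) (i : Fin n),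
          (toLex (blk c i, blk c (π i)) = a) ↔
          (blk c i = (ofLex a).1 ∧ blk c (π i) = (ofLex a).2) := by
        intro π i
        constructor
        · intro h; rw [← h]; exact ⟨rfl, rfl⟩
        · rintro ⟨h1, h2⟩
          rw [show a = toLex (ofLex a) from rfl, toLex_inj]
          exact Prod.ext h1 h2
      simp only [hpred]
      exact hcount (ofLex a).1 (ofLex a).2
    intro i
    have := congrFun key i
    rw [toLex_inj] at this
    exact congrArg Prod.snd this
  -- Step C : fibers of the refined statistics agree
  have hfib : ∀ (p q jn : ℕ),
      (Finset.univ.filter fun i : Fin n =>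
        blk c i = p ∧ blk c (σ i) = q ∧ (σ i : ℕ) = jn).card =
      (Finset.univ.filter fun i : Fin n =>
        blk c i = p ∧ blk c (τ i) = q ∧ (τ i : ℕ) = jn).card := by
    intro p q jn
    apply Finset.card_bij' (fun i _ => σ (σ i)) (fun i' _ => τ (τ i'))
    · intro i hi
      simp only [Finset.mem_filter, Finset.mem_univ, true_and] at *
      obtain ⟨h1, h2, h3⟩ := hi
      refine ⟨?_, by rw [hτσ]; exact h2, by rw [hτσ]; exact h3⟩
      rw [hA (σ i), hτσ i]
      exact h1
    · intro i' hi'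
      simp only [Finset.mem_filter, Finset.mem_univ, true_and] at *
      obtain ⟨h1, h2, h3⟩ := hi'
      refine ⟨?_, by rw [hστ]; exact h2, by rw [hστ]; exact h3⟩
      rw [← hA (τ i'), hστ i']
      exact h1
    · intro i _; rw [hτσ, hτσ]
    · intro i' _; rw [hστ, hστ]
  -- Step D : full equality σ = τ
  have key : (fun i => toLex (blk c i, toLex (blk c (σ i), (σ i : ℕ)))) =
      (fun i => toLex (blk c i, toLex (blk c (τ i), (τ i : ℕ)))) := by
    have hm : ∀ (π : Equiv.Perm (Fin n)),
        (∀ i i' : Fin n, i < i' → blk c i = blk c i' → π i < π i') →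
        Monotone (fun i => toLex (blk c i, toLex (blk c (π i), (π i : ℕ)))) := by
      intro π hπ i i' hii'
      rcases eq_or_lt_of_le hii' with rfl | hlt
      · exact le_rfl
      rw [Prod.Lex.le_iff]
      rcases eq_or_lt_of_le (blk_mono c hii') with heq | hlt2
      · refine Or.inr ⟨heq, ?_⟩
        have hπlt := hπ i i' hlt heq
        rw [Prod.Lex.le_iff]
        rcases eq_or_lt_of_le (blk_mono c hπlt.le) with heq2 | hlt3
        · exact Or.inr ⟨heq2, by exact_mod_cast hπlt.le⟩
        · exact Or.inl hlt3
      · exact Or.inl hlt2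
    apply mono_eq_of_fibers (hm σ ha) (hm τ ha')
    intro a
    have hpred : ∀ (π : Equiv.Perm (Fin n)) (i : Fin n),
        (toLex (blk c i, toLex (blk c (π i), (π i : ℕ))) = a) ↔
        (blk c i = (ofLex a).1 ∧ blk c (π i) = (ofLex (ofLex a).2).1 ∧
          (π i : ℕ) = (ofLex (ofLex a).2).2) := by
      intro π i
      constructor
      · intro h; rw [← h]; exact ⟨rfl, rfl, rfl⟩
      · rintro ⟨h1, h2, h3⟩
        rw [show a = toLex ((ofLex a).1,
          toLex ((ofLex (ofLex a).2).1, (ofLex (ofLex a).2).2)) from rfl, toLex_inj]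
        exact Prod.ext h1 (by rw [show toLex ((ofLex (ofLex a).2).1, (ofLex (ofLex a).2).2)
          = (ofLex a).2 from rfl, show ((ofLex a).2 : Lex (ℕ × ℕ))
          = toLex (ofLex (ofLex a).2) from rfl, toLex_inj]; exact Prod.ext h2 h3)
    simp only [hpred]
    exact hfib _ _ _
  have hστeq : ∀ i, σ i = τ i := by
    intro i
    have h0 := congrFun key i
    rw [toLex_inj] at h0
    have h1 := congrArg Prod.snd h0
    rw [toLex_inj] at h1
    exact Fin.ext (congrArg Prod.snd h1)
  ext i
  simp only [Equiv.Perm.mul_apply, Equiv.Perm.one_apply]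
  rw [hστeq (σ i)]
  exact congrArg Fin.val (hτσ i)
end

section
/- Let k be a field of characteristic not equal to 2 and let d ≥ 1. Let v ∈ S_{2d} be an involution whose set of fixed points is exactly {a₁, a₁+1, a₂, a₂+1, …, a_m, a_m+1} for integers a₁, …, a_m with a_t + 1 < a_{t+1} for all 1 ≤ t ≤ m−1 (the case m = 0, i.e. v fixed-point-free, is allowed). Let v′ be the fixed-point-free involution obtained from v by composing with the product of the transpositions (a_t, a_t+1), 1 ≤ t ≤ m; so v′ agrees with v off the fixed points and swaps a_t with a_t + 1. Then for every skew-symmetric 2d×2d matrix M over k, the following are equivalent: (1) r_{i,j}(M) ≤ r_{i,j}(P_v) for all 1 ≤ i, j ≤ 2d; (2) r_{i,j}(M) ≤ r_{i,j}(P_{v′}) for all 1 ≤ i, j ≤ 2d. -/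
open Matrix
open Finset Submodule

-- even card of a finset invariant under a fixed-point-free involution
lemma even_card_invol {α : Type*} [DecidableEq α] (f : α → α) (hf : ∀ x, f (f x) = x) :
    ∀ (n : ℕ) (s : Finset α), s.card ≤ n → (∀ x ∈ s, f x ∈ s) → (∀ x ∈ s, f x ≠ x) →
      Even s.card := by
  intro n
  induction n with
  | zero => intro s hs _ _; simp [Nat.le_zero.mp hs]
  | succ n ih =>
    intro s hs h1 h2
    rcases s.eq_empty_or_nonempty with rfl | ⟨x, hx⟩
    · simp
    · have hfx : f x ∈ s := h1 x hx
      have hne : f x ≠ x := h2 x hx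
      set s' := (s.erase x).erase (f x) with hs'
      have hxs' : x ∉ s' := fun h => (Finset.mem_erase.mp (Finset.mem_erase.mp h).2).1 rfl
      have hcard : s.card = s'.card + 2 := by
        have h1' : (s.erase x).card = s.card - 1 := Finset.card_erase_of_mem hx
        have h2' : s'.card = (s.erase x).card - 1 :=
          Finset.card_erase_of_mem (Finset.mem_erase.mpr ⟨hne, hfx⟩)
        have : 1 ≤ s.card := Finset.card_pos.mpr ⟨x, hx⟩
        have : 2 ≤ s.card := by
          have := Finset.one_lt_card.mpr ⟨x, hx, f x, hfx, fun h => hne h.symm⟩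
          omega
        omega
      have hstep : Even s'.card := by
        refine ih s' (by omega) ?_ ?_
        · intro y hy
          obtain ⟨hy1, hy2, hy3⟩ : y ≠ f x ∧ y ≠ x ∧ y ∈ s := by
            simp only [hs', Finset.mem_erase] at hy; exact ⟨hy.1, hy.2.1, hy.2.2⟩
          refine Finset.mem_erase.mpr ⟨?_, Finset.mem_erase.mpr ⟨?_, h1 y hy3⟩⟩
          · intro h; exact hy2 (by rw [← hf y, h, hf])
          · intro h; exact hy1 (by rw [← hf y, h])
        · intro y hy
          obtain ⟨-, -, hy3⟩ : y ≠ f x ∧ y ≠ x ∧ y ∈ s := by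
            simp only [hs', Finset.mem_erase] at hy; exact ⟨hy.1, hy.2.1, hy.2.2⟩
          exact h2 y hy3
      rw [hcard]; exact hstep.add (by norm_num)

lemma rank_eq_finrank_span_row' {m n R : Type*} [Field R] [Finite m] [Fintype n]
    (A : Matrix m n R) : A.rank = Module.finrank R (span R (Set.range A)) :=
  A.rank_eq_finrank_span_row

lemma even_rank_skew {k : Type} [Field k] (h2 : (2 : k) ≠ 0) {n : ℕ}
    (M : Matrix (Fin n) (Fin n) k) (hM : Mᵀ = -M) : Even M.rank := by
  classical
  set r := M.rank with hr
  obtain ⟨b, hbsub, hbspan, hbli⟩ := exists_linearIndependent k (Set.range M)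
  have hfin : b.Finite := hbli.setFinite
  haveI : Fintype b := hfin.fintype
  have h1 : Module.finrank k (span k b) = b.toFinset.card := finrank_span_set_eq_card hbli
  have hcardb : Fintype.card b = r := by
    rw [← Set.toFinset_card, ← h1, hbspan, hr, rank_eq_finrank_span_row' M]
  have hch : ∀ x : b, ∃ i : Fin n, M i = (x : Fin n → k) := fun x => hbsub x.2
  choose ch hch' using hch
  have hMch : (M ∘ ch) = fun x : b => (x : Fin n → k) := funext fun x => hch' x
  set B := M.submatrix ch ch with hB
  have hBskew : Bᵀ = -B := by
    ext p q
    have := congrFun (congrFun hM (ch p)) (ch q)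
    simpa [hB] using this
  have hrange1 : Set.range (M.submatrix ch id) = b := by
    have h : (M.submatrix ch id) = M ∘ ch := rfl
    rw [show Set.range (M.submatrix ch id) = Set.range (fun x : b => (x : Fin n → k)) from
      congrArg Set.range (h.trans hMch), Subtype.range_coe]
  have hrank1 : (M.submatrix ch id).rank = r := by
    rw [rank_eq_finrank_span_row', hr, rank_eq_finrank_span_row', hrange1, hbspan]
  have hrank2 : (M.submatrix id ch).rank = r := by
    have hh1 : (M.submatrix id ch)ᵀ = -(M.submatrix ch id) := by
      ext p q
      have := congrFun (congrFun hM (ch p)) q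
      simpa using this
    have hh2 : (M.submatrix id ch).rank = (-(M.submatrix ch id)).rank := by
      rw [← hh1, Matrix.rank_transpose]
    have hh3 : -(M.submatrix ch id) = (M.submatrix ch id) * (-1 : Matrix (Fin n) (Fin n) k) := by
      rw [Matrix.mul_neg, Matrix.mul_one]
    have hh4 : IsUnit ((-1 : Matrix (Fin n) (Fin n) k)).det := by
      rw [show (-1 : Matrix (Fin n) (Fin n) k) = -(1 : Matrix (Fin n) (Fin n) k) from rfl, Matrix.det_neg]
      simp
    rw [hh2, hh3, Matrix.rank_mul_eq_left_of_isUnit_det _ _ hh4, hrank1]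
  have hspanBB : span k (Set.range (M.submatrix id ch)) = span k (Set.range B) := by
    have e1 : Set.range (M.submatrix id ch) = (LinearMap.funLeft k k ch) '' (Set.range M) := by
      ext x
      constructor
      · rintro ⟨p, rfl⟩; exact ⟨M p, ⟨p, rfl⟩, rfl⟩
      · rintro ⟨y, ⟨p, rfl⟩, rfl⟩; exact ⟨p, rfl⟩
    have e2 : Set.range B = (LinearMap.funLeft k k ch) '' (Set.range (M ∘ ch)) := by
      ext x
      constructor
      · rintro ⟨p, rfl⟩; exact ⟨M (ch p), ⟨p, rfl⟩, rfl⟩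
      · rintro ⟨y, ⟨p, rfl⟩, rfl⟩; exact ⟨p, rfl⟩
    rw [e1, e2, ← Submodule.map_span, ← Submodule.map_span]
    congr 1
    rw [show Set.range (M ∘ ch) = b by rw [hMch, Subtype.range_coe], hbspan]
  have hrankB : B.rank = r := by
    rw [rank_eq_finrank_span_row', ← hspanBB, ← rank_eq_finrank_span_row', hrank2]
  by_contra hodd
  have hodd' : Odd r := Nat.not_even_iff_odd.mp hodd
  -- det B = 0 since B is odd skew
  have h3 : B.det = -B.det := by
    conv_lhs => rw [← Matrix.det_transpose B, hBskew, Matrix.det_neg, hcardb,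
      Odd.neg_one_pow hodd', neg_one_mul]
  have h4 : (2 : k) * B.det = 0 := by linear_combination h3
  have hdet0 : B.det = 0 := by
    rcases mul_eq_zero.mp h4 with h | h
    · exact absurd h h2
    · exact h
  -- but rank B = card b implies B is invertible
  have hunit : IsUnit B := by
    rw [← Matrix.mulVec_surjective_iff_isUnit]
    have htop : LinearMap.range B.mulVecLin = ⊤ := by
      apply Submodule.eq_top_of_finrank_eq
      rw [← Matrix.rank, hrankB, ← hcardb, Module.finrank_pi]
    intro y
    have : y ∈ LinearMap.range B.mulVecLin := htop ▸ Submodule.mem_top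
    obtain ⟨x, hx⟩ := this
    exact ⟨x, hx⟩
  have := hunit.map Matrix.detMonoidHom
  rw [Matrix.coe_detMonoidHom, hdet0] at this
  exact not_isUnit_zero this

lemma rank_perm_nw {k : Type} [Field k] {n : ℕ} (w : Equiv.Perm (Fin n))
    (i j : ℕ) (hi : i ≤ n) (hj : j ≤ n) :
    ((w.permMatrix k).submatrix (Fin.castLE hi) (Fin.castLE hj)).rank
      = (Finset.univ.filter (fun p : Fin n => (p : ℕ) < i ∧ (w p : ℕ) < j)).card := by
  classical
  set N := (w.permMatrix k).submatrix (Fin.castLE hi) (Fin.castLE hj) with hN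
  have hNapp : ∀ (p : Fin i) (q : Fin j),
      N p q = if (w (Fin.castLE hi p) : Fin n) = Fin.castLE hj q then 1 else 0 := by
    intro p q
    simp [hN, Matrix.submatrix_apply, Equiv.Perm.permMatrix, PEquiv.toMatrix_apply,
      Equiv.toPEquiv_apply]
  -- the subtype of good rows
  set σ := {p : Fin i // (w (Fin.castLE hi p) : ℕ) < j} with hσ
  have f : σ → Fin j := fun p => ⟨(w (Fin.castLE hi p.1) : ℕ), p.2⟩
  set f : σ → Fin j := fun p => ⟨(w (Fin.castLE hi p.1) : ℕ), p.2⟩ with hf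
  have hfinj : Function.Injective f := by
    intro p q hpq
    have h1 : (f p : ℕ) = (f q : ℕ) := congrArg Fin.val hpq
    have h2 : w (Fin.castLE hi p.1) = w (Fin.castLE hi q.1) := Fin.ext h1
    exact Subtype.ext (Fin.castLE_injective hi (w.injective h2))
  set u : σ → (Fin j → k) := fun p => Pi.single (f p) 1 with hu
  have hrowgood : ∀ p : σ, N p.1 = u p := by
    intro p
    funext q
    rw [hNapp]
    have hup : u p q = (Pi.single (f p) (1 : k) : Fin j → k) q := by rw [hu]
    rw [hup]
    by_cases h : f p = q
    · rw [← h, Pi.single_eq_same, if_pos (by apply Fin.ext; rfl)]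
    · rw [Pi.single_eq_of_ne (Ne.symm h), if_neg]
      intro hc
      apply h
      apply Fin.ext
      show ((w (Fin.castLE hi p.1)) : ℕ) = ((Fin.castLE hj q) : ℕ)
      exact congrArg Fin.val hc
  have hrowbad : ∀ p : Fin i, ¬ ((w (Fin.castLE hi p) : ℕ) < j) → N p = 0 := by
    intro p hp
    funext q
    rw [hNapp, if_neg]
    · rfl
    · intro hc
      apply hp
      rw [hc]
      exact q.2
  have hspan : span k (Set.range N) = span k (Set.range u) := by
    apply le_antisymm
    · rw [Submodule.span_le]
      rintro x ⟨p, rfl⟩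
      by_cases h : (w (Fin.castLE hi p) : ℕ) < j
      · rw [show N p = u ⟨p, h⟩ from hrowgood ⟨p, h⟩]
        exact Submodule.subset_span ⟨⟨p, h⟩, rfl⟩
      · rw [hrowbad p h]
        exact Submodule.zero_mem _
    · rw [Submodule.span_le]
      rintro x ⟨p, rfl⟩
      rw [← hrowgood p]
      exact Submodule.subset_span ⟨p.1, rfl⟩
  have hli : LinearIndependent k u := by
    have := (Pi.basisFun k (Fin j)).linearIndependent
    have h2 := this.comp f hfinj
    convert h2 using 1
    funext p
    simp [hu, Pi.basisFun_apply]
  have hrank : N.rank = Fintype.card σ := by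
    rw [rank_eq_finrank_span_row', hspan, finrank_span_eq_card hli]
  rw [hrank]
  -- now count
  have : Fintype.card σ = (Finset.univ.filter
      (fun p : Fin i => (w (Fin.castLE hi p) : ℕ) < j)).card := Fintype.card_subtype _
  rw [this]
  apply Finset.card_bij (fun (p : Fin i) _ => Fin.castLE hi p)
  · intro p hp
    simp only [Finset.mem_filter, Finset.mem_univ, true_and] at hp ⊢
    exact ⟨p.2, hp⟩
  · intro p hp q hq h
    exact Fin.castLE_injective hi h
  · intro q hq
    simp only [Finset.mem_filter, Finset.mem_univ, true_and] at hq
    refine ⟨⟨(q : ℕ), hq.1⟩, ?_, ?_⟩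
    · simp only [Finset.mem_filter, Finset.mem_univ, true_and]
      rw [show Fin.castLE hi ⟨(q : ℕ), hq.1⟩ = q from Fin.ext rfl]
      exact hq.2
    · apply Fin.ext; rfl

lemma count_split {n m : ℕ} (v v' : Equiv.Perm (Fin n))
    (a : Fin m → Fin n) (ha : ∀ t, (a t : ℕ) + 1 < n)
    (hgap : ∀ t t' : Fin m, t < t' → (a t : ℕ) + 1 < (a t' : ℕ))
    (hfix : ∀ i : Fin n, v i = i ↔ ∃ t, i = a t ∨ (i : ℕ) = (a t : ℕ) + 1)
    (hv'₁ : ∀ i : Fin n, v i ≠ i → v' i = v i)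
    (hv'₂ : ∀ (t : Fin m) (i : Fin n), (i : ℕ) = (a t : ℕ) + 1 → v' (a t) = i ∧ v' i = a t)
    (i j : ℕ) :
    (Finset.univ.filter fun p : Fin n => (p : ℕ) < i ∧ (v p : ℕ) < j).card
      = (Finset.univ.filter fun p : Fin n => (p : ℕ) < i ∧ (v' p : ℕ) < j).card
        + (Finset.univ.filter fun t : Fin m => (a t : ℕ) + 1 = i ∧ (a t : ℕ) + 1 = j).card := by
  classical
  set a1 : Fin m → Fin n := fun t => ⟨(a t : ℕ) + 1, ha t⟩ with ha1
  have hainj : Function.Injective a := by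
    intro s t hst
    by_contra hne
    rcases lt_trichotomy s t with h | h | h
    · have := hgap s t h; rw [hst] at this; omega
    · exact hne h
    · have := hgap t s h; rw [hst] at this; omega
  have ha1inj : Function.Injective a1 := by
    intro s t hst
    apply hainj
    apply Fin.ext
    have := congrArg Fin.val hst
    simpa [ha1] using this
  set F : Finset (Fin n) := Finset.image a Finset.univ ∪ Finset.image a1 Finset.univ with hF
  have hdisj : Disjoint (Finset.image a Finset.univ) (Finset.image a1 Finset.univ) := by
    rw [Finset.disjoint_left]
    rintro x hx hx'
    obtain ⟨s, -, rfl⟩ := Finset.mem_image.mp hx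
    obtain ⟨t, -, ht⟩ := Finset.mem_image.mp hx'
    have hval : (a t : ℕ) + 1 = (a s : ℕ) := congrArg Fin.val ht
    rcases lt_trichotomy s t with h | h | h
    · have := hgap s t h; omega
    · subst h; omega
    · have := hgap t s h; omega
  have hmemF : ∀ p : Fin n, p ∈ F ↔ v p = p := by
    intro p
    rw [hfix]
    simp only [hF, Finset.mem_union, Finset.mem_image, Finset.mem_univ, true_and]
    constructor
    · rintro (⟨t, rfl⟩ | ⟨t, rfl⟩)
      · exact ⟨t, Or.inl rfl⟩
      · exact ⟨t, Or.inr rfl⟩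
    · rintro ⟨t, rfl | hpt⟩
      · exact Or.inl ⟨t, rfl⟩
      · exact Or.inr ⟨t, Fin.ext hpt.symm⟩
  -- values of v, v' on the special points
  have hva : ∀ t, v (a t) = a t := fun t => (hfix (a t)).mpr ⟨t, Or.inl rfl⟩
  have hva1 : ∀ t, v (a1 t) = a1 t := fun t => (hfix (a1 t)).mpr ⟨t, Or.inr rfl⟩
  have hv'a : ∀ t, v' (a t) = a1 t := fun t => (hv'₂ t (a1 t) rfl).1
  have hv'a1 : ∀ t, v' (a1 t) = a t := fun t => (hv'₂ t (a1 t) rfl).2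
  -- write cards as sums
  have hcard : ∀ w : Equiv.Perm (Fin n),
      (Finset.univ.filter fun p : Fin n => (p : ℕ) < i ∧ (w p : ℕ) < j).card
        = (∑ t : Fin m, ((if ((a t : ℕ) < i ∧ (w (a t) : ℕ) < j) then 1 else 0)
            + (if ((a t : ℕ) + 1 < i ∧ (w (a1 t) : ℕ) < j) then 1 else 0)))
          + ∑ p ∈ Fᶜ, (if ((p : ℕ) < i ∧ (w p : ℕ) < j) then 1 else 0) := by
    intro w
    rw [Finset.card_filter, ← Finset.sum_add_sum_compl F]
    congr 1
    rw [hF, Finset.sum_union hdisj, Finset.sum_image (fun s _ t _ h => hainj h),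
      Finset.sum_image (fun s _ t _ h => ha1inj h), ← Finset.sum_add_distrib]
  rw [hcard v, hcard v', Finset.card_filter]
  have hrest : ∀ p ∈ Fᶜ, (if ((p : ℕ) < i ∧ (v p : ℕ) < j) then (1:ℕ) else 0)
      = (if ((p : ℕ) < i ∧ (v' p : ℕ) < j) then 1 else 0) := by
    intro p hp
    have : v p ≠ p := fun h => (Finset.mem_compl.mp hp) ((hmemF p).mpr h)
    rw [hv'₁ p this]
  rw [Finset.sum_congr rfl hrest]
  rw [add_right_comm, ← Finset.sum_add_distrib]
  congr 1
  apply Finset.sum_congr rfl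
  intro t _
  rw [hva, hva1, hv'a, hv'a1]
  have h1 : ((a1 t : Fin n) : ℕ) = (a t : ℕ) + 1 := rfl
  rw [h1]
  split_ifs <;> omega



/-- let `v ∈ S_{2d}` be an involution whose fixed-point set is exactly
`{a₁, a₁+1, …, a_m, a_m+1}` (0-based positions here), with `a_t + 1 < a_{t'}` for
`t < t'`, and let `v'` be the fixed-point-free involution agreeing with `v` off the
fixed points and swapping each `a_t` with `a_t + 1`.  Then for any skew-symmetric `M`,
the northwest rank conditions `r_{i,j}(M) ≤ r_{i,j}(P_v)` (all `1 ≤ i, j ≤ 2d`) hold if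
and only if the conditions `r_{i,j}(M) ≤ r_{i,j}(P_{v'})` hold. -/
theorem stmt13 (k : Type) [Field k] (hchar : (2 : k) ≠ 0)
    (d m : ℕ) (hd : 1 ≤ d)
    (v v' : Equiv.Perm (Fin (2 * d))) (hv : v * v = 1)
    (a : Fin m → Fin (2 * d)) (ha : ∀ t, (a t : ℕ) + 1 < 2 * d)
    (hgap : ∀ t t' : Fin m, t < t' → (a t : ℕ) + 1 < (a t' : ℕ))
    (hfix : ∀ i : Fin (2 * d), v i = i ↔ ∃ t, i = a t ∨ (i : ℕ) = (a t : ℕ) + 1)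
    (hv'₁ : ∀ i : Fin (2 * d), v i ≠ i → v' i = v i)
    (hv'₂ : ∀ (t : Fin m) (i : Fin (2 * d)), (i : ℕ) = (a t : ℕ) + 1 →
      v' (a t) = i ∧ v' i = a t)
    (M : Matrix (Fin (2 * d)) (Fin (2 * d)) k) (hM : Mᵀ = -M) :
    (∀ (i j : ℕ) (hi : i ≤ 2 * d) (hj : j ≤ 2 * d), 1 ≤ i → 1 ≤ j →
        nwRank M i j hi hj ≤ nwRank (v.permMatrix k) i j hi hj) ↔
    (∀ (i j : ℕ) (hi : i ≤ 2 * d) (hj : j ≤ 2 * d), 1 ≤ i → 1 ≤ j →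
        nwRank M i j hi hj ≤ nwRank (v'.permMatrix k) i j hi hj) := by
  classical
  have hcnt := count_split v v' a ha hgap hfix hv'₁ hv'₂
  have hainj : Function.Injective a := by
    intro s t hst
    by_contra hne
    rcases lt_trichotomy s t with h | h | h
    · have := hgap s t h; rw [hst] at this; omega
    · exact hne h
    · have := hgap t s h; rw [hst] at this; omega
  have hvv : ∀ p, v (v p) = p := by
    intro p
    rw [← Equiv.Perm.mul_apply, hv, Equiv.Perm.one_apply]
  have hv'inv : ∀ p, v' (v' p) = p := by
    intro p
    by_cases hp : v p = p
    · obtain ⟨t, hpt⟩ := (hfix p).mp hp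
      have h2 := hv'₂ t ⟨(a t : ℕ) + 1, ha t⟩ rfl
      rcases hpt with rfl | hval
      · rw [h2.1, h2.2]
      · rw [show p = ⟨(a t : ℕ) + 1, ha t⟩ from Fin.ext hval, h2.2, h2.1]
    · have h1 : v' p = v p := hv'₁ p hp
      have h3 : v (v p) ≠ v p := by rw [hvv p]; exact fun h => hp h.symm
      rw [h1, hv'₁ (v p) h3, hvv p]
  have hv'ne : ∀ p, v' p ≠ p := by
    intro p
    by_cases hp : v p = p
    · obtain ⟨t, hpt⟩ := (hfix p).mp hp
      have h2 := hv'₂ t ⟨(a t : ℕ) + 1, ha t⟩ rfl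
      rcases hpt with rfl | hval
      · rw [h2.1]
        intro hc
        have := congrArg Fin.val hc
        simp at this
      · rw [show p = ⟨(a t : ℕ) + 1, ha t⟩ from Fin.ext hval, h2.2]
        intro hc
        have := congrArg Fin.val hc
        simp at this
    · rw [hv'₁ p hp]; exact hp
  constructor
  · intro H i j hi hj h1i h1j
    have hMle := H i j hi hj h1i h1j
    simp only [nwRank] at hMle ⊢
    rw [rank_perm_nw] at hMle
    rw [rank_perm_nw]
    have hiden := hcnt i j
    by_cases hE : (Finset.univ.filter
        fun t : Fin m => (a t : ℕ) + 1 = i ∧ (a t : ℕ) + 1 = j).card = 0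
    · omega
    · obtain ⟨t, ht⟩ := Finset.card_pos.mp (Nat.pos_of_ne_zero hE)
      rw [Finset.mem_filter] at ht
      have hij : i = j := by omega
      subst hij
      have hE1 : (Finset.univ.filter
          fun t : Fin m => (a t : ℕ) + 1 = i ∧ (a t : ℕ) + 1 = i).card ≤ 1 := by
        apply Finset.card_le_one.mpr
        intro s hs t' ht'
        rw [Finset.mem_filter] at hs ht'
        exact hainj (Fin.ext (by omega))
      have heM : Even ((M.submatrix (Fin.castLE hi) (Fin.castLE hj)).rank) := by
        apply even_rank_skew hchar
        ext p q
        have h := congrFun (congrFun hM (Fin.castLE hj p)) (Fin.castLE hi q)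
        simpa using h
      have heC : Even ((Finset.univ.filter
          fun p : Fin (2 * d) => (p : ℕ) < i ∧ (v' p : ℕ) < i).card) := by
        apply even_card_invol (⇑v') hv'inv _ _ le_rfl
        · intro x hx
          rw [Finset.mem_filter] at hx ⊢
          refine ⟨Finset.mem_univ _, hx.2.2, ?_⟩
          rw [hv'inv x]
          exact hx.2.1
        · intro x _
          exact hv'ne x
      obtain ⟨x, hx⟩ := heM
      obtain ⟨y, hy⟩ := heC
      omega
  · intro H i j hi hj h1i h1j
    have hMle := H i j hi hj h1i h1j
    simp only [nwRank] at hMle ⊢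
    rw [rank_perm_nw] at hMle
    rw [rank_perm_nw]
    have hiden := hcnt i j
    omega
end
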